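/- arXiv:2001.06367 — 6 statements merged into one kernel-verified Lean document; each statement's English description precedes it below -/
import Mathlib

section
/- For every positive integer k, a Young diagram Y can be covered by a set C of generalized rectangles such that each row and each column of Y is used by at most k rectangles of C if and only if Y has strictly fewer than binomial(2k, k) steps. -/
/-- `Y` is a Young diagram with `r` rows and `c` columns:
`Y ⊆ [r] × [c]` (with `[x] = {1,…,x}`) and `Y` is closed under decreasing
a positive coordinate. -/
def IsYoungDiagram (r c : ℕ) (Y : Finset (ℕ × ℕ)) : Prop :=
  Y ⊆ Finset.Icc 1 r ×ˢ Finset.Icc 1 c ∧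
    ∀ p ∈ Y, (2 ≤ p.1 → (p.1 - 1, p.2) ∈ Y) ∧ (2 ≤ p.2 → (p.1, p.2 - 1) ∈ Y)

/-- The steps of a Young diagram `Y`: cells `(s,t) ∈ Y` with
`(s+1,t) ∉ Y` and `(s,t+1) ∉ Y`. -/
def steps (Y : Finset (ℕ × ℕ)) : Finset (ℕ × ℕ) :=
  Y.filter fun p => (p.1 + 1, p.2) ∉ Y ∧ (p.1, p.2 + 1) ∉ Y

/-- `R` is a generalized rectangle in `Y`: `R = S × T` and `R ⊆ Y`. -/
def IsGenRect (Y R : Finset (ℕ × ℕ)) : Prop :=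
  R ⊆ Y ∧ ∃ S T : Finset ℕ, R = S ×ˢ T

/-- `R` is an actual rectangle in `Y`: a generalized rectangle `S × T`
where `S` and `T` are sets of consecutive integers. -/
def IsActualRect (Y R : Finset (ℕ × ℕ)) : Prop :=
  R ⊆ Y ∧ ∃ a b a' b' : ℕ, R = Finset.Icc a b ×ˢ Finset.Icc a' b'

/-- `C` is a cover of `Y` by generalized rectangles. -/
def IsCover (Y : Finset (ℕ × ℕ)) (C : Finset (Finset (ℕ × ℕ))) : Prop :=
  (∀ R ∈ C, IsGenRect Y R) ∧ Y = C.sup id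

/-- A cover is `(i,j)`-local if every row is used by at most `i` of its
rectangles and every column is used by at most `j` of its rectangles. -/
def IsLocalCover (C : Finset (Finset (ℕ × ℕ))) (i j : ℕ) : Prop :=
  (∀ s : ℕ, (C.filter fun R => ∃ p ∈ R, p.1 = s).card ≤ i) ∧
  (∀ t : ℕ, (C.filter fun R => ∃ p ∈ R, p.2 = t).card ≤ j)

/-- A partition of `Y`: a cover by pairwise disjoint rectangles. -/
def IsPartition (Y : Finset (ℕ × ℕ)) (C : Finset (Finset (ℕ × ℕ))) : Prop :=
  IsCover Y C ∧ (C : Set (Finset (ℕ × ℕ))).Pairwise fun R R' => Disjoint R R'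



set_option linter.unreachableTactic false
set_option linter.unnecessarySeqFocus false
set_option linter.unusedTactic false
-- ==== auxiliary machinery ====

open Finset

lemma rank_trick {m : ℕ} {N : Type*} [Fintype N]
    (M : Fin m → Fin m → ℚ) (Z : Fin m → N → ℚ) (Cm : N → Fin m → ℚ)
    (hfac : ∀ x y, M x y = ∑ s : N, Z x s * Cm s y)
    (htri : ∀ x y, x < y → M x y = 0)
    (hdiag : ∀ x, M x x ≠ 0) : m ≤ Fintype.card N := by
  have hli : LinearIndependent ℚ Z := by
    rw [Fintype.linearIndependent_iff]
    intro g hg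
    have key : ∀ y : Fin m, ∑ x : Fin m, g x * M x y = 0 := by
      intro y
      have h1 : ∑ x : Fin m, g x * M x y
          = ∑ s : N, (∑ x : Fin m, g x * Z x s) * Cm s y := by
        simp_rw [hfac, Finset.mul_sum, Finset.sum_mul]
        rw [Finset.sum_comm]
        ring_nf
      have hz : ∀ s : N, (∑ x : Fin m, g x * Z x s) = 0 := by
        intro s
        have := congrFun hg s
        simpa [Finset.sum_apply] using this
      rw [h1]
      simp [hz]
    have main : ∀ d : ℕ, ∀ i : Fin m, m - i.val ≤ d → g i = 0 := by
      intro d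
      induction d with
      | zero => intro i hi; omega
      | succ d ih =>
        intro i hi
        have hsum := key i
        have hsingle : ∑ x : Fin m, g x * M x i = g i * M i i := by
          apply Finset.sum_eq_single i
          · intro b _ hb
            rcases lt_or_gt_of_ne (fun h => hb (by exact h)) with hlt | hgt
            · rw [htri b i hlt, mul_zero]
            · have : g b = 0 := ih b (by have := hgt; have h2 : i.val < b.val := this; omega)
              rw [this, zero_mul]
          · intro h; exact absurd (Finset.mem_univ i) h
        rw [hsingle] at hsum
        rcases mul_eq_zero.mp hsum with h | h
        · exact h
        · exact absurd h (hdiag i)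
    intro i
    exact main m i (by omega)
  calc m = Fintype.card (Fin m) := (Fintype.card_fin m).symm
    _ ≤ Module.finrank ℚ (N → ℚ) := hli.fintype_card_le_finrank
    _ = Fintype.card N := Module.finrank_pi ℚ


/-- Skew Bollobás set-pair inequality (uniform version), by the polynomial method. -/
lemma skew_bollobas {m a b : ℕ} (P Q : Fin m → Finset ℕ)
    (hP : ∀ x, (P x).card = a) (hQ : ∀ y, (Q y).card = b)
    (hdisj : ∀ x, Disjoint (P x) (Q x))
    (hskew : ∀ x y, x < y → ((P x) ∩ (Q y)).Nonempty) :
    m ≤ (a + b).choose a := by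
  classical
  set g : Fin m → Polynomial ℚ := fun x => ∏ w ∈ P x, (Polynomial.X - Polynomial.C (w : ℚ))
    with hg
  have hdeg : ∀ x, (g x).natDegree < a + 1 := by
    intro x
    have h1 : (g x).natDegree ≤ ∑ w ∈ P x, (Polynomial.X - Polynomial.C (w : ℚ)).natDegree :=
      Polynomial.natDegree_prod_le _ _
    simp only [Polynomial.natDegree_X_sub_C] at h1
    simp only [Finset.sum_const, smul_eq_mul, mul_one, hP] at h1
    omega
  have heval : ∀ x (u : ℚ), (g x).eval u = ∏ w ∈ P x, (u - (w : ℚ)) := by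
    intro x u; simp [hg, Polynomial.eval_prod]
  set z : Fin m → Fin (a + 1) → ℚ := fun x d => (g x).coeff d with hz
  have hexp : ∀ x (u : ℚ), (g x).eval u = ∑ d : Fin (a + 1), z x d * u ^ (d : ℕ) := by
    intro x u
    rw [Polynomial.eval_eq_sum_range' (hdeg x), Finset.sum_range]
  set M : Fin m → Fin m → ℚ := fun x y => ∏ u ∈ Q y, (g x).eval (u : ℚ) with hM
  have htri : ∀ x y, x < y → M x y = 0 := by
    intro x y hxy
    obtain ⟨u, hu⟩ := hskew x y hxy
    rw [Finset.mem_inter] at hu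
    apply Finset.prod_eq_zero hu.2
    rw [heval]
    apply Finset.prod_eq_zero hu.1
    simp
  have hdiagM : ∀ x, M x x ≠ 0 := by
    intro x
    rw [hM]
    apply Finset.prod_ne_zero_iff.mpr
    intro u hu
    rw [heval]
    apply Finset.prod_ne_zero_iff.mpr
    intro w hw
    have huw : u ≠ w := by
      intro h; subst h
      exact (Finset.disjoint_left.mp (hdisj x)) hw hu
    intro hc
    have : (u : ℚ) = (w : ℚ) := by linarith [sub_eq_zero.mp hc]
    exact huw (Nat.cast_inj.mp this)
  -- the grouping map
  have hcardattach : ∀ y : Fin m, Multiset.card (Q y).attach.val = b := by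
    intro y
    exact Finset.card_attach.trans (hQ y)
  set key : ∀ y : Fin m, ((u : ℕ) → u ∈ Q y → Fin (a + 1)) → Sym (Fin (a + 1)) b :=
    fun y φ => ⟨Multiset.map (fun u : {u // u ∈ Q y} => φ u.1 u.2) (Q y).attach.val, by
      rw [Multiset.card_map, hcardattach]⟩ with hkey
  set Z : Fin m → Sym (Fin (a + 1)) b → ℚ := fun x s => (Multiset.map (z x) s.1).prod with hZ
  set Cm : Sym (Fin (a + 1)) b → Fin m → ℚ := fun s y =>
    ∑ φ ∈ ((Q y).pi (fun _ : ℕ => (Finset.univ : Finset (Fin (a + 1))))).filter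
        (fun φ => key y φ = s),
      ∏ u ∈ (Q y).attach, (u.1 : ℚ) ^ ((φ u.1 u.2 : Fin (a + 1)) : ℕ) with hCm
  have hfac : ∀ x y, M x y = ∑ s : Sym (Fin (a + 1)) b, Z x s * Cm s y := by
    intro x y
    have step1 : M x y = ∑ φ ∈ (Q y).pi (fun _ : ℕ => (Finset.univ : Finset (Fin (a + 1)))),
        ∏ u ∈ (Q y).attach, (z x (φ u.1 u.2) * (u.1 : ℚ) ^ ((φ u.1 u.2 : Fin (a+1)) : ℕ)) := by
      rw [hM]
      simp only
      rw [← Finset.prod_sum (Q y) (fun _ : ℕ => (Finset.univ : Finset (Fin (a + 1))))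
        (fun u d => z x d * (u : ℚ) ^ (d : ℕ))]
      refine Finset.prod_congr rfl fun u _ => ?_
      rw [hexp]
    rw [step1,
      ← Finset.sum_fiberwise_of_maps_to (g := fun φ => key y φ)
        (t := (Finset.univ : Finset (Sym (Fin (a+1)) b))) (fun _ _ => Finset.mem_univ _)]
    refine Finset.sum_congr rfl fun s _ => ?_
    rw [hCm]
    simp only
    rw [Finset.mul_sum]
    refine Finset.sum_congr rfl fun φ hφ => ?_
    rw [Finset.mem_filter] at hφ
    rw [Finset.prod_mul_distrib]
    congr 1
    have hsval : s.1 = Multiset.map (fun u : {u // u ∈ Q y} => φ u.1 u.2) (Q y).attach.val := by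
      rw [← hφ.2]
    rw [hZ]
    simp only
    rw [hsval, Multiset.map_map, Finset.prod_eq_multiset_prod]
    rfl
  have hcard := rank_trick M Z Cm hfac htri hdiagM
  have hcsym : Fintype.card (Sym (Fin (a + 1)) b) = (a + b).choose a := by
    rw [Sym.card_sym_eq_choose]
    simp only [Fintype.card_fin]
    have h2 : a + 1 + b - 1 = a + b := by omega
    rw [h2, Nat.choose_symm_add]
  omega

open Finset



namespace YoungAux

variable {r c : ℕ} {Y : Finset (ℕ × ℕ)}

lemma mem_box (hY : IsYoungDiagram r c Y) {p : ℕ × ℕ} (hp : p ∈ Y) :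
    1 ≤ p.1 ∧ p.1 ≤ r ∧ 1 ≤ p.2 ∧ p.2 ≤ c := by
  have := hY.1 hp
  rw [Finset.mem_product, Finset.mem_Icc, Finset.mem_Icc] at this
  omega

lemma down_row_d (hY : IsYoungDiagram r c Y) :
    ∀ d (s t : ℕ), (s, t) ∈ Y → 1 ≤ s - d → (s - d, t) ∈ Y := by
  intro d
  induction d with
  | zero => intro s t h _; simpa using h
  | succ d ih =>
    intro s t h hd
    have h1 : 1 ≤ s - d := by omega
    have h2 := ih s t h h1
    have h3 : 2 ≤ s - d := by omega
    have := ((hY.2 _ h2).1 h3)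
    simpa [show s - d - 1 = s - (d+1) by omega] using this

lemma down_col_d (hY : IsYoungDiagram r c Y) :
    ∀ d (s t : ℕ), (s, t) ∈ Y → 1 ≤ t - d → (s, t - d) ∈ Y := by
  intro d
  induction d with
  | zero => intro s t h _; simpa using h
  | succ d ih =>
    intro s t h hd
    have h1 : 1 ≤ t - d := by omega
    have h2 := ih s t h h1
    have h3 : 2 ≤ t - d := by omega
    have := ((hY.2 _ h2).2 h3)
    simpa [show t - d - 1 = t - (d+1) by omega] using this

lemma down (hY : IsYoungDiagram r c Y) {s t s' t' : ℕ} (h : (s, t) ∈ Y)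
    (hs1 : 1 ≤ s') (hs : s' ≤ s) (ht1 : 1 ≤ t') (ht : t' ≤ t) : (s', t') ∈ Y := by
  have h1 : (s - (s - s'), t) ∈ Y := down_row_d hY (s - s') s t h (by omega)
  rw [show s - (s - s') = s' by omega] at h1
  have h2 : (s', t - (t - t')) ∈ Y := down_col_d hY (t - t') s' t h1 (by omega)
  rwa [show t - (t - t') = t' by omega] at h2

lemma corner_subset (hY : IsYoungDiagram r c Y) {p : ℕ × ℕ} (hp : p ∈ Y) :
    Finset.Icc 1 p.1 ×ˢ Finset.Icc 1 p.2 ⊆ Y := by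
  intro q hq
  rw [Finset.mem_product, Finset.mem_Icc, Finset.mem_Icc] at hq
  have : (q.1, q.2) ∈ Y := down hY (by simpa using hp) hq.1.1 hq.1.2 hq.2.1 hq.2.2
  simpa using this

lemma exists_dominating_step (hY : IsYoungDiagram r c Y) :
    ∀ n (p : ℕ × ℕ), p ∈ Y → r + c - p.1 - p.2 ≤ n →
      ∃ q ∈ steps Y, p.1 ≤ q.1 ∧ p.2 ≤ q.2 := by
  intro n
  induction n with
  | zero =>
    intro p hp hn
    have hb := mem_box hY hp
    refine ⟨p, ?_, le_refl _, le_refl _⟩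
    rw [steps, Finset.mem_filter]
    refine ⟨hp, fun h => ?_, fun h => ?_⟩
    · have := mem_box hY h; omega
    · have := mem_box hY h; omega
  | succ n ih =>
    intro p hp hn
    have hb := mem_box hY hp
    by_cases h1 : (p.1 + 1, p.2) ∈ Y
    · have hb1 := mem_box hY h1
      obtain ⟨q, hq, hq1, hq2⟩ := ih (p.1 + 1, p.2) h1 (by simp at hb1 ⊢; omega)
      exact ⟨q, hq, by simp at hq1; omega, hq2⟩
    · by_cases h2 : (p.1, p.2 + 1) ∈ Y
      · have hb2 := mem_box hY h2
        obtain ⟨q, hq, hq1, hq2⟩ := ih (p.1, p.2 + 1) h2 (by simp at hb2 ⊢; omega)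
        exact ⟨q, hq, hq1, by simp at hq2; omega⟩
      · refine ⟨p, ?_, le_refl _, le_refl _⟩
        rw [steps, Finset.mem_filter]
        exact ⟨hp, h1, h2⟩

lemma dominating_step (hY : IsYoungDiagram r c Y) {p : ℕ × ℕ} (hp : p ∈ Y) :
    ∃ q ∈ steps Y, p.1 ≤ q.1 ∧ p.2 ≤ q.2 :=
  exists_dominating_step hY (r + c) p hp (by omega)

lemma steps_nonempty (hY : IsYoungDiagram r c Y) (h : Y.Nonempty) : (steps Y).Nonempty := by
  obtain ⟨p, hp⟩ := h
  obtain ⟨q, hq, -⟩ := dominating_step hY hp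
  exact ⟨q, hq⟩

lemma steps_subset : steps Y ⊆ Y := Finset.filter_subset _ _

lemma step_antichain (hY : IsYoungDiagram r c Y) {q q' : ℕ × ℕ}
    (hq : q ∈ steps Y) (hq' : q' ∈ steps Y) (h1 : q.1 ≤ q'.1) (h2 : q.2 ≤ q'.2) :
    q = q' := by
  rw [steps, Finset.mem_filter] at hq hq'
  by_contra hne
  have hb := mem_box hY hq.1
  have hb' := mem_box hY hq'.1
  rcases lt_or_eq_of_le h1 with h1' | h1'
  · exact hq.2.1 (down hY (show (q'.1, q'.2) ∈ Y by simpa using hq'.1) (by omega) (by omega)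
      (by omega) h2)
  · rcases lt_or_eq_of_le h2 with h2' | h2'
    · exact hq.2.2 (down hY (show (q'.1, q'.2) ∈ Y by simpa using hq'.1) (by omega) (by omega)
        (by omega) (by omega))
    · exact hne (Prod.ext h1' h2')

/-- Distinct steps: strictly larger row iff strictly smaller column. -/
lemma step_row_lt_iff (hY : IsYoungDiagram r c Y) {q q' : ℕ × ℕ}
    (hq : q ∈ steps Y) (hq' : q' ∈ steps Y) : q.1 < q'.1 ↔ q'.2 < q.2 := by
  constructor
  · intro h
    by_contra hc
    push_neg at hc
    rw [step_antichain hY hq hq' (le_of_lt h) hc] at h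
    exact lt_irrefl _ h
  · intro h
    by_contra hc
    push_neg at hc
    rw [step_antichain hY hq' hq hc (le_of_lt h)] at h
    exact lt_irrefl _ h

lemma step_fst_injOn (hY : IsYoungDiagram r c Y) :
    Set.InjOn Prod.fst (steps Y : Set (ℕ × ℕ)) := by
  intro q hq q' hq' h
  rcases lt_trichotomy q.2 q'.2 with h2 | h2 | h2
  · have := (step_row_lt_iff hY hq' hq).mpr h2; omega
  · exact Prod.ext h h2
  · have := (step_row_lt_iff hY hq hq').mpr h2; omega

lemma step_snd_injOn (hY : IsYoungDiagram r c Y) :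
    Set.InjOn Prod.snd (steps Y : Set (ℕ × ℕ)) := by
  intro q hq q' hq' h
  rcases lt_trichotomy q.1 q'.1 with h1 | h1 | h1
  · have := (step_row_lt_iff hY (by exact_mod_cast hq) (by exact_mod_cast hq')).mp h1; omega
  · exact Prod.ext h1 h
  · have := (step_row_lt_iff hY (by exact_mod_cast hq') (by exact_mod_cast hq)).mp h1; omega

end YoungAux




namespace YoungAux

/-- Pad a finset of multiples of 3 up to cardinality `k` with fresh elements
congruent to `off` mod 3, tagged by `x`. -/
def padd (s : Finset ℕ) (k off x : ℕ) : Finset ℕ :=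
  s ∪ (Finset.range (k - s.card)).image (fun i => 3 * Nat.pair x i + off)

lemma padd_subset {s : Finset ℕ} {k off x : ℕ} : s ⊆ padd s k off x :=
  Finset.subset_union_left

lemma padd_card {s : Finset ℕ} {k off x : ℕ} (hs : ∀ u ∈ s, u % 3 = 0)
    (hoff : off % 3 ≠ 0) (hcard : s.card ≤ k) : (padd s k off x).card = k := by
  rw [padd, Finset.card_union_of_disjoint, Finset.card_image_of_injective, Finset.card_range]
  · omega
  · intro i j hij
    simp only at hij
    have : Nat.pair x i = Nat.pair x j := by omega
    exact ((Nat.pair_eq_pair.mp this).2)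
  · rw [Finset.disjoint_left]
    intro u hu hmem
    rw [Finset.mem_image] at hmem
    obtain ⟨i, -, hi⟩ := hmem
    have h0 := hs u hu
    omega

lemma mem_padd_cases {s : Finset ℕ} {k off x u : ℕ} (h : u ∈ padd s k off x) :
    u ∈ s ∨ u % 3 = off % 3 := by
  rw [padd, Finset.mem_union] at h
  rcases h with h | h
  · exact Or.inl h
  · rw [Finset.mem_image] at h
    obtain ⟨i, -, hi⟩ := h
    right
    omega

/-- **Necessity**: a `(k,k)`-local cover forces fewer than `C(2k,k)` steps. -/
theorem necessity {k r c : ℕ} {Y : Finset (ℕ × ℕ)} (hY : IsYoungDiagram r c Y)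
    {C : Finset (Finset (ℕ × ℕ))} (hcov : IsCover Y C) (hloc : IsLocalCover C k k) :
    (steps Y).card < (2 * k).choose k := by
  classical
  set n := (steps Y).card with hn
  have hR : ((steps Y).image Prod.fst).card = n :=
    Finset.card_image_of_injOn (step_fst_injOn hY)
  set e := ((steps Y).image Prod.fst).orderEmbOfFin hR with he
  have hex : ∀ x : Fin n, ∃ q, q ∈ steps Y ∧ q.1 = e x := by
    intro x
    have := Finset.orderEmbOfFin_mem ((steps Y).image Prod.fst) hR x
    rw [Finset.mem_image] at this
    obtain ⟨q, hq, hq'⟩ := this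
    exact ⟨q, hq, hq'⟩
  choose st hst1 hst2 using hex
  have hmono : ∀ {x y : Fin n}, x ≤ y → (st x).1 ≤ (st y).1 := by
    intro x y h
    rw [hst2, hst2]
    exact e.monotone h
  have hstrict : ∀ {x y : Fin n}, x < y → (st x).1 < (st y).1 := by
    intro x y h
    rw [hst2, hst2]
    exact e.strictMono h
  have hanti : ∀ {x y : Fin n}, x ≤ y → (st y).2 ≤ (st x).2 := by
    intro x y h
    rcases eq_or_lt_of_le h with h' | h'
    · rw [h']
    · exact le_of_lt ((step_row_lt_iff hY (hst1 x) (hst1 y)).mp (hstrict h'))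
  set A : Fin n → Finset (Finset (ℕ × ℕ)) :=
    fun x => C.filter (fun R => ∃ p ∈ R, p.1 = (st x).1) with hA
  set B : Fin n → Finset (Finset (ℕ × ℕ)) :=
    fun y => C.filter (fun R => ∃ p ∈ R, p.2 = (st y).2) with hB
  have hAcard : ∀ x, (A x).card ≤ k := fun x => hloc.1 _
  have hBcard : ∀ y, (B y).card ≤ k := fun y => hloc.2 _
  have hABne : ∀ {x y : Fin n}, x ≤ y → (A x ∩ B y).Nonempty := by
    intro x y h
    have hcell : ((st x).1, (st y).2) ∈ Y := by
      have hy : (st y) ∈ Y := steps_subset (hst1 y)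
      have hbx := mem_box hY (steps_subset (hst1 x))
      have hby := mem_box hY hy
      exact down hY (show ((st y).1, (st y).2) ∈ Y by simpa using hy)
        (by omega) (hmono h) (by omega) (le_refl _)
    rw [hcov.2, Finset.mem_sup] at hcell
    obtain ⟨R, hRC, hR⟩ := hcell
    refine ⟨R, ?_⟩
    rw [Finset.mem_inter, hA, hB, Finset.mem_filter, Finset.mem_filter]
    exact ⟨⟨hRC, ⟨_, hR, rfl⟩⟩, ⟨hRC, ⟨_, hR, rfl⟩⟩⟩
  have hABdisj : ∀ {x y : Fin n}, y < x → Disjoint (A x) (B y) := by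
    intro x y h
    rw [Finset.disjoint_left]
    intro R hRA hRB
    rw [hA, Finset.mem_filter] at hRA
    rw [hB, Finset.mem_filter] at hRB
    obtain ⟨hRC, p, hpR, hp1⟩ := hRA
    obtain ⟨-, q, hqR, hq2⟩ := hRB
    obtain ⟨hRY, S, T, hST⟩ := hcov.1 R hRC
    have hcell : (p.1, q.2) ∈ R := by
      rw [hST] at hpR hqR ⊢
      rw [Finset.mem_product] at hpR hqR ⊢
      exact ⟨hpR.1, hqR.2⟩
    have hcellY : (p.1, q.2) ∈ Y := hRY hcell
    -- now p.1 = (st x).1 > (st y).1, q.2 = (st y).2; contradiction with st y being a step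
    have hys := hst1 y
    rw [steps, Finset.mem_filter] at hys
    apply hys.2.1
    have hb := mem_box hY hcellY
    have := down hY hcellY (s' := (st y).1 + 1) (t' := (st y).2) (by omega)
      (by rw [hp1]; exact hstrict h) (by omega) (by rw [hq2])
    exact this
  -- encode rectangles as naturals ≡ 0 mod 3
  set enc : Finset (ℕ × ℕ) → ℕ := fun R => 3 * (Encodable.encode R) + 3 with henc
  have hencinj : Function.Injective enc := by
    intro R R' h
    have h' : 3 * Encodable.encode R + 3 = 3 * Encodable.encode R' + 3 := h
    exact Encodable.encode_injective (by omega)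
  have hencmod : ∀ R, enc R % 3 = 0 := by
    intro R
    show (3 * Encodable.encode R + 3) % 3 = 0
    omega
  set sA : Fin (n + 1) → Finset ℕ :=
    fun x => if h : (x : ℕ) < n then (A ⟨x, h⟩).image enc else ∅ with hsA
  set sB : Fin (n + 1) → Finset ℕ :=
    fun y => if h : 0 < (y : ℕ) then (B ⟨(y : ℕ) - 1, by omega⟩).image enc else ∅ with hsB
  have hsAmod : ∀ x u, u ∈ sA x → u % 3 = 0 := by
    intro x u hu
    simp only [hsA] at hu
    split_ifs at hu with h
    · rw [Finset.mem_image] at hu; obtain ⟨R, -, hR⟩ := hu; rw [← hR]; exact hencmod R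
    · simp at hu
  have hsBmod : ∀ y u, u ∈ sB y → u % 3 = 0 := by
    intro y u hu
    simp only [hsB] at hu
    split_ifs at hu with h
    · rw [Finset.mem_image] at hu; obtain ⟨R, -, hR⟩ := hu; rw [← hR]; exact hencmod R
    · simp at hu
  have hsAcard : ∀ x, (sA x).card ≤ k := by
    intro x
    simp only [hsA]
    split_ifs with h
    · rw [Finset.card_image_of_injective _ hencinj]; exact hAcard _
    · simp
  have hsBcard : ∀ y, (sB y).card ≤ k := by
    intro y
    simp only [hsB]
    split_ifs with h
    · rw [Finset.card_image_of_injective _ hencinj]; exact hBcard _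
    · simp
  set P : Fin (n + 1) → Finset ℕ := fun x => padd (sA x) k 1 x with hP
  set Q : Fin (n + 1) → Finset ℕ := fun y => padd (sB y) k 2 y with hQ
  have hPcard : ∀ x, (P x).card = k := fun x => padd_card (hsAmod x) (by omega) (hsAcard x)
  have hQcard : ∀ y, (Q y).card = k := fun y => padd_card (hsBmod y) (by omega) (hsBcard y)
  have hdisjPQ : ∀ x, Disjoint (P x) (Q x) := by
    intro x
    rw [Finset.disjoint_left]
    intro u huP huQ
    rcases mem_padd_cases huP with hA' | hA' <;> rcases mem_padd_cases huQ with hB' | hB'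
    · -- both real codes
      simp only [hsA] at hA'; simp only [hsB] at hB'
      split_ifs at hA' with h1
      · split_ifs at hB' with h2
        · rw [Finset.mem_image] at hA' hB'
          obtain ⟨R, hR, hRe⟩ := hA'
          obtain ⟨R', hR', hRe'⟩ := hB'
          have : R = R' := hencinj (by rw [hRe, hRe'])
          subst this
          have hyx : (⟨(x : ℕ) - 1, by omega⟩ : Fin n) < ⟨(x : ℕ), h1⟩ := by
            simp only [Fin.mk_lt_mk]; omega
          exact (Finset.disjoint_left.mp (hABdisj hyx)) hR hR'
        · simp at hB'
      · simp at hA'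
    · have := hsAmod x u hA'; omega
    · have := hsBmod x u hB'; omega
    · omega
  have hskewPQ : ∀ x y : Fin (n + 1), x < y → ((P x) ∩ (Q y)).Nonempty := by
    intro x y hxy
    have hx : (x : ℕ) < n := by omega
    have hy : 0 < (y : ℕ) := by omega
    have hle : (⟨(x : ℕ), hx⟩ : Fin n) ≤ ⟨(y : ℕ) - 1, by omega⟩ := by
      simp only [Fin.mk_le_mk]; omega
    obtain ⟨R, hR⟩ := hABne hle
    rw [Finset.mem_inter] at hR
    refine ⟨enc R, ?_⟩
    rw [Finset.mem_inter]
    constructor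
    · apply padd_subset
      simp only [hsA]
      rw [dif_pos hx]
      exact Finset.mem_image_of_mem enc hR.1
    · apply padd_subset
      simp only [hsB]
      rw [dif_pos hy]
      exact Finset.mem_image_of_mem enc hR.2
  have hfinal := skew_bollobas P Q hPcard hQcard hdisjPQ hskewPQ
  have : (2 : ℕ) * k = k + k := by ring
  rw [this]
  omega

end YoungAux

namespace YoungAux


variable {r c : ℕ} {Y : Finset (ℕ × ℕ)} {t₀ s₀ : ℕ}

/-- Column-shifted part: cells with column `> t₀`, columns shifted down by `t₀`. -/
def shiftCol (Y : Finset (ℕ × ℕ)) (t₀ : ℕ) : Finset (ℕ × ℕ) :=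
  (Y.filter (fun q => t₀ < q.2)).image (fun q => (q.1, q.2 - t₀))

/-- Row-shifted part. -/
def shiftRow (Y : Finset (ℕ × ℕ)) (s₀ : ℕ) : Finset (ℕ × ℕ) :=
  (Y.filter (fun q => s₀ < q.1)).image (fun q => (q.1 - s₀, q.2))

lemma mem_shiftCol {p : ℕ × ℕ} : p ∈ shiftCol Y t₀ ↔ (p.1, p.2 + t₀) ∈ Y ∧ 1 ≤ p.2 := by
  rw [shiftCol]
  simp only [Finset.mem_image, Finset.mem_filter]
  constructor
  · rintro ⟨q, ⟨hqY, hq2⟩, rfl⟩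
    constructor
    · have h : q.2 - t₀ + t₀ = q.2 := by omega
      simpa [h] using hqY
    · simp only
      omega
  · rintro ⟨hY', h1⟩
    refine ⟨(p.1, p.2 + t₀), ⟨hY', by simp <;> omega⟩, ?_⟩
    simp only
    rw [Prod.ext_iff]
    constructor
    · rfl
    · simp <;> omega
lemma mem_shiftRow {p : ℕ × ℕ} : p ∈ shiftRow Y s₀ ↔ (p.1 + s₀, p.2) ∈ Y ∧ 1 ≤ p.1 := by
  rw [shiftRow]
  simp only [Finset.mem_image, Finset.mem_filter]
  constructor
  · rintro ⟨q, ⟨hqY, hq1⟩, rfl⟩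
    constructor
    · have h : q.1 - s₀ + s₀ = q.1 := by omega
      simpa [h] using hqY
    · simp only
      omega
  · rintro ⟨hY', h1⟩
    refine ⟨(p.1 + s₀, p.2), ⟨hY', by simp <;> omega⟩, ?_⟩
    simp only
    rw [Prod.ext_iff]
    constructor
    · simp <;> omega
    · rfl

lemma young_mem_box (hY : IsYoungDiagram r c Y) {p : ℕ × ℕ} (hp : p ∈ Y) :
    1 ≤ p.1 ∧ p.1 ≤ r ∧ 1 ≤ p.2 ∧ p.2 ≤ c := by
  have := hY.1 hp
  rw [Finset.mem_product, Finset.mem_Icc, Finset.mem_Icc] at this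
  omega

lemma young_shiftCol (hY : IsYoungDiagram r c Y) : IsYoungDiagram r c (shiftCol Y t₀) := by
  constructor
  · intro p hp
    rw [mem_shiftCol] at hp
    have hb := young_mem_box hY hp.1
    simp only at hb
    rw [Finset.mem_product, Finset.mem_Icc, Finset.mem_Icc]
    omega
  · intro p hp
    rw [mem_shiftCol] at hp
    constructor
    · intro h2
      rw [mem_shiftCol]
      exact ⟨(hY.2 _ hp.1).1 h2, hp.2⟩
    · intro h2
      rw [mem_shiftCol]
      have h3 : 2 ≤ p.2 + t₀ := by omega
      have h4 := (hY.2 _ hp.1).2 h3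
      constructor
      · have he : ((p.1, p.2 - 1).1, (p.1, p.2 - 1).2 + t₀) = (p.1, p.2 + t₀ - 1) := by
          rw [Prod.ext_iff]; constructor
          · rfl
          · simp <;> omega
        rw [he]
        exact h4
      · simp only
        omega
lemma young_shiftRow (hY : IsYoungDiagram r c Y) : IsYoungDiagram r c (shiftRow Y s₀) := by
  constructor
  · intro p hp
    rw [mem_shiftRow] at hp
    have hb := young_mem_box hY hp.1
    simp only at hb
    rw [Finset.mem_product, Finset.mem_Icc, Finset.mem_Icc]
    omega
  · intro p hp
    rw [mem_shiftRow] at hp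
    constructor
    · intro h2
      rw [mem_shiftRow]
      have h3 : 2 ≤ p.1 + s₀ := by omega
      have h4 := (hY.2 _ hp.1).1 h3
      constructor
      · have he : ((p.1 - 1, p.2).1 + s₀, (p.1 - 1, p.2).2) = (p.1 + s₀ - 1, p.2) := by
          rw [Prod.ext_iff]; constructor
          · simp <;> omega
          · rfl
        rw [he]
        exact h4
      · simp only
        omega
    · intro h2
      rw [mem_shiftRow]
      exact ⟨(hY.2 _ hp.1).2 h2, hp.2⟩

lemma steps_shiftCol : steps (shiftCol Y t₀) = ((steps Y).filter (fun q => t₀ < q.2)).image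
    (fun q => (q.1, q.2 - t₀)) := by
  ext p
  simp only [steps, Finset.mem_image, Finset.mem_filter]
  constructor
  · rintro ⟨hp, hn1, hn2⟩
    rw [mem_shiftCol] at hp
    refine ⟨(p.1, p.2 + t₀), ⟨⟨hp.1, ?_, ?_⟩, ?_⟩, ?_⟩
    · intro hc
      apply hn1
      rw [mem_shiftCol]
      exact ⟨hc, by omega⟩
    · intro hc
      apply hn2
      rw [mem_shiftCol]
      refine ⟨?_, by omega⟩
      have he : ((p.1, p.2 + 1).1, (p.1, p.2 + 1).2 + t₀) = (p.1, p.2 + t₀ + 1) := by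
        rw [Prod.ext_iff]; exact ⟨rfl, by simp <;> omega⟩
      rw [he]
      exact hc
    · simp <;> omega
    · rw [Prod.ext_iff]; exact ⟨rfl, by simp <;> omega⟩
  · rintro ⟨q, ⟨⟨hqY, hq1, hq2⟩, hqt⟩, rfl⟩
    have hmem : (q.1, q.2 - t₀) ∈ shiftCol Y t₀ := by
      rw [mem_shiftCol]
      constructor
      · have he : ((q.1, q.2 - t₀).1, (q.1, q.2 - t₀).2 + t₀) = (q.1, q.2) := by
          rw [Prod.ext_iff]; exact ⟨rfl, by simp <;> omega⟩
        rw [he]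
        simpa using hqY
      · simp <;> omega
    refine ⟨hmem, ?_, ?_⟩
    · intro hc
      rw [mem_shiftCol] at hc
      apply hq1
      have he : (((q.1, q.2 - t₀).1 + 1, (q.1, q.2 - t₀).2).1,
          ((q.1, q.2 - t₀).1 + 1, (q.1, q.2 - t₀).2).2 + t₀) = (q.1 + 1, q.2) := by
        rw [Prod.ext_iff]; exact ⟨rfl, by simp <;> omega⟩
      rw [he] at hc
      exact hc.1
    · intro hc
      rw [mem_shiftCol] at hc
      apply hq2
      have he : (((q.1, q.2 - t₀).1, (q.1, q.2 - t₀).2 + 1).1,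
          ((q.1, q.2 - t₀).1, (q.1, q.2 - t₀).2 + 1).2 + t₀) = (q.1, q.2 + 1) := by
        rw [Prod.ext_iff]; exact ⟨rfl, by simp <;> omega⟩
      rw [he] at hc
      exact hc.1
lemma steps_shiftRow : steps (shiftRow Y s₀) = ((steps Y).filter (fun q => s₀ < q.1)).image
    (fun q => (q.1 - s₀, q.2)) := by
  ext p
  simp only [steps, Finset.mem_image, Finset.mem_filter]
  constructor
  · rintro ⟨hp, hn1, hn2⟩
    rw [mem_shiftRow] at hp
    refine ⟨(p.1 + s₀, p.2), ⟨⟨hp.1, ?_, ?_⟩, ?_⟩, ?_⟩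
    · intro hc
      apply hn1
      rw [mem_shiftRow]
      refine ⟨?_, by omega⟩
      have he : ((p.1 + 1, p.2).1 + s₀, (p.1 + 1, p.2).2) = (p.1 + s₀ + 1, p.2) := by
        rw [Prod.ext_iff]; exact ⟨by simp <;> omega, rfl⟩
      rw [he]
      exact hc
    · intro hc
      apply hn2
      rw [mem_shiftRow]
      exact ⟨hc, by omega⟩
    · simp <;> omega
    · rw [Prod.ext_iff]; exact ⟨by simp <;> omega, rfl⟩
  · rintro ⟨q, ⟨⟨hqY, hq1, hq2⟩, hqs⟩, rfl⟩
    have hmem : (q.1 - s₀, q.2) ∈ shiftRow Y s₀ := by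
      rw [mem_shiftRow]
      constructor
      · have he : ((q.1 - s₀, q.2).1 + s₀, (q.1 - s₀, q.2).2) = (q.1, q.2) := by
          rw [Prod.ext_iff]; exact ⟨by simp <;> omega, rfl⟩
        rw [he]
        simpa using hqY
      · simp <;> omega
    refine ⟨hmem, ?_, ?_⟩
    · intro hc
      rw [mem_shiftRow] at hc
      apply hq1
      have he : (((q.1 - s₀, q.2).1 + 1, (q.1 - s₀, q.2).2).1 + s₀,
          ((q.1 - s₀, q.2).1 + 1, (q.1 - s₀, q.2).2).2) = (q.1 + 1, q.2) := by
        rw [Prod.ext_iff]; exact ⟨by simp <;> omega, rfl⟩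
      rw [he] at hc
      exact hc.1
    · intro hc
      rw [mem_shiftRow] at hc
      apply hq2
      have he : (((q.1 - s₀, q.2).1, (q.1 - s₀, q.2).2 + 1).1 + s₀,
          ((q.1 - s₀, q.2).1, (q.1 - s₀, q.2).2 + 1).2) = (q.1, q.2 + 1) := by
        rw [Prod.ext_iff]; exact ⟨by simp <;> omega, rfl⟩
      rw [he] at hc
      exact hc.1

lemma card_steps_shiftCol : (steps (shiftCol Y t₀)).card
    = ((steps Y).filter (fun q => t₀ < q.2)).card := by
  rw [steps_shiftCol]
  apply Finset.card_image_of_injOn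
  intro q hq q' hq' h
  simp only [Finset.coe_filter, Set.mem_setOf_eq] at hq hq'
  rw [Prod.ext_iff] at h ⊢
  simp only at h
  have := hq.2
  have := hq'.2
  exact ⟨h.1, by omega⟩
lemma card_steps_shiftRow : (steps (shiftRow Y s₀)).card
    = ((steps Y).filter (fun q => s₀ < q.1)).card := by
  rw [steps_shiftRow]
  apply Finset.card_image_of_injOn
  intro q hq q' hq' h
  simp only [Finset.coe_filter, Set.mem_setOf_eq] at hq hq'
  rw [Prod.ext_iff] at h ⊢
  simp only at h
  have := hq.2
  have := hq'.2
  exact ⟨by omega, h.2⟩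



lemma exists_kth (s : Finset ℕ) : ∀ m, m < s.card → ∃ t ∈ s, (s.filter (fun x => t < x)).card = m := by
  intro m
  induction m with
  | zero =>
    intro h
    have hne : s.Nonempty := Finset.card_pos.mp (by omega)
    refine ⟨s.max' hne, s.max'_mem hne, ?_⟩
    rw [Finset.card_eq_zero, Finset.filter_eq_empty_iff]
    intro x hx
    exact not_lt.mpr (s.le_max' x hx)
  | succ m ih =>
    intro h
    obtain ⟨t, hts, hcard⟩ := ih (by omega)
    have hsplit := Finset.card_filter_add_card_filter_not
      (s := s) (p := fun x => t < x)
    have h2 : s.filter (fun x => x < t) = (s.filter (fun x => ¬ t < x)).erase t := by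
      ext x
      simp only [Finset.mem_erase, Finset.mem_filter]
      constructor
      · rintro ⟨hx, hlt⟩
        exact ⟨by omega, hx, by omega⟩
      · rintro ⟨hne, hx, hle⟩
        exact ⟨hx, by omega⟩
    have hlow : (s.filter (fun x => x < t)).Nonempty := by
      rw [← Finset.card_pos, h2, Finset.card_erase_of_mem]
      · omega
      · rw [Finset.mem_filter]; exact ⟨hts, by omega⟩
    set t' := (s.filter (fun x => x < t)).max' hlow with ht'
    have ht'mem := (s.filter (fun x => x < t)).max'_mem hlow
    rw [Finset.mem_filter] at ht'mem
    refine ⟨t', ht'mem.1, ?_⟩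
    have hkey : s.filter (fun x => t' < x) = insert t (s.filter (fun x => t < x)) := by
      ext x
      simp only [Finset.mem_insert, Finset.mem_filter]
      constructor
      · rintro ⟨hx, hlt⟩
        rcases lt_trichotomy x t with hc | hc | hc
        · exfalso
          have : x ≤ t' := Finset.le_max' _ x (by rw [Finset.mem_filter]; exact ⟨hx, hc⟩)
          omega
        · exact Or.inl hc
        · exact Or.inr ⟨hx, hc⟩
      · rintro (rfl | ⟨hx, hlt⟩)
        · exact ⟨hts, ht'mem.2⟩
        · exact ⟨hx, by omega⟩
    rw [hkey, Finset.card_insert_of_notMem]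
    · omega
    · rw [Finset.mem_filter]
      push_neg
      intro _
      omega


end YoungAux

namespace YoungAux

lemma count_image_le (C : Finset (Finset (ℕ × ℕ))) (F : Finset (ℕ × ℕ) → Finset (ℕ × ℕ))
    (p q : Finset (ℕ × ℕ) → Prop) [DecidablePred p] [DecidablePred q]
    (h : ∀ R ∈ C, p (F R) → q R) : ((C.image F).filter p).card ≤ (C.filter q).card := by
  rw [Finset.filter_image]
  refine le_trans Finset.card_image_le (Finset.card_le_card ?_)
  intro R hR
  rw [Finset.mem_filter] at hR ⊢
  exact ⟨hR.1, h R hR.1 hR.2⟩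

lemma shift_prod_col (S T : Finset ℕ) (t₀ : ℕ) :
    (S ×ˢ T).image (fun p => (p.1, p.2 + t₀)) = S ×ˢ (T.image (fun t => t + t₀)) := by
  ext p
  simp only [Finset.mem_image, Finset.mem_product, Prod.ext_iff]
  constructor
  · rintro ⟨q, ⟨hq1, hq2⟩, h1, h2⟩
    exact ⟨by rw [← h1]; exact hq1, ⟨q.2, hq2, h2⟩⟩
  · rintro ⟨h1, t, ht, h2⟩
    exact ⟨(p.1, t), ⟨h1, ht⟩, rfl, h2⟩

lemma shift_prod_row (S T : Finset ℕ) (s₀ : ℕ) :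
    (S ×ˢ T).image (fun p => (p.1 + s₀, p.2)) = (S.image (fun s => s + s₀)) ×ˢ T := by
  ext p
  simp only [Finset.mem_image, Finset.mem_product, Prod.ext_iff]
  constructor
  · rintro ⟨q, ⟨hq1, hq2⟩, h1, h2⟩
    exact ⟨⟨q.1, hq1, h1⟩, by rw [← h2]; exact hq2⟩
  · rintro ⟨⟨s, hs, h1⟩, h2⟩
    exact ⟨(s, p.2), ⟨hs, h2⟩, h1, rfl⟩

lemma empty_cover (i j : ℕ) : IsCover ∅ ∅ ∧ IsLocalCover ∅ i j := by
  refine ⟨⟨fun R h => absurd h (Finset.notMem_empty R), by simp⟩, ?_, ?_⟩ <;>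
    intro s <;> simp

theorem construction : ∀ N i j r c (Y : Finset (ℕ × ℕ)), i + j ≤ N → IsYoungDiagram r c Y →
    (steps Y).card < (i + j).choose i →
    ∃ C, IsCover Y C ∧ IsLocalCover C i j := by
  intro N
  induction N with
  | zero =>
    intro i j r c Y hN hY hcard
    have hi : i = 0 := by omega
    have hj : j = 0 := by omega
    subst hi; subst hj
    have hYe : Y = ∅ := by
      by_contra h
      obtain ⟨q, hq⟩ := steps_nonempty hY (Finset.nonempty_iff_ne_empty.mpr h)
      simp at hcard
      rw [hcard] at hq
      exact absurd hq (Finset.notMem_empty q)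
    subst hYe
    exact ⟨∅, empty_cover 0 0⟩
  | succ N ih =>
    intro i j r c Y hN hY hcard
    classical
    by_cases hYe : Y = ∅
    · subst hYe; exact ⟨∅, empty_cover i j⟩
    have hsne : (steps Y).Nonempty := steps_nonempty hY (Finset.nonempty_iff_ne_empty.mpr hYe)
    set n := (steps Y).card with hn
    have hn1 : 1 ≤ n := Finset.card_pos.mpr hsne
    rcases Nat.eq_zero_or_pos i with hi0 | hipos
    · subst hi0; simp at hcard; omega
    rcases Nat.eq_zero_or_pos j with hj0 | hjpos
    · exfalso; subst hj0; simp [Nat.choose_self] at hcard; omega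
    obtain ⟨i', rfl⟩ : ∃ i', i = i' + 1 := ⟨i - 1, by omega⟩
    obtain ⟨j', rfl⟩ : ∃ j', j = j' + 1 := ⟨j - 1, by omega⟩
    set i := i' + 1
    set j := j' + 1
    set c1 := (i' + j).choose i' with hc1def
    set c2 := (i + j').choose i with hc2def
    have hc1pos : 1 ≤ c1 := Nat.choose_pos (by omega)
    have hc2pos : 1 ≤ c2 := Nat.choose_pos (by omega)
    have hpascal : (i + j).choose i = c1 + c2 := by
      have h1 : i + j = (i' + j) + 1 := by omega
      rw [h1, hc1def, hc2def]
      have h2 : i' + j = i + j' := by omega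
      rw [Nat.choose_succ_succ]
      congr 1
      rw [h2]
    set m := min (n - 1) (c1 - 1) with hm
    set T := (steps Y).image Prod.snd with hT
    have hTcard : T.card = n := Finset.card_image_of_injOn (step_snd_injOn hY)
    obtain ⟨t₀, ht₀T, ht₀count⟩ := exists_kth T m (by omega)
    rw [hT, Finset.mem_image] at ht₀T
    obtain ⟨p₀, hp₀mem, hp₀2⟩ := ht₀T
    set s₀ := p₀.1 with hs₀
    have hp₀Y : p₀ ∈ Y := steps_subset hp₀mem
    have hp₀box := mem_box hY hp₀Y
    have hcount1 : ((steps Y).filter (fun q => t₀ < q.2)).card = m := by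
      have himg : ((steps Y).filter (fun q => t₀ < q.2)).image Prod.snd
          = T.filter (fun x => t₀ < x) := by
        rw [hT, Finset.filter_image]
      have h3 : (((steps Y).filter (fun q => t₀ < q.2)).image Prod.snd).card
          = ((steps Y).filter (fun q => t₀ < q.2)).card :=
        Finset.card_image_of_injOn ((step_snd_injOn hY).mono
          (by intro q hq; exact Finset.mem_coe.mpr (Finset.filter_subset _ _ (Finset.mem_coe.mp hq))))
      rw [himg, ht₀count] at h3
      omega
    have hcount2 : ((steps Y).filter (fun q => s₀ < q.1)).card = n - 1 - m := by
      have hsplit := Finset.card_filter_add_card_filter_not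
        (s := steps Y) (p := fun q => t₀ < q.2)
      have hins : (steps Y).filter (fun q => ¬ t₀ < q.2)
          = insert p₀ ((steps Y).filter (fun q => s₀ < q.1)) := by
        ext q
        simp only [Finset.mem_insert, Finset.mem_filter]
        constructor
        · rintro ⟨hq, hle⟩
          by_cases hqp : q = p₀
          · exact Or.inl hqp
          · right
            refine ⟨hq, ?_⟩
            have hne2 : q.2 ≠ t₀ := by
              intro h
              exact hqp (step_snd_injOn hY (Finset.mem_coe.mpr hq) (Finset.mem_coe.mpr hp₀mem)
                (by rw [h, hp₀2]))
            have hq2lt : q.2 < p₀.2 := by omega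
            exact (step_row_lt_iff hY hp₀mem hq).mpr hq2lt
        · rintro (rfl | ⟨hq, hlt⟩)
          · exact ⟨hp₀mem, by omega⟩
          · have := (step_row_lt_iff hY hp₀mem hq).mp hlt
            refine ⟨hq, by omega⟩
      have hnotmem : p₀ ∉ (steps Y).filter (fun q => s₀ < q.1) := by
        rw [Finset.mem_filter]
        push_neg
        intro _
        omega
      have h4 := Finset.card_insert_of_notMem hnotmem
      rw [← hins] at h4
      omega
    set R0 : Finset (ℕ × ℕ) := Finset.Icc 1 s₀ ×ˢ Finset.Icc 1 t₀ with hR0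
    have hR0eq : R0 = Finset.Icc 1 p₀.1 ×ˢ Finset.Icc 1 p₀.2 := by rw [hR0, hp₀2]
    have hR0sub : R0 ⊆ Y := by
      rw [hR0eq]
      exact corner_subset hY hp₀Y
    have hR0mem : ∀ q ∈ R0, 1 ≤ q.1 ∧ q.1 ≤ s₀ ∧ 1 ≤ q.2 ∧ q.2 ≤ t₀ := by
      intro q hq
      rw [hR0, Finset.mem_product, Finset.mem_Icc, Finset.mem_Icc] at hq
      omega
    have hno : ∀ p ∈ Y, ¬(s₀ < p.1 ∧ t₀ < p.2) := by
      rintro p hp ⟨h1, h2⟩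
      obtain ⟨q, hq, hq1, hq2⟩ := dominating_step hY hp
      have : q.2 < p₀.2 := (step_row_lt_iff hY hp₀mem hq).mp (by omega)
      omega
    -- subdiagrams and recursive covers
    have hY₁ := young_shiftCol (t₀ := t₀) hY
    have hY₂ := young_shiftRow (s₀ := s₀) hY
    have hcard₁ : (steps (shiftCol Y t₀)).card < (i' + j).choose i' := by
      rw [card_steps_shiftCol, hcount1, ← hc1def]
      omega
    have hcard₂ : (steps (shiftRow Y s₀)).card < (i + j').choose i := by
      rw [card_steps_shiftRow, hcount2, ← hc2def]
      omega
    obtain ⟨C₁, hcov₁, hloc₁⟩ := ih i' j r c (shiftCol Y t₀) (by omega) hY₁ hcard₁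
    obtain ⟨C₂, hcov₂, hloc₂⟩ := ih i j' r c (shiftRow Y s₀) (by omega) hY₂ hcard₂
    set F₁ : Finset (ℕ × ℕ) → Finset (ℕ × ℕ) :=
      fun R => R.image (fun p => (p.1, p.2 + t₀)) with hF₁
    set F₂ : Finset (ℕ × ℕ) → Finset (ℕ × ℕ) :=
      fun R => R.image (fun p => (p.1 + s₀, p.2)) with hF₂
    set C : Finset (Finset (ℕ × ℕ)) := insert R0 (C₁.image F₁ ∪ C₂.image F₂) with hC
    have hF₁cell : ∀ R' ∈ C₁, ∀ p ∈ F₁ R', p ∈ Y ∧ t₀ < p.2 ∧ p.1 ≤ s₀ := by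
      intro R' hR' p hp
      simp only [hF₁, Finset.mem_image] at hp
      obtain ⟨q, hq, rfl⟩ := hp
      have hqY₁ : q ∈ shiftCol Y t₀ := (hcov₁.1 R' hR').1 hq
      rw [mem_shiftCol] at hqY₁
      refine ⟨hqY₁.1, by simp only; omega, ?_⟩
      have := hno _ hqY₁.1
      simp only at this ⊢
      omega
    have hF₂cell : ∀ R' ∈ C₂, ∀ p ∈ F₂ R', p ∈ Y ∧ s₀ < p.1 ∧ p.2 ≤ t₀ := by
      intro R' hR' p hp
      simp only [hF₂, Finset.mem_image] at hp
      obtain ⟨q, hq, rfl⟩ := hp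
      have hqY₂ : q ∈ shiftRow Y s₀ := (hcov₂.1 R' hR').1 hq
      rw [mem_shiftRow] at hqY₂
      refine ⟨hqY₂.1, by simp only; omega, ?_⟩
      have := hno _ hqY₂.1
      simp only at this ⊢
      omega
    have hgen : ∀ R ∈ C, IsGenRect Y R := by
      intro R hR
      rw [hC, Finset.mem_insert, Finset.mem_union] at hR
      rcases hR with rfl | hR | hR
      · exact ⟨hR0sub, _, _, hR0⟩
      · rw [Finset.mem_image] at hR
        obtain ⟨R', hR', rfl⟩ := hR
        refine ⟨fun p hp => (hF₁cell R' hR' p hp).1, ?_⟩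
        obtain ⟨-, S, T', hST⟩ := hcov₁.1 R' hR'
        exact ⟨S, T'.image (fun t => t + t₀), by rw [hF₁]; simp only; rw [hST, shift_prod_col]⟩
      · rw [Finset.mem_image] at hR
        obtain ⟨R', hR', rfl⟩ := hR
        refine ⟨fun p hp => (hF₂cell R' hR' p hp).1, ?_⟩
        obtain ⟨-, S, T', hST⟩ := hcov₂.1 R' hR'
        exact ⟨S.image (fun s => s + s₀), T', by rw [hF₂]; simp only; rw [hST, shift_prod_row]⟩
    have hcover : Y = C.sup id := by
      apply Finset.Subset.antisymm
      · intro p hp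
        rw [Finset.mem_sup]
        by_cases h1 : t₀ < p.2
        · have hp1 : (p.1, p.2 - t₀) ∈ shiftCol Y t₀ := by
            rw [mem_shiftCol]
            constructor
            · have he : ((p.1, p.2 - t₀).1, (p.1, p.2 - t₀).2 + t₀) = p := by
                rw [Prod.ext_iff]
                exact ⟨rfl, by simp only; omega⟩
              rw [he]
              exact hp
            · simp only; omega
          rw [hcov₁.2, Finset.mem_sup] at hp1
          obtain ⟨R', hR', hmem⟩ := hp1
          refine ⟨F₁ R', by
            rw [hC]
            exact Finset.mem_insert_of_mem (Finset.mem_union_left _ (Finset.mem_image_of_mem _ hR')), ?_⟩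
          show p ∈ F₁ R'
          rw [hF₁]
          simp only
          rw [Finset.mem_image]
          refine ⟨(p.1, p.2 - t₀), hmem, ?_⟩
          rw [Prod.ext_iff]
          exact ⟨rfl, by simp only; omega⟩
        · by_cases h2 : s₀ < p.1
          · have hp2 : (p.1 - s₀, p.2) ∈ shiftRow Y s₀ := by
              rw [mem_shiftRow]
              constructor
              · have he : ((p.1 - s₀, p.2).1 + s₀, (p.1 - s₀, p.2).2) = p := by
                  rw [Prod.ext_iff]
                  exact ⟨by simp only; omega, rfl⟩
                rw [he]
                exact hp
              · simp only; omega
            rw [hcov₂.2, Finset.mem_sup] at hp2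
            obtain ⟨R', hR', hmem⟩ := hp2
            refine ⟨F₂ R', by
              rw [hC]
              exact Finset.mem_insert_of_mem
                (Finset.mem_union_right _ (Finset.mem_image_of_mem _ hR')), ?_⟩
            show p ∈ F₂ R'
            rw [hF₂]
            simp only
            rw [Finset.mem_image]
            refine ⟨(p.1 - s₀, p.2), hmem, ?_⟩
            rw [Prod.ext_iff]
            exact ⟨by simp only; omega, rfl⟩
          · refine ⟨R0, by rw [hC]; exact Finset.mem_insert_self _ _, ?_⟩
            show p ∈ R0
            have hb := mem_box hY hp
            rw [hR0, Finset.mem_product, Finset.mem_Icc, Finset.mem_Icc]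
            omega
      · intro p hp
        rw [Finset.mem_sup] at hp
        obtain ⟨R, hR, hmem⟩ := hp
        exact (hgen R hR).1 hmem
    refine ⟨C, ⟨hgen, hcover⟩, ?_, ?_⟩
    · -- rows
      intro s
      by_cases hcase : s₀ < s
      · have hnotR0 : ¬ ∃ p ∈ R0, p.1 = s := by
          rintro ⟨p, hp, hps⟩
          have := hR0mem p hp
          omega
        rw [hC, Finset.filter_insert, if_neg hnotR0, Finset.filter_union]
        refine le_trans (Finset.card_union_le _ _) ?_
        have hzero : ((C₁.image F₁).filter (fun R => ∃ p ∈ R, p.1 = s)).card = 0 := by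
          rw [Finset.card_eq_zero, Finset.filter_eq_empty_iff]
          rintro R hR ⟨p, hp, hps⟩
          rw [Finset.mem_image] at hR
          obtain ⟨R', hR', rfl⟩ := hR
          have := (hF₁cell R' hR' p hp).2.2
          omega
        have hle2 : ((C₂.image F₂).filter (fun R => ∃ p ∈ R, p.1 = s)).card
            ≤ (C₂.filter (fun R => ∃ p ∈ R, p.1 = s - s₀)).card := by
          apply count_image_le
          rintro R hR ⟨p, hp, hps⟩
          simp only [hF₂, Finset.mem_image] at hp
          obtain ⟨q, hq, rfl⟩ := hp
          simp only at hps
          exact ⟨q, hq, by omega⟩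
        have hl := hloc₂.1 (s - s₀)
        omega
      · rw [hC, Finset.filter_insert]
        have hbound : ((C₁.image F₁ ∪ C₂.image F₂).filter (fun R => ∃ p ∈ R, p.1 = s)).card
            ≤ i' := by
          rw [Finset.filter_union]
          refine le_trans (Finset.card_union_le _ _) ?_
          have hzero : ((C₂.image F₂).filter (fun R => ∃ p ∈ R, p.1 = s)).card = 0 := by
            rw [Finset.card_eq_zero, Finset.filter_eq_empty_iff]
            rintro R hR ⟨p, hp, hps⟩
            rw [Finset.mem_image] at hR
            obtain ⟨R', hR', rfl⟩ := hR
            have := (hF₂cell R' hR' p hp).2.1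
            omega
          have hle1 : ((C₁.image F₁).filter (fun R => ∃ p ∈ R, p.1 = s)).card
              ≤ (C₁.filter (fun R => ∃ p ∈ R, p.1 = s)).card := by
            apply count_image_le
            rintro R hR ⟨p, hp, hps⟩
            simp only [hF₁, Finset.mem_image] at hp
            obtain ⟨q, hq, rfl⟩ := hp
            simp only at hps
            exact ⟨q, hq, hps⟩
          have hl := hloc₁.1 s
          omega
        split_ifs with hds
        · refine le_trans (Finset.card_insert_le _ _) ?_
          omega
        · omega
    · -- columns
      intro t
      by_cases hcase : t₀ < t
      · have hnotR0 : ¬ ∃ p ∈ R0, p.2 = t := by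
          rintro ⟨p, hp, hps⟩
          have := hR0mem p hp
          omega
        rw [hC, Finset.filter_insert, if_neg hnotR0, Finset.filter_union]
        refine le_trans (Finset.card_union_le _ _) ?_
        have hzero : ((C₂.image F₂).filter (fun R => ∃ p ∈ R, p.2 = t)).card = 0 := by
          rw [Finset.card_eq_zero, Finset.filter_eq_empty_iff]
          rintro R hR ⟨p, hp, hps⟩
          rw [Finset.mem_image] at hR
          obtain ⟨R', hR', rfl⟩ := hR
          have := (hF₂cell R' hR' p hp).2.2
          omega
        have hle2 : ((C₁.image F₁).filter (fun R => ∃ p ∈ R, p.2 = t)).card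
            ≤ (C₁.filter (fun R => ∃ p ∈ R, p.2 = t - t₀)).card := by
          apply count_image_le
          rintro R hR ⟨p, hp, hps⟩
          simp only [hF₁, Finset.mem_image] at hp
          obtain ⟨q, hq, rfl⟩ := hp
          simp only at hps
          exact ⟨q, hq, by omega⟩
        have hl := hloc₁.2 (t - t₀)
        omega
      · rw [hC, Finset.filter_insert]
        have hbound : ((C₁.image F₁ ∪ C₂.image F₂).filter (fun R => ∃ p ∈ R, p.2 = t)).card
            ≤ j' := by
          rw [Finset.filter_union]
          refine le_trans (Finset.card_union_le _ _) ?_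
          have hzero : ((C₁.image F₁).filter (fun R => ∃ p ∈ R, p.2 = t)).card = 0 := by
            rw [Finset.card_eq_zero, Finset.filter_eq_empty_iff]
            rintro R hR ⟨p, hp, hps⟩
            rw [Finset.mem_image] at hR
            obtain ⟨R', hR', rfl⟩ := hR
            have := (hF₁cell R' hR' p hp).2.1
            omega
          have hle1 : ((C₂.image F₂).filter (fun R => ∃ p ∈ R, p.2 = t)).card
              ≤ (C₂.filter (fun R => ∃ p ∈ R, p.2 = t)).card := by
            apply count_image_le
            rintro R hR ⟨p, hp, hps⟩
            simp only [hF₂, Finset.mem_image] at hp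
            obtain ⟨q, hq, rfl⟩ := hp
            simp only at hps
            exact ⟨q, hq, hps⟩
          have hl := hloc₂.2 t
          omega
        split_ifs with hds
        · refine le_trans (Finset.card_insert_le _ _) ?_
          omega
        · omega

end YoungAux


/-- **Theorem (main, simple form).** For every positive integer `k`, a Young
diagram `Y` can be covered by a set `C` of generalized rectangles such that
each row and each column of `Y` is used by at most `k` rectangles of `C`
if and only if `Y` has strictly fewer than `binomial (2k) k` steps. -/
theorem young_kLocal_cover_iff_steps_lt_centralBinom
    (k r c : ℕ) (hk : 0 < k) (hr : 0 < r) (hc : 0 < c)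
    (Y : Finset (ℕ × ℕ)) (hY : IsYoungDiagram r c Y) :
    (∃ C : Finset (Finset (ℕ × ℕ)), IsCover Y C ∧ IsLocalCover C k k) ↔
      (steps Y).card < Nat.choose (2 * k) k := by
  constructor
  · rintro ⟨C, hcov, hloc⟩
    exact YoungAux.necessity hY hcov hloc
  · intro h
    have h2 : (steps Y).card < (k + k).choose k := by
      rw [show k + k = 2 * k by ring]
      exact h
    obtain ⟨C, hc, hl⟩ := YoungAux.construction (k + k) k k r c Y le_rfl hY h2
    exact ⟨C, hc, hl⟩
end

section
/- For all positive integers i, j, z and every Young diagram Y with z steps: if z < binomial(i+j, i), then there exists an (i, j)-local partition of Y consisting of actual rectangles. -/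
section Aux
open Finset

/-- Staircase union of rectangles anchored at `(u,v)` with corners from `L`. -/
def Yd (u v : ℕ) (L : List (ℕ × ℕ)) : Finset (ℕ × ℕ) :=
  L.foldr (fun p acc => (Finset.Icc u p.1 ×ˢ Finset.Icc v p.2) ∪ acc) ∅

def relSt (p q : ℕ × ℕ) : Prop := p.1 < q.1 ∧ q.2 < p.2

lemma mem_Yd {u v : ℕ} {L : List (ℕ × ℕ)} {q : ℕ × ℕ} :
    q ∈ Yd u v L ↔ ∃ x ∈ L, u ≤ q.1 ∧ q.1 ≤ x.1 ∧ v ≤ q.2 ∧ q.2 ≤ x.2 := by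
  induction L with
  | nil => simp [Yd]
  | cons a L ih =>
    simp only [Yd, List.foldr_cons, Finset.mem_union, Finset.mem_product, Finset.mem_Icc,
      List.mem_cons] at *
    constructor
    · rintro (⟨⟨h1, h2⟩, h3, h4⟩ | h)
      · exact ⟨a, Or.inl rfl, h1, h2, h3, h4⟩
      · obtain ⟨x, hx, h⟩ := ih.mp h
        exact ⟨x, Or.inr hx, h⟩
    · rintro ⟨x, hx | hx, h1, h2, h3, h4⟩
      · subst hx; exact Or.inl ⟨⟨h1, h2⟩, h3, h4⟩
      · exact Or.inr (ih.mpr ⟨x, hx, h1, h2, h3, h4⟩)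

/-- Extract a sorted list from an antichain finset. -/
lemma exists_sorted (S : Finset (ℕ × ℕ))
    (hS : ∀ p ∈ S, ∀ q ∈ S, p ≠ q → relSt p q ∨ relSt q p) :
    ∃ L : List (ℕ × ℕ), L.Pairwise relSt ∧ (∀ p, p ∈ L ↔ p ∈ S) ∧ L.length = S.card := by
  induction S using Finset.strongInduction with
  | _ S ih =>
    rcases S.eq_empty_or_nonempty with rfl | hne
    · exact ⟨[], by simp⟩
    · obtain ⟨p, hp, hmin⟩ := S.exists_min_image Prod.fst hne
      obtain ⟨L, hL1, hL2, hL3⟩ := ih (S.erase p) (Finset.erase_ssubset hp)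
        (fun a ha b hb hab => hS a (Finset.mem_of_mem_erase ha) b (Finset.mem_of_mem_erase hb) hab)
      refine ⟨p :: L, ?_, ?_, ?_⟩
      · refine List.pairwise_cons.mpr ⟨?_, hL1⟩
        intro q hq
        have hq' := (hL2 q).mp hq
        have hqS := Finset.mem_of_mem_erase hq'
        have hne' : p ≠ q := fun h => (Finset.ne_of_mem_erase hq') h.symm
        rcases hS p hp q hqS hne' with h | h
        · exact h
        · exact absurd h.1 (not_lt.mpr (hmin q hqS))
      · intro q
        simp only [List.mem_cons, hL2, Finset.mem_erase]
        constructor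
        · rintro (rfl | ⟨_, h⟩)
          exacts [hp, h]
        · intro hq
          rcases eq_or_ne q p with rfl | h
          · exact Or.inl rfl
          · exact Or.inr ⟨h, hq⟩
      · simp [hL3, Finset.card_erase_of_mem hp, Nat.sub_add_cancel (Finset.card_pos.mpr ⟨p, hp⟩)]

section Young
variable {r c : ℕ} {Y : Finset (ℕ × ℕ)} (hY : IsYoungDiagram r c Y)

include hY

lemma young_box {p : ℕ × ℕ} (hp : p ∈ Y) : 1 ≤ p.1 ∧ p.1 ≤ r ∧ 1 ≤ p.2 ∧ p.2 ≤ c := by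
  have := hY.1 hp
  simp only [Finset.mem_product, Finset.mem_Icc] at this
  tauto

lemma young_down {a b s t : ℕ} (hab : (a, b) ∈ Y) (hs1 : 1 ≤ s) (hsa : s ≤ a)
    (ht1 : 1 ≤ t) (htb : t ≤ b) : (s, t) ∈ Y := by
  have row : ∀ n a, (a, b) ∈ Y → a - s ≤ n → s ≤ a → (s, b) ∈ Y := by
    intro n
    induction n with
    | zero =>
      intro a h hle hsa
      have h2 : s = a := by omega
      rw [h2]; exact h
    | succ n ih =>
      intro a h hle hsa
      rcases eq_or_lt_of_le hsa with rfl | hlt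
      · exact h
      · have h2 : (a - 1, b) ∈ Y := (hY.2 _ h).1 (by omega)
        exact ih (a - 1) h2 (by omega) (by omega)
  have hsb : (s, b) ∈ Y := row (a - s) a hab le_rfl hsa
  have col : ∀ n b, (s, b) ∈ Y → b - t ≤ n → t ≤ b → (s, t) ∈ Y := by
    intro n
    induction n with
    | zero =>
      intro b h hle htb
      have h2 : t = b := by omega
      rw [h2]; exact h
    | succ n ih =>
      intro b h hle htb
      rcases eq_or_lt_of_le htb with rfl | hlt
      · exact h
      · have h2 : (s, b - 1) ∈ Y := (hY.2 _ h).2 (by omega)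
        exact ih (b - 1) h2 (by omega) (by omega)
  exact col (b - t) b hsb le_rfl htb

lemma young_step_dominates {p : ℕ × ℕ} (hp : p ∈ Y) :
    ∃ q ∈ steps Y, p.1 ≤ q.1 ∧ p.2 ≤ q.2 := by
  have main : ∀ n (p : ℕ × ℕ), p ∈ Y → r + c - p.1 - p.2 ≤ n →
      ∃ q ∈ steps Y, p.1 ≤ q.1 ∧ p.2 ≤ q.2 := by
    intro n
    induction n with
    | zero =>
      intro p hp hle
      obtain ⟨h1, h2, h3, h4⟩ := young_box hY hp
      have e1 : p.1 = r := by omega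
      have e2 : p.2 = c := by omega
      refine ⟨p, Finset.mem_filter.mpr ⟨hp, ?_, ?_⟩, le_rfl, le_rfl⟩
      · intro hmem; obtain ⟨h, _⟩ := young_box hY hmem; omega
      · intro hmem; obtain ⟨_, _, _, h⟩ := young_box hY hmem
        simp only at h; omega
    | succ n ih =>
      intro p hp hle
      by_cases h1 : (p.1 + 1, p.2) ∈ Y
      · obtain ⟨b1, b2, b3, b4⟩ := young_box hY h1
        obtain ⟨q, hq, hq1, hq2⟩ := ih (p.1 + 1, p.2) h1 (by simp only at *; omega)
        exact ⟨q, hq, by simp only at hq1; omega, hq2⟩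
      · by_cases h2 : (p.1, p.2 + 1) ∈ Y
        · obtain ⟨b1, b2, b3, b4⟩ := young_box hY h2
          obtain ⟨q, hq, hq1, hq2⟩ := ih (p.1, p.2 + 1) h2 (by simp only at *; omega)
          exact ⟨q, hq, hq1, by simp only at hq2; omega⟩
        · exact ⟨p, Finset.mem_filter.mpr ⟨hp, h1, h2⟩, le_rfl, le_rfl⟩
  exact main (r + c - p.1 - p.2) p hp le_rfl

lemma young_steps_antichain {p q : ℕ × ℕ} (hp : p ∈ steps Y) (hq : q ∈ steps Y)
    (hne : p ≠ q) : (p.1 < q.1 ∧ q.2 < p.2) ∨ (q.1 < p.1 ∧ p.2 < q.2) := by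
  obtain ⟨hpY, hp1, hp2⟩ := Finset.mem_filter.mp hp
  obtain ⟨hqY, hq1, hq2⟩ := Finset.mem_filter.mp hq
  obtain ⟨a1, _, a3, _⟩ := young_box hY hpY
  obtain ⟨b1, _, b3, _⟩ := young_box hY hqY
  have hfst : p.1 ≠ q.1 := by
    intro h
    rcases Nat.lt_trichotomy p.2 q.2 with hlt | heq | hlt
    · exact hp2 (by
        have : (p.1, p.2 + 1) ∈ Y := young_down hY (a := q.1) (b := q.2) (by simpa using hqY)
          a1 (by omega) (by omega) (by omega)
        exact this)
    · exact hne (Prod.ext h heq)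
    · exact hq2 (young_down hY (a := p.1) (b := p.2) (by simpa using hpY) b1 (by omega)
        (by omega) (by omega))
  rcases Nat.lt_or_ge p.1 q.1 with hlt | hge
  · left
    refine ⟨hlt, ?_⟩
    by_contra hle
    exact hp1 (young_down hY (a := q.1) (b := q.2) (by simpa using hqY) (by omega) (by omega)
      a3 (by omega))
  · right
    have hlt : q.1 < p.1 := by omega
    refine ⟨hlt, ?_⟩
    by_contra hle
    exact hq1 (young_down hY (a := p.1) (b := p.2) (by simpa using hpY) (by omega) (by omega)
      b3 (by omega))
end Young


set_option maxHeartbeats 1000000 in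
lemma key : ∀ n (i j u v : ℕ) (L : List (ℕ × ℕ)), L.length ≤ n → L.Pairwise relSt →
    (∀ p ∈ L, u ≤ p.1 ∧ v ≤ p.2) → L.length < (i + j).choose i →
    ∃ C : Finset (Finset (ℕ × ℕ)),
      C.sup id = Yd u v L ∧
      (C : Set (Finset (ℕ × ℕ))).Pairwise (fun R R' => Disjoint R R') ∧
      (∀ R ∈ C, R.Nonempty ∧ ∃ a b a' b', R = Finset.Icc a b ×ˢ Finset.Icc a' b') ∧
      (∀ s, (C.filter fun R => ∃ p ∈ R, p.1 = s).card ≤ i) ∧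
      (∀ t, (C.filter fun R => ∃ p ∈ R, p.2 = t).card ≤ j) := by
  have hnil : ∀ (i j u v : ℕ),
      ∃ C : Finset (Finset (ℕ × ℕ)),
      C.sup id = Yd u v [] ∧
      (C : Set (Finset (ℕ × ℕ))).Pairwise (fun R R' => Disjoint R R') ∧
      (∀ R ∈ C, R.Nonempty ∧ ∃ a b a' b', R = Finset.Icc a b ×ˢ Finset.Icc a' b') ∧
      (∀ s, (C.filter fun R => ∃ p ∈ R, p.1 = s).card ≤ i) ∧
      (∀ t, (C.filter fun R => ∃ p ∈ R, p.2 = t).card ≤ j) := by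
    intro i j u v
    refine ⟨∅, ?_, ?_, ?_, ?_, ?_⟩ <;> simp [Yd]
  intro n
  induction n with
  | zero =>
    intro i j u v L hlen _ _ _
    have : L = [] := List.length_eq_zero_iff.mp (Nat.le_zero.mp hlen)
    subst this
    exact hnil i j u v
  | succ n ih =>
    intro i j u v L hlen hpair hbd hlt
    rcases List.eq_nil_or_concat L with rfl | hne
    · exact hnil i j u v
    have hzpos : 0 < L.length := by
      obtain ⟨l, a, rfl⟩ := hne; simp
    -- i and j are positive
    rcases Nat.eq_zero_or_pos i with rfl | hipos
    · have : L.length < 1 := by simpa using hlt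
      omega
    rcases Nat.eq_zero_or_pos j with rfl | hjpos
    · have : L.length < 1 := by simpa using hlt
      omega
    obtain ⟨i', rfl⟩ : ∃ i', i = i' + 1 := ⟨i - 1, by omega⟩
    obtain ⟨j', rfl⟩ : ∃ j', j = j' + 1 := ⟨j - 1, by omega⟩
    set z := L.length with hz
    set m := (i' + (j' + 1)).choose i' with hm
    have hmpos : 0 < m := Nat.choose_pos (by omega)
    set k := min z m with hk
    have hk1 : 1 ≤ k := by simp [hk]; omega
    have hkz : k ≤ z := min_le_left _ _
    have hkm : k ≤ m := min_le_right _ _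
    have hklt : k - 1 < L.length := by omega
    set p := L[k-1] with hp
    set T := L.take (k-1) with hT
    set Bt := L.drop k with hBt
    have hsplit : L = T ++ p :: Bt := by
      have h1 := List.take_append_drop (k-1) L
      rw [List.drop_eq_getElem_cons hklt] at h1
      have h2 : k - 1 + 1 = k := by omega
      rw [h2] at h1
      exact h1.symm
    have hpL : p ∈ L := by rw [hsplit]; simp
    have hpair' := hpair
    rw [hsplit, List.pairwise_append] at hpair'
    obtain ⟨hpT, hpBt', hcross⟩ := hpair'
    rw [List.pairwise_cons] at hpBt'
    obtain ⟨hpB, hpBt⟩ := hpBt'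
    have hbdp := hbd p hpL
    -- Induction hypotheses
    have hTlen : T.length = k - 1 := by
      simp [hT, List.length_take]; omega
    have hBlen : Bt.length = z - k := by
      simp [hBt, List.length_drop]
      rfl
    have htop := ih i' (j' + 1) u (p.2 + 1) T (by omega) hpT
      (fun q hq => ⟨(hbd q (by rw [hsplit]; simp [hq])).1,
        (hcross q hq p (by simp)).2⟩)
      (by rw [hTlen]; omega)
    have hpascal : (i' + 1 + (j' + 1)).choose (i' + 1)
        = (i' + (j' + 1)).choose i' + (i' + (j' + 1)).choose (i' + 1) := by
      have h1 : i' + 1 + (j' + 1) = (i' + (j' + 1)) + 1 := by omega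
      rw [h1, Nat.choose_succ_succ]
    have hbot := ih (i' + 1) j' (p.1 + 1) v Bt (by omega) hpBt
      (fun q hq => ⟨(hpB q hq).1, (hbd q (by rw [hsplit]; simp [hq])).2⟩)
      (by
        have h2 : i' + 1 + j' = i' + (j' + 1) := by omega
        rw [hBlen, h2]
        have hc2 : 0 < (i' + (j' + 1)).choose (i' + 1) := Nat.choose_pos (by omega)
        rcases le_or_gt z m with hle | hltm
        · have : k = z := by simp [hk]; omega
          omega
        · have hkm' : k = m := by simp [hk]; omega
          rw [hpascal] at hlt
          omega)
    obtain ⟨C1, hC1sup, hC1dis, hC1sh, hC1row, hC1col⟩ := htop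
    obtain ⟨C2, hC2sup, hC2dis, hC2sh, hC2row, hC2col⟩ := hbot
    set R0 : Finset (ℕ × ℕ) := Finset.Icc u p.1 ×ˢ Finset.Icc v p.2 with hR0
    set C : Finset (Finset (ℕ × ℕ)) := insert R0 (C1 ∪ C2) with hC
    -- region facts
    have hR0mem : ∀ q : ℕ × ℕ, q ∈ R0 ↔ u ≤ q.1 ∧ q.1 ≤ p.1 ∧ v ≤ q.2 ∧ q.2 ≤ p.2 := by
      intro q; simp [hR0, Finset.mem_product, Finset.mem_Icc]; tauto
    have hsubT : ∀ R ∈ C1, R ⊆ Yd u (p.2 + 1) T := by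
      intro R hR
      rw [← hC1sup]
      exact Finset.le_sup (f := id) hR
    have hsubB : ∀ R ∈ C2, R ⊆ Yd (p.1 + 1) v Bt := by
      intro R hR
      rw [← hC2sup]
      exact Finset.le_sup (f := id) hR
    have htopcell : ∀ q ∈ Yd u (p.2 + 1) T, u ≤ q.1 ∧ q.1 ≤ p.1 ∧ p.2 + 1 ≤ q.2 := by
      intro q hq
      obtain ⟨x, hx, h1, h2, h3, h4⟩ := mem_Yd.mp hq
      have := (hcross x hx p (by simp)).1
      exact ⟨h1, by omega, h3⟩
    have hbotcell : ∀ q ∈ Yd (p.1 + 1) v Bt, p.1 + 1 ≤ q.1 ∧ v ≤ q.2 ∧ q.2 < p.2 := by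
      intro q hq
      obtain ⟨x, hx, h1, h2, h3, h4⟩ := mem_Yd.mp hq
      have := (hpB x hx).2
      exact ⟨h1, h3, by omega⟩
    -- cover
    have hcover : Yd u v L = R0 ∪ Yd u (p.2 + 1) T ∪ Yd (p.1 + 1) v Bt := by
      ext q
      simp only [Finset.mem_union, hR0mem]
      constructor
      · intro hq
        obtain ⟨x, hx, h1, h2, h3, h4⟩ := mem_Yd.mp hq
        rw [hsplit] at hx
        simp only [List.mem_append, List.mem_cons] at hx
        by_cases hq2 : q.2 ≤ p.2
        · by_cases hq1 : q.1 ≤ p.1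
          · exact Or.inl (Or.inl ⟨h1, hq1, h3, hq2⟩)
          · -- x must be in Bt
            rcases hx with hx | rfl | hx
            · exact absurd ((hcross x hx p (by simp)).1) (by omega)
            · omega
            · exact Or.inr (mem_Yd.mpr ⟨x, hx, by
                have := (hpB x hx).1; omega, h2, h3, h4⟩)
        · -- x must be in T
          rcases hx with hx | rfl | hx
          · exact Or.inl (Or.inr (mem_Yd.mpr ⟨x, hx, h1, h2, by omega, h4⟩))
          · omega
          · exact absurd ((hpB x hx).2) (by omega)
      · rintro ((hq | hq) | hq)
        · exact mem_Yd.mpr ⟨p, hpL, hq.1, hq.2.1, hq.2.2.1, hq.2.2.2⟩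
        · obtain ⟨x, hx, h1, h2, h3, h4⟩ := mem_Yd.mp hq
          exact mem_Yd.mpr ⟨x, by rw [hsplit]; simp [hx], h1, h2, by omega, h4⟩
        · obtain ⟨x, hx, h1, h2, h3, h4⟩ := mem_Yd.mp hq
          exact mem_Yd.mpr ⟨x, by rw [hsplit]; simp [hx], by omega, h2, h3, h4⟩
    -- disjointness of the three regions' rectangles
    have hd01 : ∀ R' ∈ C1, Disjoint R0 R' := by
      intro R' hR'
      rw [Finset.disjoint_left]
      intro q hq hq'
      have h1 := (hR0mem q).mp hq
      have h2 := htopcell q (hsubT R' hR' hq')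
      omega
    have hd02 : ∀ R' ∈ C2, Disjoint R0 R' := by
      intro R' hR'
      rw [Finset.disjoint_left]
      intro q hq hq'
      have h1 := (hR0mem q).mp hq
      have h2 := hbotcell q (hsubB R' hR' hq')
      omega
    have hd12 : ∀ R ∈ C1, ∀ R' ∈ C2, Disjoint R R' := by
      intro R hR R' hR'
      rw [Finset.disjoint_left]
      intro q hq hq'
      have h1 := htopcell q (hsubT R hR hq)
      have h2 := hbotcell q (hsubB R' hR' hq')
      omega
    refine ⟨C, ?_, ?_, ?_, ?_, ?_⟩
    · rw [hC]
      rw [Finset.sup_insert, Finset.sup_union, hC1sup, hC2sup, hcover]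
      simp [Finset.sup_eq_union, Finset.union_assoc]
    · intro R hR R' hR' hne
      simp only [hC, Finset.coe_insert, Set.mem_insert_iff, Finset.coe_union,
        Set.mem_union, Finset.mem_coe] at hR hR'
      rcases hR with rfl | hR | hR <;> rcases hR' with rfl | hR' | hR'
      · exact absurd rfl hne
      · exact hd01 _ hR'
      · exact hd02 _ hR'
      · exact (hd01 _ hR).symm
      · exact hC1dis hR hR' hne
      · exact hd12 _ hR _ hR'
      · exact (hd02 _ hR).symm
      · exact (hd12 _ hR' _ hR).symm
      · exact hC2dis hR hR' hne
    · intro R hR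
      simp only [hC, Finset.mem_insert, Finset.mem_union] at hR
      rcases hR with rfl | hR | hR
      · exact ⟨⟨(u, v), (hR0mem _).mpr ⟨le_rfl, hbdp.1, le_rfl, hbdp.2⟩⟩,
          u, p.1, v, p.2, rfl⟩
      · exact hC1sh R hR
      · exact hC2sh R hR
    · intro s
      have hsub : C.filter (fun R => ∃ p ∈ R, p.1 = s) ⊆
          ({R0} : Finset (Finset (ℕ × ℕ))).filter (fun R => ∃ p ∈ R, p.1 = s) ∪
          C1.filter (fun R => ∃ p ∈ R, p.1 = s) ∪
          C2.filter (fun R => ∃ p ∈ R, p.1 = s) := by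
        intro R hR
        rw [Finset.mem_filter] at hR
        obtain ⟨hRC, hPs⟩ := hR
        rw [hC, Finset.mem_insert, Finset.mem_union] at hRC
        simp only [Finset.mem_union, Finset.mem_filter, Finset.mem_singleton]
        rcases hRC with rfl | h | h
        · exact Or.inl (Or.inl ⟨rfl, hPs⟩)
        · exact Or.inl (Or.inr ⟨h, hPs⟩)
        · exact Or.inr ⟨h, hPs⟩
      have hcard := (Finset.card_le_card hsub).trans
        ((Finset.card_union_le _ _).trans (Nat.add_le_add_right (Finset.card_union_le _ _) _))
      rcases le_or_gt s p.1 with hs | hs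
      · have h2 : C2.filter (fun R => ∃ p ∈ R, p.1 = s) = ∅ := by
          rw [Finset.filter_eq_empty_iff]
          rintro R hR ⟨q, hq, rfl⟩
          have := hbotcell q (hsubB R hR hq)
          omega
        have h0 : (({R0} : Finset (Finset (ℕ × ℕ))).filter (fun R => ∃ p ∈ R, p.1 = s)).card
            ≤ 1 := (Finset.card_filter_le _ _).trans (by simp)
        have h1 := hC1row s
        rw [h2] at hcard
        simp only [Finset.card_empty] at hcard
        omega
      · have h2 : ({R0} : Finset (Finset (ℕ × ℕ))).filter (fun R => ∃ p ∈ R, p.1 = s) = ∅ := by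
          rw [Finset.filter_eq_empty_iff]
          rintro R hR ⟨q, hq, rfl⟩
          rw [Finset.mem_singleton] at hR
          subst hR
          have := (hR0mem q).mp hq
          omega
        have h1 : C1.filter (fun R => ∃ p ∈ R, p.1 = s) = ∅ := by
          rw [Finset.filter_eq_empty_iff]
          rintro R hR ⟨q, hq, rfl⟩
          have := htopcell q (hsubT R hR hq)
          omega
        have h3 := hC2row s
        rw [h1, h2] at hcard
        simp only [Finset.card_empty] at hcard
        omega
    · intro t
      have hsub : C.filter (fun R => ∃ p ∈ R, p.2 = t) ⊆
          ({R0} : Finset (Finset (ℕ × ℕ))).filter (fun R => ∃ p ∈ R, p.2 = t) ∪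
          C1.filter (fun R => ∃ p ∈ R, p.2 = t) ∪
          C2.filter (fun R => ∃ p ∈ R, p.2 = t) := by
        intro R hR
        rw [Finset.mem_filter] at hR
        obtain ⟨hRC, hPs⟩ := hR
        rw [hC, Finset.mem_insert, Finset.mem_union] at hRC
        simp only [Finset.mem_union, Finset.mem_filter, Finset.mem_singleton]
        rcases hRC with rfl | h | h
        · exact Or.inl (Or.inl ⟨rfl, hPs⟩)
        · exact Or.inl (Or.inr ⟨h, hPs⟩)
        · exact Or.inr ⟨h, hPs⟩
      have hcard := (Finset.card_le_card hsub).trans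
        ((Finset.card_union_le _ _).trans (Nat.add_le_add_right (Finset.card_union_le _ _) _))
      rcases le_or_gt t p.2 with ht | ht
      · have h1 : C1.filter (fun R => ∃ p ∈ R, p.2 = t) = ∅ := by
          rw [Finset.filter_eq_empty_iff]
          rintro R hR ⟨q, hq, rfl⟩
          have := htopcell q (hsubT R hR hq)
          omega
        have h0 : (({R0} : Finset (Finset (ℕ × ℕ))).filter (fun R => ∃ p ∈ R, p.2 = t)).card
            ≤ 1 := (Finset.card_filter_le _ _).trans (by simp)
        have h3 := hC2col t
        rw [h1] at hcard
        simp only [Finset.card_empty] at hcard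
        omega
      · have h2 : ({R0} : Finset (Finset (ℕ × ℕ))).filter (fun R => ∃ p ∈ R, p.2 = t) = ∅ := by
          rw [Finset.filter_eq_empty_iff]
          rintro R hR ⟨q, hq, rfl⟩
          rw [Finset.mem_singleton] at hR
          subst hR
          have := (hR0mem q).mp hq
          omega
        have h3 : C2.filter (fun R => ∃ p ∈ R, p.2 = t) = ∅ := by
          rw [Finset.filter_eq_empty_iff]
          rintro R hR ⟨q, hq, rfl⟩
          have := hbotcell q (hsubB R hR hq)
          omega
        have h1 := hC1col t
        rw [h2, h3] at hcard
        simp only [Finset.card_empty] at hcard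
        omega

end Aux

set_option maxHeartbeats 1000000

/-- **Theorem (construction).** For all positive integers `i, j, z` and every
Young diagram `Y` with `z` steps: if `z < binomial (i+j) i`, then there exists
an `(i,j)`-local partition of `Y` consisting of actual rectangles. -/
theorem young_local_partition_of_steps_lt_choose
    (i j z r c : ℕ) (hi : 0 < i) (hj : 0 < j) (hz : 0 < z) (hr : 0 < r) (hc : 0 < c)
    (Y : Finset (ℕ × ℕ)) (hY : IsYoungDiagram r c Y)
    (hsteps : (steps Y).card = z) (h : z < Nat.choose (i + j) i) :
    ∃ C : Finset (Finset (ℕ × ℕ)),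
      IsPartition Y C ∧ (∀ R ∈ C, IsActualRect Y R) ∧ IsLocalCover C i j := by
  
  classical
  obtain ⟨L, hL1, hL2, hL3⟩ := exists_sorted (steps Y)
    (fun p hp q hq hne => young_steps_antichain hY hp hq hne)
  have hstepY : ∀ x ∈ L, x ∈ Y := fun x hx =>
    (Finset.mem_filter.mp ((hL2 x).mp hx)).1
  have hYeq : Y = Yd 1 1 L := by
    ext q
    constructor
    · intro hq
      obtain ⟨x, hx, h1, h2⟩ := young_step_dominates hY hq
      obtain ⟨b1, _, b3, _⟩ := young_box hY hq
      exact mem_Yd.mpr ⟨x, (hL2 x).mpr hx, b1, h1, b3, h2⟩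
    · intro hq
      obtain ⟨x, hx, h1, h2, h3, h4⟩ := mem_Yd.mp hq
      have hxY : (x.1, x.2) ∈ Y := by simpa using hstepY x hx
      have := young_down hY hxY h1 h2 h3 h4
      simpa using this
  have hlen : L.length = z := by rw [hL3, hsteps]
  obtain ⟨C, hsup, hdis, hsh, hrow, hcol⟩ := key L.length i j 1 1 L le_rfl hL1
    (fun p hp => by
      obtain ⟨b1, _, b3, _⟩ := young_box hY (hstepY p hp)
      exact ⟨b1, b3⟩)
    (by rw [hlen]; exact h)
  have hsubY : ∀ R ∈ C, R ⊆ Y := by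
    intro R hR
    rw [hYeq, ← hsup]
    exact Finset.le_sup (f := id) hR
  refine ⟨C, ⟨⟨?_, ?_⟩, hdis⟩, ?_, hrow, hcol⟩
  · intro R hR
    obtain ⟨-, a, b, a', b', hRe⟩ := hsh R hR
    exact ⟨hsubY R hR, Finset.Icc a b, Finset.Icc a' b', hRe⟩
  · rw [hYeq, hsup]
  · intro R hR
    obtain ⟨-, a, b, a', b', hRe⟩ := hsh R hR
    exact ⟨hsubY R hR, a, b, a', b', hRe⟩
end

section
/- For all positive integers i, j, z and every Young diagram Y with z steps: if z ≥ binomial(i+j, i), then there exists no (i, j)-local cover of Y by generalized rectangles. -/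
open ExteriorAlgebra

namespace YoungLB
open scoped Classical

variable {n : ℕ}

lemma iota_anticomm (x y : Fin n → ℝ) :
    ι ℝ x * ι ℝ y = -(ι ℝ y * ι ℝ x) :=
  eq_neg_of_add_eq_zero_left (ExteriorAlgebra.ι_add_mul_swap x y)

lemma iota_mul_prod_eq_zero {x : Fin n → ℝ} :
    ∀ {l : List (Fin n → ℝ)}, x ∈ l → ι ℝ x * (l.map (ι ℝ)).prod = 0 := by
  intro l
  induction l with
  | nil => intro h; exact absurd h List.not_mem_nil
  | cons b t ih =>
    intro hx
    rw [List.map_cons, List.prod_cons, ← mul_assoc]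
    rcases List.mem_cons.mp hx with rfl | hx
    · rw [ι_sq_zero, zero_mul]
    · rw [iota_anticomm, neg_mul, mul_assoc, ih hx, mul_zero, neg_zero]

lemma prod_eq_zero_of_not_nodup :
    ∀ {l : List (Fin n → ℝ)}, ¬ l.Nodup → (l.map (ι ℝ)).prod = 0 := by
  intro l
  induction l with
  | nil => intro h; exact absurd List.nodup_nil h
  | cons b t ih =>
    intro h
    rw [List.nodup_cons] at h
    push_neg at h
    rw [List.map_cons, List.prod_cons]
    by_cases hb : b ∈ t
    · exact iota_mul_prod_eq_zero hb
    · rw [ih (h hb), mul_zero]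

lemma prod_perm_sign :
    ∀ {l l' : List (Fin n → ℝ)}, l.Perm l' →
      (l.map (ι ℝ)).prod = (l'.map (ι ℝ)).prod ∨
      (l.map (ι ℝ)).prod = -((l'.map (ι ℝ)).prod) := by
  intro l l' h
  induction h with
  | nil => exact Or.inl rfl
  | cons x h ih =>
    rcases ih with h' | h'
    · left; rw [List.map_cons, List.prod_cons, List.map_cons, List.prod_cons, h']
    · right; rw [List.map_cons, List.prod_cons, List.map_cons, List.prod_cons, h', mul_neg]
  | swap x y l =>
    refine Or.inr ?_
    simp only [List.map_cons, List.prod_cons, ← mul_assoc]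
    rw [iota_anticomm y x, neg_mul]
  | trans h1 h2 ih1 ih2 =>
    rcases ih1 with h1' | h1' <;> rcases ih2 with h2' | h2'
    · exact Or.inl (h1'.trans h2')
    · exact Or.inr (h1'.trans h2')
    · exact Or.inr (by rw [h1', h2'])
    · exact Or.inl (by rw [h1', h2', neg_neg])


lemma prod_mem_span_lists (l : List (Fin n → ℝ)) :
    (l.map (ι ℝ)).prod ∈ Submodule.span ℝ
      {z | ∃ s : List (Fin n), s.length = l.length ∧
        z = ((s.map (fun t => Pi.single t (1:ℝ))).map (ι ℝ)).prod} := by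
  induction l with
  | nil => exact Submodule.subset_span ⟨[], rfl, rfl⟩
  | cons x t ih =>
    rw [List.map_cons, List.prod_cons]
    have hxs : x ∈ Submodule.span ℝ (Set.range (fun t : Fin n => Pi.single t (1:ℝ))) := by
      have hf : (fun t : Fin n => Pi.single t (1:ℝ)) = ⇑(Pi.basisFun ℝ (Fin n)) := by
        funext t; rw [Pi.basisFun_apply]
      rw [hf, (Pi.basisFun ℝ (Fin n)).span_eq]
      trivial
    have hx2 : ι ℝ x ∈ Submodule.span ℝ
        ((ι ℝ) '' Set.range (fun t : Fin n => Pi.single t (1:ℝ))) := by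
      rw [← Submodule.map_span]
      exact Submodule.mem_map_of_mem hxs
    have hmul := Submodule.mul_mem_mul hx2 ih
    rw [Submodule.span_mul_span] at hmul
    refine Submodule.span_le.mpr ?_ hmul
    rintro z hz
    rw [Set.mem_mul] at hz
    obtain ⟨u, hu, w, hw, rfl⟩ := hz
    obtain ⟨xv, ⟨i, rfl⟩, rfl⟩ := hu
    obtain ⟨s, hslen, rfl⟩ := hw
    exact Submodule.subset_span ⟨i :: s, by simp [hslen], by
      simp [List.map_cons, List.prod_cons]⟩


noncomputable def esort (S : Finset (Fin n)) : ExteriorAlgebra ℝ (Fin n → ℝ) :=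
  (((S.sort (· ≤ ·)).map (fun t => Pi.single t (1:ℝ))).map (ι ℝ)).prod

noncomputable def spanT (n a : ℕ) : Finset (ExteriorAlgebra ℝ (Fin n → ℝ)) :=
  (Finset.univ.powersetCard a).image (esort (n := n))

lemma list_prod_mem_spanT {a : ℕ} {s : List (Fin n)} (hlen : s.length = a) :
    ((s.map (fun t => Pi.single t (1:ℝ))).map (ι ℝ)).prod ∈
      Submodule.span ℝ ((spanT n a : Finset _) : Set _) := by
  by_cases hnd : s.Nodup
  · have hperm : (s.toFinset.sort (· ≤ ·)).Perm s :=
      (Finset.sort_perm_toList (s := s.toFinset) (r := (· ≤ ·))).trans (List.toFinset_toList hnd)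
    have hperm2 : ((s.toFinset.sort (· ≤ ·)).map (fun t => Pi.single t (1:ℝ))).Perm
        (s.map (fun t => Pi.single t (1:ℝ))) := hperm.map _
    have hmem : esort s.toFinset ∈ spanT n a := by
      refine Finset.mem_image_of_mem _ ?_
      rw [Finset.mem_powersetCard_univ, List.toFinset_card_of_nodup hnd, hlen]
    rcases prod_perm_sign hperm2 with h | h
    · rw [show ((s.map (fun t => Pi.single t (1:ℝ))).map (ι ℝ)).prod = esort s.toFinset from h.symm]
      exact Submodule.subset_span hmem
    · have h' : esort s.toFinset = -(((s.map (fun t => Pi.single t (1:ℝ))).map (ι ℝ)).prod) := h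
      rw [show ((s.map (fun t => Pi.single t (1:ℝ))).map (ι ℝ)).prod = -(esort s.toFinset) by
        rw [h', neg_neg]]
      exact neg_mem (Submodule.subset_span hmem)
  · rw [prod_eq_zero_of_not_nodup (fun hc => hnd (hc.of_map _))]
    exact zero_mem _

noncomputable def detF (n : ℕ) : ∀ i : ℕ, (Fin n → ℝ) [⋀^Fin i]→ₗ[ℝ] ℝ :=
  fun i => if h : i = n then
    (Matrix.detRowAlternating (R := ℝ) (n := Fin n)).domDomCongr (finCongr h).symm else 0

noncomputable def lam (n : ℕ) : ExteriorAlgebra ℝ (Fin n → ℝ) →ₗ[ℝ] ℝ :=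
  liftAlternating (detF n)

lemma prod_eq_iotaMulti (l : List (Fin n → ℝ)) :
    (l.map (ι ℝ)).prod = ιMulti ℝ l.length l.get := by
  rw [ιMulti_apply]
  congr 1
  have : (List.ofFn fun i => ι ℝ (l.get i)) = (List.ofFn l.get).map (ι ℝ) := by
    rw [List.map_ofFn]; rfl
  rw [this, List.ofFn_get]

lemma lam_eval {m : ℕ} (hm : m = n) (w : Fin m → (Fin n → ℝ)) :
    lam n (ιMulti ℝ m w) = Matrix.det (Matrix.of (fun p q : Fin n => w (finCongr hm.symm p) q)) := by
  subst hm
  rw [lam, liftAlternating_apply_ιMulti]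
  simp only [detF, dif_pos rfl]
  rfl



lemma prod_mem_spanT {a : ℕ} (l : List (Fin n → ℝ)) (hlen : l.length = a) :
    (l.map (ι ℝ)).prod ∈ Submodule.span ℝ ((spanT n a : Finset _) : Set _) := by
  refine Submodule.span_le.mpr ?_ (prod_mem_span_lists l)
  rintro z ⟨s, hslen, rfl⟩
  exact list_prod_mem_spanT (by rw [hslen, hlen])

lemma card_spanT (n a : ℕ) : (spanT n a).card ≤ n.choose a := by
  calc (spanT n a).card ≤ (Finset.univ.powersetCard a : Finset (Finset (Fin n))).card :=
        Finset.card_image_le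
    _ = n.choose a := by
        rw [Finset.card_powersetCard, Finset.card_univ, Fintype.card_fin]

-- moment curve vector
noncomputable def mv (n : ℕ) (y : ℕ) : Fin n → ℝ := fun t => (y:ℝ) ^ (t:ℕ)

noncomputable def wedge (n : ℕ) (S : Finset ℕ) : ExteriorAlgebra ℝ (Fin n → ℝ) :=
  (((S.sort (· ≤ ·)).map (mv n)).map (ι ℝ)).prod

lemma wedge_mul_wedge (S T : Finset ℕ) :
    wedge n S * wedge n T
      = ((((S.sort (· ≤ ·)) ++ (T.sort (· ≤ ·))).map (mv n)).map (ι ℝ)).prod := by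
  rw [wedge, wedge, List.map_append, List.map_append, List.prod_append]

lemma wedge_mul_wedge_eq_zero {S T : Finset ℕ} (hy : (S ∩ T).Nonempty) :
    wedge n S * wedge n T = 0 := by
  obtain ⟨y, hy⟩ := hy
  rw [Finset.mem_inter] at hy
  rw [wedge_mul_wedge]
  apply prod_eq_zero_of_not_nodup
  intro hnd
  have hnd' : (((S.sort (· ≤ ·)) ++ (T.sort (· ≤ ·))).map (mv n)).Nodup := hnd
  rw [List.map_append] at hnd'
  exact (List.disjoint_of_nodup_append hnd')
    (List.mem_map_of_mem ((Finset.mem_sort _).2 hy.1))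
    (List.mem_map_of_mem ((Finset.mem_sort _).2 hy.2))

lemma lam_wedge_mul_wedge_ne_zero {a b : ℕ} (hn : a + b = n) {S T : Finset ℕ}
    (hS : S.card = a) (hT : T.card = b) (hd : Disjoint S T) :
    lam n (wedge n S * wedge n T) ≠ 0 := by
  have hndN : ((S.sort (· ≤ ·)) ++ (T.sort (· ≤ ·))).Nodup := by
    rw [List.nodup_append]
    refine ⟨Finset.sort_nodup _ _, Finset.sort_nodup _ _, fun y h1 y' h2 hyy =>
      (Finset.disjoint_left.1 hd ((Finset.mem_sort _).1 h1)) (by rw [hyy]; exact (Finset.mem_sort _).1 h2)⟩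
  set LN : List ℕ := S.sort (· ≤ ·) ++ T.sort (· ≤ ·) with hLN
  have hlen : LN.length = n := by
    simp only [hLN, List.length_append, Finset.length_sort, hS, hT, hn]
  have hlen2 : (LN.map (mv n)).length = n := by simpa using hlen
  rw [wedge_mul_wedge, prod_eq_iotaMulti, lam_eval hlen2]
  have hmat : Matrix.of (fun p q : Fin n => (LN.map (mv n)).get ((finCongr hlen2.symm) p) q)
      = Matrix.vandermonde (fun p : Fin n => ((LN.get (finCongr hlen.symm p) : ℕ) : ℝ)) := by
    ext p q
    simp [Matrix.vandermonde, mv, List.get_eq_getElem, List.getElem_map]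
  rw [hmat, Matrix.det_vandermonde]
  rw [Finset.prod_ne_zero_iff]
  intro p _
  rw [Finset.prod_ne_zero_iff]
  intro q hq
  have hpq : p ≠ q := ne_of_lt (Finset.mem_Ioi.1 hq)
  apply sub_ne_zero_of_ne
  intro hc
  apply hpq
  have hgeteq : LN.get (finCongr hlen.symm q) = LN.get (finCongr hlen.symm p) :=
    Nat.cast_injective hc
  have := (List.nodup_iff_injective_get.1 hndN) hgeteq
  exact ((finCongr hlen.symm).injective this).symm

lemma core (a b m : ℕ) (A B : Fin m → Finset ℕ)
    (hA : ∀ k, (A k).card = a) (hB : ∀ k, (B k).card = b)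
    (hd : ∀ k, Disjoint (A k) (B k))
    (hskew : ∀ k l : Fin m, k < l → ((A k) ∩ (B l)).Nonempty) :
    m ≤ (a + b).choose a := by
  set n := a + b with hn
  have hind : LinearIndependent ℝ (fun k : Fin m => wedge n (A k)) := by
    rw [Fintype.linearIndependent_iff]
    intro g hg
    suffices H : ∀ d : ℕ, ∀ k : Fin m, m - (k:ℕ) ≤ d → g k = 0 by
      intro k; exact H m k (by omega)
    intro d
    induction d with
    | zero => intro k hk; exfalso; have := k.2; omega
    | succ d ih =>
      intro k hk
      have happ : lam n ((∑ k' : Fin m, g k' • wedge n (A k')) * wedge n (B k)) = 0 := by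
        rw [hg, zero_mul, map_zero]
      rw [Finset.sum_mul] at happ
      simp only [smul_mul_assoc, map_sum, map_smul, smul_eq_mul] at happ
      rw [Finset.sum_eq_single k] at happ
      · have hne := lam_wedge_mul_wedge_ne_zero (n := n) rfl (hA k) (hB k) (hd k)
        exact (mul_eq_zero.1 happ).resolve_right hne
      · intro k' _ hne
        rcases lt_or_gt_of_ne hne with hlt | hgt
        · rw [wedge_mul_wedge_eq_zero (hskew k' k hlt), map_zero, mul_zero]
        · rw [ih k' (by omega), zero_mul]
      · intro hk'; exact absurd (Finset.mem_univ k) hk'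
  set W : Set (ExteriorAlgebra ℝ (Fin n → ℝ)) := ((spanT n a : Finset (ExteriorAlgebra ℝ (Fin n → ℝ))) : Set (ExteriorAlgebra ℝ (Fin n → ℝ))) with hW
  have hsub : Set.range (fun k : Fin m => wedge n (A k)) ⊆
      ↑(Submodule.span ℝ W) := by
    rintro _ ⟨k, rfl⟩
    exact prod_mem_spanT _ (by simp [Finset.length_sort, hA k])
  have hcard := linearIndependent_le_span' _ hind W hsub
  have hfin : (Fintype.card W) = (spanT n a).card := by
    exact Fintype.card_coe (spanT n a)
  rw [Cardinal.mk_fintype, Fintype.card_fin] at hcard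
  have hm : m ≤ Fintype.card W := by exact_mod_cast hcard
  calc m ≤ (spanT n a).card := by rwa [hfin] at hm
    _ ≤ n.choose a := card_spanT n a



/-- padding a set to exact cardinality `c`, using odd fresh elements keyed from `o`. -/
def padded (S : Finset ℕ) (c o : ℕ) : Finset ℕ :=
  (S.image (fun y => 2*y)) ∪ ((Finset.range (c - S.card)).image (fun r => 2*(o+r)+1))

lemma padded_card {S : Finset ℕ} {c : ℕ} (o : ℕ) (hc : S.card ≤ c) :
    (padded S c o).card = c := by
  rw [padded, Finset.card_union_of_disjoint, Finset.card_image_of_injective _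
      (fun x y h => by omega), Finset.card_image_of_injective _ (fun x y h => by omega),
      Finset.card_range]
  · omega
  · rw [Finset.disjoint_left]
    rintro x hx hy
    obtain ⟨u, -, rfl⟩ := Finset.mem_image.1 hx
    obtain ⟨r, -, h⟩ := Finset.mem_image.1 hy
    omega

lemma padded_disjoint {S T : Finset ℕ} {c o c' o' : ℕ} (hST : S ∩ T = ∅) (ho : o + c ≤ o') :
    Disjoint (padded S c o) (padded T c' o') := by
  rw [Finset.disjoint_left]
  rintro x hx hy
  rcases Finset.mem_union.1 hx with hx | hx <;> rcases Finset.mem_union.1 hy with hy | hy <;>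
    obtain ⟨u, hu, rfl⟩ := Finset.mem_image.1 hx <;> obtain ⟨w, hw, h⟩ := Finset.mem_image.1 hy
  · have : u = w := by omega
    subst this
    have : u ∈ S ∩ T := Finset.mem_inter.2 ⟨hu, hw⟩
    simp [hST] at this
  · omega
  · omega
  · have hu' := Finset.mem_range.1 hu
    have hw' := Finset.mem_range.1 hw
    omega

lemma mem_padded_of_mem {S : Finset ℕ} {y c o : ℕ} (h : y ∈ S) : 2*y ∈ padded S c o :=
  Finset.mem_union_left _ (Finset.mem_image_of_mem _ h)

lemma chain (i j m : ℕ) (U V : Fin m → Finset ℕ)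
    (hU : ∀ k, (U k).card ≤ i) (hV : ∀ k, (V k).card ≤ j)
    (hne : ∀ k l : Fin m, k ≤ l → ((U k) ∩ (V l)).Nonempty)
    (hem : ∀ k l : Fin m, l < k → (U k) ∩ (V l) = ∅) :
    m < (i + j).choose i := by
  classical
  have hUc : ∀ t : ℕ, (if h : t < m then U ⟨t, h⟩ else ∅).card ≤ i := by
    intro t; split
    · apply hU
    · simp
  have hVc : ∀ t : ℕ, (if h : t < m then V ⟨t, h⟩ else ∅).card ≤ j := by
    intro t; split
    · apply hV
    · simp
  set U' : ℕ → Finset ℕ := fun t => if h : t < m then U ⟨t, h⟩ else ∅ with hU'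
  set V' : ℕ → Finset ℕ := fun t => if h : t < m then V ⟨t, h⟩ else ∅ with hV'
  set Bs : ℕ → Finset ℕ := fun t => if t = 0 then ∅ else V' (t - 1) with hBs
  have hBsc : ∀ t, (Bs t).card ≤ j := by
    intro t
    rw [hBs]
    simp only []
    split
    · simp
    · apply hVc
  set A : Fin (m+1) → Finset ℕ := fun k => padded (U' (k:ℕ)) i ((k:ℕ)*(i+j)) with hA
  set B : Fin (m+1) → Finset ℕ := fun k => padded (Bs (k:ℕ)) j ((k:ℕ)*(i+j)+i) with hB
  have hcore := core i j (m+1) A B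
    (fun k => padded_card _ (hUc _)) (fun k => padded_card _ (hBsc _))
    (fun k => by
      refine padded_disjoint ?_ (le_refl _)
      rw [hBs]
      by_cases h0 : (k:ℕ) = 0
      · simp [h0]
      · simp only [h0, if_false]
        rw [hU', hV']
        by_cases hkm : (k:ℕ) < m
        · have hk1 : (k:ℕ) - 1 < m := by omega
          simp only [dif_pos hkm, dif_pos hk1]
          exact hem ⟨(k:ℕ), hkm⟩ ⟨(k:ℕ)-1, hk1⟩ (Fin.mk_lt_mk.2 (by omega))
        · simp only [dif_neg hkm]
          simp)
    (fun k l hkl => by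
      have hkm : (k:ℕ) < m := by
        have h1 : (k:ℕ) < (l:ℕ) := hkl
        have h2 : (l:ℕ) < m + 1 := l.2
        omega
      have hl0 : (l:ℕ) ≠ 0 := by
        have h1 : (k:ℕ) < (l:ℕ) := hkl
        omega
      have hl1 : (l:ℕ) - 1 < m := by
        have h2 : (l:ℕ) < m + 1 := l.2
        omega
      obtain ⟨y, hy⟩ := hne ⟨(k:ℕ), hkm⟩ ⟨(l:ℕ)-1, hl1⟩ (by
        simp only [Fin.le_def]
        have h1 : (k:ℕ) < (l:ℕ) := hkl
        omega)
      rw [Finset.mem_inter] at hy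
      refine ⟨2*y, Finset.mem_inter.2 ⟨?_, ?_⟩⟩
      · rw [hA]
        refine mem_padded_of_mem ?_
        rw [hU']
        simpa [dif_pos hkm] using hy.1
      · rw [hB]
        refine mem_padded_of_mem ?_
        rw [hBs]
        simp only [hl0, if_false]
        rw [hV']
        simpa [dif_pos hl1] using hy.2)
  omega


end YoungLB

variable {r c : ℕ} {Y : Finset (ℕ × ℕ)}

lemma row_down (hY : IsYoungDiagram r c Y) :
    ∀ (d s t : ℕ), (s, t) ∈ Y → 1 ≤ s - d → (s - d, t) ∈ Y := by
  intro d
  induction d with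
  | zero => intro s t hmem _; simpa using hmem
  | succ d ih =>
    intro s t hmem hd
    have h1 : (s - d, t) ∈ Y := ih s t hmem (by omega)
    have h2 := (hY.2 _ h1).1 (by omega)
    have : s - d - 1 = s - (d+1) := by omega
    rwa [this] at h2

lemma col_down (hY : IsYoungDiagram r c Y) :
    ∀ (d s t : ℕ), (s, t) ∈ Y → 1 ≤ t - d → (s, t - d) ∈ Y := by
  intro d
  induction d with
  | zero => intro s t hmem _; simpa using hmem
  | succ d ih =>
    intro s t hmem hd
    have h1 : (s, t - d) ∈ Y := ih s t hmem (by omega)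
    have h2 := (hY.2 _ h1).2 (by omega)
    have : t - d - 1 = t - (d+1) := by omega
    rwa [this] at h2

lemma coord_pos (hY : IsYoungDiagram r c Y) {p : ℕ × ℕ} (hp : p ∈ Y) :
    1 ≤ p.1 ∧ 1 ≤ p.2 := by
  have := hY.1 hp
  rw [Finset.mem_product, Finset.mem_Icc, Finset.mem_Icc] at this
  exact ⟨this.1.1, this.2.1⟩

lemma row_down' (hY : IsYoungDiagram r c Y) {s t s' : ℕ} (hmem : (s, t) ∈ Y)
    (h1 : 1 ≤ s') (h2 : s' ≤ s) : (s', t) ∈ Y := by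
  have := row_down hY (s - s') s t hmem (by omega)
  rwa [show s - (s - s') = s' by omega] at this

lemma col_down' (hY : IsYoungDiagram r c Y) {s t t' : ℕ} (hmem : (s, t) ∈ Y)
    (h1 : 1 ≤ t') (h2 : t' ≤ t) : (s, t') ∈ Y := by
  have := col_down hY (t - t') s t hmem (by omega)
  rwa [show t - (t - t') = t' by omega] at this

lemma steps_row_injOn (hY : IsYoungDiagram r c Y) :
    Set.InjOn Prod.fst ((steps Y : Finset (ℕ × ℕ)) : Set (ℕ × ℕ)) := by
  intro p hp q hq hpq
  simp only [Finset.coe_filter, steps, Set.mem_setOf_eq, Finset.mem_coe, Finset.mem_filter] at hp hq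
  rcases lt_trichotomy p.2 q.2 with hlt | heq | hgt
  · exfalso
    have hq1 : (q.1, q.2) ∈ Y := hq.1
    have : (q.1, p.2 + 1) ∈ Y := col_down' hY hq1 (by omega) (by omega)
    rw [← hpq] at this
    exact hp.2.2 this
  · exact Prod.ext hpq heq
  · exfalso
    have hp1 : (p.1, p.2) ∈ Y := hp.1
    have : (p.1, q.2 + 1) ∈ Y := col_down' hY hp1 (by omega) (by omega)
    rw [hpq] at this
    exact hq.2.2 this


/-- **Theorem (lower bound).** For all positive integers `i, j, z` and every
Young diagram `Y` with `z` steps: if `z ≥ binomial (i+j) i`, then there exists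
no `(i,j)`-local cover of `Y` by generalized rectangles. -/
theorem young_no_local_cover_of_steps_ge_choose
    (i j z r c : ℕ) (hi : 0 < i) (hj : 0 < j) (hz : 0 < z) (hr : 0 < r) (hc : 0 < c)
    (Y : Finset (ℕ × ℕ)) (hY : IsYoungDiagram r c Y)
    (hsteps : (steps Y).card = z) (h : Nat.choose (i + j) i ≤ z) :
    ¬ ∃ C : Finset (Finset (ℕ × ℕ)), IsCover Y C ∧ IsLocalCover C i j := by
  classical
  rintro ⟨C, hC, hL⟩
  set m := (i+j).choose i with hm
  -- the rows of the steps
  set RS : Finset ℕ := (steps Y).image Prod.fst with hRS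
  have hRScard : RS.card = z := by
    rw [hRS, Finset.card_image_of_injOn (steps_row_injOn hY), hsteps]
  have hmz : m ≤ z := h
  set serow : Fin z ↪o ℕ := RS.orderEmbOfFin hRScard with hse
  set srow : Fin m → ℕ := fun k => serow (Fin.castLE hmz k) with hsrow
  have hspec : ∀ k : Fin m, ∃ t : ℕ, (srow k, t) ∈ steps Y := by
    intro k
    have hmem : srow k ∈ RS := by
      rw [hsrow]
      exact Finset.orderEmbOfFin_mem RS hRScard _
    rw [hRS] at hmem
    obtain ⟨p, hp, hp2⟩ := Finset.mem_image.1 hmem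
    exact ⟨p.2, by rwa [← hp2, Prod.mk.eta]⟩
  set tcol : Fin m → ℕ := fun k => Classical.choose (hspec k) with htcol
  have hstep : ∀ k : Fin m, (srow k, tcol k) ∈ steps Y := fun k => Classical.choose_spec (hspec k)
  have hstepY : ∀ k : Fin m, (srow k, tcol k) ∈ Y := by
    intro k
    have := hstep k
    rw [steps, Finset.mem_filter] at this
    exact this.1
  have hstepG : ∀ k : Fin m, ((srow k) + 1, tcol k) ∉ Y := by
    intro k
    have := hstep k
    rw [steps, Finset.mem_filter] at this
    exact this.2.1
  have hrowmono : ∀ {k l : Fin m}, k < l → srow k < srow l := by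
    intro k l hkl
    rw [hsrow]
    exact (OrderEmbedding.lt_iff_lt _).2 (by exact hkl)
  have hrowmono' : ∀ {k l : Fin m}, k ≤ l → srow k ≤ srow l := by
    intro k l hkl
    rcases eq_or_lt_of_le hkl with rfl | hlt
    · exact le_refl _
    · exact le_of_lt (hrowmono hlt)
  -- cells
  have cell_mem : ∀ {k l : Fin m}, k ≤ l → (srow k, tcol l) ∈ Y := by
    intro k l hkl
    have h1 := coord_pos (Y := Y) hY (hstepY k)
    exact row_down' hY (hstepY l) h1.1 (hrowmono' hkl)
  have cell_not_mem : ∀ {k l : Fin m}, l < k → (srow k, tcol l) ∉ Y := by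
    intro k l hkl hmem
    have h2 : (srow l + 1, tcol l) ∈ Y :=
      row_down' hY hmem (by omega) (by have := hrowmono hkl; omega)
    exact hstepG l h2
  -- the chain system
  set U : Fin m → Finset (Finset (ℕ × ℕ)) :=
    fun k => C.filter (fun R => ∃ p ∈ R, p.1 = srow k) with hU
  set V : Fin m → Finset (Finset (ℕ × ℕ)) :=
    fun l => C.filter (fun R => ∃ p ∈ R, p.2 = tcol l) with hV
  have hUcard : ∀ k, (U k).card ≤ i := fun k => hL.1 _
  have hVcard : ∀ l, (V l).card ≤ j := fun l => hL.2 _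
  have hNE : ∀ (k l : Fin m), k ≤ l → ((U k) ∩ (V l)).Nonempty := by
    intro k l hkl
    have hcell := cell_mem hkl
    rw [hC.2] at hcell
    rw [Finset.mem_sup] at hcell
    obtain ⟨R, hRC, hmemR⟩ := hcell
    refine ⟨R, Finset.mem_inter.2 ⟨?_, ?_⟩⟩
    · exact Finset.mem_filter.2 ⟨hRC, ⟨_, hmemR, rfl⟩⟩
    · exact Finset.mem_filter.2 ⟨hRC, ⟨_, hmemR, rfl⟩⟩
  have hEM : ∀ (k l : Fin m), l < k → (U k) ∩ (V l) = ∅ := by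
    intro k l hkl
    rw [Finset.eq_empty_iff_forall_notMem]
    intro R hR
    rw [Finset.mem_inter, hU, hV, Finset.mem_filter, Finset.mem_filter] at hR
    obtain ⟨⟨hRC, p, hpR, hp1⟩, ⟨-, q, hqR, hq2⟩⟩ := hR
    obtain ⟨hsub, S, T, rfl⟩ := hC.1 R hRC
    rw [Finset.mem_product] at hpR hqR
    have : (srow k, tcol l) ∈ S ×ˢ T :=
      Finset.mem_product.2 ⟨hp1 ▸ hpR.1, hq2 ▸ hqR.2⟩
    exact cell_not_mem hkl (hsub this)
  -- convert ground set to ℕ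
  set ν : Finset (ℕ × ℕ) → ℕ := fun R => C.toList.idxOf R with hν
  set U₀ : Fin m → Finset ℕ := fun k => (U k).image ν with hU₀
  set V₀ : Fin m → Finset ℕ := fun l => (V l).image ν with hV₀
  have hfinal := YoungLB.chain i j m U₀ V₀
    (fun k => le_trans Finset.card_image_le (hUcard k))
    (fun l => le_trans Finset.card_image_le (hVcard l))
    (fun k l hkl => by
      obtain ⟨R, hR⟩ := hNE k l hkl
      rw [Finset.mem_inter] at hR
      exact ⟨ν R, Finset.mem_inter.2 ⟨Finset.mem_image_of_mem _ hR.1,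
        Finset.mem_image_of_mem _ hR.2⟩⟩)
    (fun k l hkl => by
      rw [Finset.eq_empty_iff_forall_notMem]
      intro x hx
      rw [Finset.mem_inter, hU₀, hV₀] at hx
      obtain ⟨hx1, hx2⟩ := hx
      obtain ⟨R, hRU, hRx⟩ := Finset.mem_image.1 hx1
      obtain ⟨R', hRV, hRx'⟩ := Finset.mem_image.1 hx2
      have hRC : R ∈ C := (Finset.mem_filter.1 hRU).1
      have hRC' : R' ∈ C := (Finset.mem_filter.1 hRV).1
      have : R = R' := by
        have := hRx.trans hRx'.symm
        rw [hν] at this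
        exact (List.idxOf_inj (Finset.mem_toList.2 hRC)).1 this
      subst this
      have : R ∈ (U k) ∩ (V l) := Finset.mem_inter.2 ⟨hRU, hRV⟩
      rw [hEM k l hkl] at this
      exact absurd this (Finset.notMem_empty R))
  rw [← hm] at hfinal
  exact absurd hfinal (lt_irrefl m)
end

section
/- Let i, j, z be positive integers and let Y be any Young diagram with z steps. Then Y admits an (i, j)-local cover by generalized rectangles if and only if the staircase Young diagram Y_z = {(s, t) ∈ [z] × [z] : s + t ≤ z + 1} admits an (i, j)-local cover consisting of exactly z generalized rectangles. -/
/-- The staircase Young diagram `Y_z = {(s,t) ∈ [z] × [z] : s + t ≤ z + 1}`. -/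
def staircase (z : ℕ) : Finset (ℕ × ℕ) :=
  (Finset.Icc 1 z ×ˢ Finset.Icc 1 z).filter fun p => p.1 + p.2 ≤ z + 1

open Finset

/-- Row-count function: number of steps in row ≥ s. -/
def rowCnt (Y : Finset (ℕ × ℕ)) (s : ℕ) : ℕ := ((steps Y).filter fun p => s ≤ p.1).card

def colCnt (Y : Finset (ℕ × ℕ)) (t : ℕ) : ℕ := ((steps Y).filter fun p => t ≤ p.2).card

lemma mem_staircase {z : ℕ} {p : ℕ × ℕ} :
    p ∈ staircase z ↔ 1 ≤ p.1 ∧ p.1 ≤ z ∧ 1 ≤ p.2 ∧ p.2 ≤ z ∧ p.1 + p.2 ≤ z + 1 := by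
  simp only [staircase, mem_filter, mem_product, mem_Icc]
  tauto

section young
variable {r c : ℕ} {Y : Finset (ℕ × ℕ)} (hY : IsYoungDiagram r c Y)
include hY

lemma ydc_row : ∀ d s t, (s + d, t) ∈ Y → 1 ≤ s → (s, t) ∈ Y := by
  intro d
  induction d with
  | zero => intro s t h _; simpa using h
  | succ d ih =>
    intro s t h hs
    have h2 : 2 ≤ s + (d + 1) := by omega
    have h3 := ((hY.2 _ h).1 h2)
    simp only at h3
    have e : s + (d + 1) - 1 = s + d := by omega
    rw [e] at h3
    exact ih s t h3 hs

lemma ydc_col : ∀ d s t, (s, t + d) ∈ Y → 1 ≤ t → (s, t) ∈ Y := by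
  intro d
  induction d with
  | zero => intro s t h _; simpa using h
  | succ d ih =>
    intro s t h ht
    have h2 : 2 ≤ t + (d + 1) := by omega
    have h3 := ((hY.2 _ h).2 h2)
    simp only at h3
    have e : t + (d + 1) - 1 = t + d := by omega
    rw [e] at h3
    exact ih s t h3 ht

/-- Downward closure of a Young diagram. -/
lemma ydc {s t u v : ℕ} (h : (s, t) ∈ Y) (hu : 1 ≤ u) (hus : u ≤ s) (hv : 1 ≤ v)
    (hvt : v ≤ t) : (u, v) ∈ Y := by
  have h1 : (u, t) ∈ Y := by
    have e : s = u + (s - u) := by omega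
    exact ydc_row hY (s - u) u t (by rw [← e]; exact h) hu
  have e : t = v + (t - v) := by omega
  exact ydc_col hY (t - v) u v (by rw [← e]; exact h1) hv

lemma coords_pos {p : ℕ × ℕ} (hp : p ∈ Y) : 1 ≤ p.1 ∧ 1 ≤ p.2 := by
  have := hY.1 hp
  simp only [mem_product, mem_Icc] at this
  exact ⟨this.1.1, this.2.1⟩

omit hY in
/-- Every cell of `Y` has a step weakly above-right of it. -/
lemma exists_step_ge {s t : ℕ} (h : (s, t) ∈ Y) :
    ∃ q ∈ steps Y, s ≤ q.1 ∧ t ≤ q.2 := by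
  classical
  set F := Y.filter (fun q => s ≤ q.1 ∧ t ≤ q.2) with hF
  have hne : F.Nonempty := ⟨(s, t), by simp [hF, h]⟩
  obtain ⟨q, hq, hmax⟩ := F.exists_max_image (fun q => q.1 + q.2) hne
  simp only [hF, mem_filter] at hq
  refine ⟨q, ?_, hq.2.1, hq.2.2⟩
  simp only [steps, mem_filter]
  refine ⟨hq.1, ?_, ?_⟩
  · intro hmem
    have hm : (q.1 + 1, q.2) ∈ F := by
      simp only [hF, mem_filter]
      exact ⟨hmem, by omega, hq.2.2⟩
    have := hmax _ hm
    simp only at this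
    omega
  · intro hmem
    have hm : (q.1, q.2 + 1) ∈ F := by
      simp only [hF, mem_filter]
      exact ⟨hmem, hq.2.1, by omega⟩
    have := hmax _ hm
    simp only at this
    omega

/-- Every step is weakly above-right (in at least one coordinate) of every cell. -/
lemma step_cover {s t : ℕ} (h : (s, t) ∈ Y) {q : ℕ × ℕ} (hq : q ∈ steps Y) :
    s ≤ q.1 ∨ t ≤ q.2 := by
  by_contra hcon
  push_neg at hcon
  simp only [steps, mem_filter] at hq
  have hv := coords_pos hY hq.1
  have : (q.1 + 1, q.2) ∈ Y := ydc hY h (by omega) (by omega) hv.2 (by omega)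
  exact hq.2.1 this

variable {z : ℕ} (hsteps : (steps Y).card = z)
include hsteps

/-- Key membership criterion via step counts. -/
lemma mem_iff_cnt {s t : ℕ} (hs : 1 ≤ s) (ht : 1 ≤ t) :
    (s, t) ∈ Y ↔ z + 1 ≤ rowCnt Y s + colCnt Y t := by
  classical
  set A := (steps Y).filter (fun p => s ≤ p.1) with hA
  set B := (steps Y).filter (fun p => t ≤ p.2) with hB
  have hcui : (A ∪ B).card + (A ∩ B).card = A.card + B.card :=
    Finset.card_union_add_card_inter A B
  have hRC : rowCnt Y s = A.card := rfl
  have hCC : colCnt Y t = B.card := rfl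
  constructor
  · intro h
    have hAB : A ∪ B = steps Y := by
      apply Finset.Subset.antisymm
      · exact Finset.union_subset (filter_subset _ _) (filter_subset _ _)
      · intro q hq
        rcases step_cover hY h hq with h1 | h1
        · exact Finset.mem_union_left _ (mem_filter.mpr ⟨hq, h1⟩)
        · exact Finset.mem_union_right _ (mem_filter.mpr ⟨hq, h1⟩)
    obtain ⟨q, hq, hq1, hq2⟩ := exists_step_ge h
    have hint : q ∈ A ∩ B := mem_inter.mpr ⟨mem_filter.mpr ⟨hq, hq1⟩, mem_filter.mpr ⟨hq, hq2⟩⟩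
    have : 1 ≤ (A ∩ B).card := Finset.card_pos.mpr ⟨q, hint⟩
    rw [hAB, hsteps] at hcui
    omega
  · intro h
    have hle : (A ∪ B).card ≤ z := by
      rw [← hsteps]
      exact Finset.card_le_card (Finset.union_subset (filter_subset _ _) (filter_subset _ _))
    have : 1 ≤ (A ∩ B).card := by omega
    obtain ⟨q, hq⟩ := Finset.card_pos.mp this
    rw [Finset.mem_inter, hA, hB, mem_filter, mem_filter] at hq
    have hqY : q ∈ Y := (Finset.filter_subset _ Y) hq.1.1
    exact ydc hY (show (q.1, q.2) ∈ Y from hqY) hs hq.1.2 ht hq.2.2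

omit hsteps in
lemma steps_inj_fst : Set.InjOn Prod.fst (steps Y : Set (ℕ × ℕ)) := by
  intro p hp q hq hpq
  simp only [Finset.mem_coe, steps, mem_filter] at hp hq
  have hpv := coords_pos hY hp.1
  have hqv := coords_pos hY hq.1
  rcases lt_trichotomy p.2 q.2 with h | h | h
  · exfalso
    have : (p.1, p.2 + 1) ∈ Y := by
      rw [hpq]
      exact ydc hY (show (q.1, q.2) ∈ Y from hq.1) (by omega) le_rfl (by omega) (by omega)
    exact hp.2.2 this
  · exact Prod.ext hpq h
  · exfalso
    have : (q.1, q.2 + 1) ∈ Y := by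
      rw [← hpq]
      exact ydc hY (show (p.1, p.2) ∈ Y from hp.1) (by omega) le_rfl (by omega) (by omega)
    exact hq.2.2 this

omit hsteps in
lemma steps_inj_snd : Set.InjOn Prod.snd (steps Y : Set (ℕ × ℕ)) := by
  intro p hp q hq hpq
  simp only [Finset.mem_coe, steps, mem_filter] at hp hq
  have hpv := coords_pos hY hp.1
  have hqv := coords_pos hY hq.1
  rcases lt_trichotomy p.1 q.1 with h | h | h
  · exfalso
    have : (p.1 + 1, p.2) ∈ Y := by
      rw [hpq]
      exact ydc hY (show (q.1, q.2) ∈ Y from hq.1) (by omega) (by omega) (by omega) le_rfl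
    exact hp.2.1 this
  · exact Prod.ext h hpq
  · exfalso
    have : (q.1 + 1, q.2) ∈ Y := by
      rw [← hpq]
      exact ydc hY (show (p.1, p.2) ∈ Y from hp.1) (by omega) (by omega) (by omega) le_rfl
    exact hq.2.1 this

omit hsteps in
lemma rowCnt_lt {u u' : ℕ} (hu : ∃ p ∈ steps Y, p.1 = u) (h : u < u') :
    rowCnt Y u' < rowCnt Y u := by
  classical
  apply Finset.card_lt_card
  rw [Finset.ssubset_iff_of_subset
    (by intro p hp; simp only [mem_filter] at hp ⊢; exact ⟨hp.1, by omega⟩)]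
  obtain ⟨p, hp, hpu⟩ := hu
  refine ⟨p, mem_filter.mpr ⟨hp, by omega⟩, ?_⟩
  simp only [mem_filter, not_and, not_le]
  intro _; omega

omit hY hsteps in
lemma colCnt_lt {v v' : ℕ} (hv : ∃ p ∈ steps Y, p.2 = v) (h : v < v') :
    colCnt Y v' < colCnt Y v := by
  classical
  apply Finset.card_lt_card
  rw [Finset.ssubset_iff_of_subset
    (by intro p hp; simp only [mem_filter] at hp ⊢; exact ⟨hp.1, by omega⟩)]
  obtain ⟨p, hp, hpv⟩ := hv
  refine ⟨p, mem_filter.mpr ⟨hp, by omega⟩, ?_⟩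
  simp only [mem_filter, not_and, not_le]
  intro _; omega

lemma rowCnt_surj {k : ℕ} (hk1 : 1 ≤ k) (hkz : k ≤ z) :
    ∃ u, (∃ p ∈ steps Y, p.1 = u) ∧ rowCnt Y u = k := by
  classical
  set RS := (steps Y).image Prod.fst with hRS
  have hcard : RS.card = z := by
    rw [hRS, Finset.card_image_of_injOn (steps_inj_fst hY)]; exact hsteps
  have hrsmem : ∀ u ∈ RS, ∃ p ∈ steps Y, p.1 = u := fun u hu => Finset.mem_image.mp hu
  have hinj : Set.InjOn (rowCnt Y) (RS : Set ℕ) := by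
    intro u hu u' hu' he
    by_contra hne
    rcases lt_or_gt_of_ne hne with h | h
    · have := rowCnt_lt hY (hrsmem u (Finset.mem_coe.mp hu)) h; omega
    · have := rowCnt_lt hY (hrsmem u' (Finset.mem_coe.mp hu')) h; omega
  have hsub : RS.image (rowCnt Y) ⊆ Finset.Icc 1 z := by
    intro k hk
    obtain ⟨u, hu, huk⟩ := Finset.mem_image.mp hk
    obtain ⟨p, hp, hpu⟩ := hrsmem u hu
    rw [Finset.mem_Icc, ← huk]
    constructor
    · apply Finset.card_pos.mpr
      exact ⟨p, mem_filter.mpr ⟨hp, by omega⟩⟩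
    · rw [← hsteps]; exact Finset.card_le_card (filter_subset _ _)
  have heq : RS.image (rowCnt Y) = Finset.Icc 1 z := by
    apply Finset.eq_of_subset_of_card_le hsub
    rw [Finset.card_image_of_injOn hinj, hcard, Nat.card_Icc]
    omega
  have : k ∈ RS.image (rowCnt Y) := by rw [heq, Finset.mem_Icc]; omega
  obtain ⟨u, hu, huk⟩ := Finset.mem_image.mp this
  exact ⟨u, hrsmem u hu, huk⟩

lemma colCnt_surj {k : ℕ} (hk1 : 1 ≤ k) (hkz : k ≤ z) :
    ∃ v, (∃ p ∈ steps Y, p.2 = v) ∧ colCnt Y v = k := by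
  classical
  set CS := (steps Y).image Prod.snd with hCS
  have hcard : CS.card = z := by
    rw [hCS, Finset.card_image_of_injOn (steps_inj_snd hY)]; exact hsteps
  have hcsmem : ∀ v ∈ CS, ∃ p ∈ steps Y, p.2 = v := fun v hv => Finset.mem_image.mp hv
  have hinj : Set.InjOn (colCnt Y) (CS : Set ℕ) := by
    intro v hv v' hv' he
    by_contra hne
    rcases lt_or_gt_of_ne hne with h | h
    · have := colCnt_lt (hcsmem v (Finset.mem_coe.mp hv)) h; omega
    · have := colCnt_lt (hcsmem v' (Finset.mem_coe.mp hv')) h; omega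
  have hsub : CS.image (colCnt Y) ⊆ Finset.Icc 1 z := by
    intro k hk
    obtain ⟨v, hv, hvk⟩ := Finset.mem_image.mp hk
    obtain ⟨p, hp, hpv⟩ := hcsmem v hv
    rw [Finset.mem_Icc, ← hvk]
    constructor
    · apply Finset.card_pos.mpr
      exact ⟨p, mem_filter.mpr ⟨hp, by omega⟩⟩
    · rw [← hsteps]; exact Finset.card_le_card (filter_subset _ _)
  have heq : CS.image (colCnt Y) = Finset.Icc 1 z := by
    apply Finset.eq_of_subset_of_card_le hsub
    rw [Finset.card_image_of_injOn hinj, hcard, Nat.card_Icc]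
    omega
  have : k ∈ CS.image (colCnt Y) := by rw [heq, Finset.mem_Icc]; omega
  obtain ⟨v, hv, hvk⟩ := Finset.mem_image.mp this
  exact ⟨v, hcsmem v hv, hvk⟩

end young

set_option maxHeartbeats 800000 in
/-- Transfer a local cover along row/column maps. -/
lemma transfer_cover (Y₁ Y₂ : Finset (ℕ × ℕ)) (f g : ℕ → ℕ)
    (hfwd : ∀ p ∈ Y₁, (f p.1, g p.2) ∈ Y₂)
    (hback : ∀ s t : ℕ, (∃ t₀, (s, t₀) ∈ Y₁) → (∃ s₀, (s₀, t) ∈ Y₁) →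
      (f s, g t) ∈ Y₂ → (s, t) ∈ Y₁)
    {C : Finset (Finset (ℕ × ℕ))} {i j : ℕ}
    (hC : IsCover Y₂ C) (hL : IsLocalCover C i j) :
    ∃ C' : Finset (Finset (ℕ × ℕ)), IsCover Y₁ C' ∧ IsLocalCover C' i j := by
  classical
  set RS := Y₁.image Prod.fst with hRS
  set CS := Y₁.image Prod.snd with hCS
  set pb : Finset (ℕ × ℕ) → Finset (ℕ × ℕ) := fun R =>
    (RS.filter fun s => ∃ p ∈ R, p.1 = f s) ×ˢ (CS.filter fun t => ∃ p ∈ R, p.2 = g t)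
    with hpb
  have hpbsub : ∀ R ∈ C, pb R ⊆ Y₁ := by
    intro R hR q hq
    rw [hpb, Finset.mem_product, mem_filter, mem_filter] at hq
    obtain ⟨⟨hq1, p₁, hp₁, hp₁e⟩, hq2, p₂, hp₂, hp₂e⟩ := hq
    obtain ⟨hRsub, S, T, hST⟩ := hC.1 R hR
    have h1 : (f q.1, g q.2) ∈ R := by
      rw [hST] at hp₁ hp₂ ⊢
      rw [Finset.mem_product] at hp₁ hp₂ ⊢
      exact ⟨by rw [← hp₁e]; exact hp₁.1, by rw [← hp₂e]; exact hp₂.2⟩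
    have h2 : (f q.1, g q.2) ∈ Y₂ := hRsub h1
    have hrow : ∃ t₀, (q.1, t₀) ∈ Y₁ := by
      obtain ⟨w, hw, hwe⟩ := Finset.mem_image.mp hq1
      exact ⟨w.2, by rw [← hwe]; exact hw⟩
    have hcol : ∃ s₀, (s₀, q.2) ∈ Y₁ := by
      obtain ⟨w, hw, hwe⟩ := Finset.mem_image.mp hq2
      exact ⟨w.1, by rw [← hwe]; exact hw⟩
    have := hback q.1 q.2 hrow hcol h2
    exact (show ((q.1, q.2) : ℕ × ℕ) = q from rfl) ▸ this
  refine ⟨C.image pb, ⟨?_, ?_⟩, ?_, ?_⟩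
  · intro R' hR'
    obtain ⟨R, hR, hRe⟩ := Finset.mem_image.mp hR'
    exact ⟨by rw [← hRe]; exact hpbsub R hR, _, _, hRe.symm⟩
  · apply Finset.Subset.antisymm
    · intro q hq
      have h2 : (f q.1, g q.2) ∈ Y₂ := hfwd q hq
      rw [hC.2, Finset.mem_sup] at h2
      obtain ⟨R, hR, hqR⟩ := h2
      rw [Finset.mem_sup]
      refine ⟨pb R, Finset.mem_image_of_mem pb hR, ?_⟩
      show q ∈ pb R
      have : ((q.1, q.2) : ℕ × ℕ) ∈ pb R := by
        rw [hpb, Finset.mem_product, mem_filter, mem_filter]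
        exact ⟨⟨Finset.mem_image_of_mem Prod.fst hq, (f q.1, g q.2), hqR, rfl⟩,
          ⟨Finset.mem_image_of_mem Prod.snd hq, (f q.1, g q.2), hqR, rfl⟩⟩
      exact this
    · intro q hq
      rw [Finset.mem_sup] at hq
      obtain ⟨R', hR', hqR'⟩ := hq
      obtain ⟨R, hR, hRe⟩ := Finset.mem_image.mp hR'
      exact hpbsub R hR (by rw [hRe]; exact hqR')
  · intro s
    calc ((C.image pb).filter fun R' => ∃ p ∈ R', p.1 = s).card
        = ((C.filter fun R => ∃ p ∈ pb R, p.1 = s).image pb).card := by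
          rw [Finset.filter_image]
      _ ≤ (C.filter fun R => ∃ p ∈ pb R, p.1 = s).card := Finset.card_image_le
      _ ≤ (C.filter fun R => ∃ p ∈ R, p.1 = f s).card := by
          apply Finset.card_le_card
          intro R hR
          rw [mem_filter] at hR ⊢
          obtain ⟨hRC, p, hp, hpe⟩ := hR
          rw [hpb, Finset.mem_product, mem_filter] at hp
          obtain ⟨p₁, hp₁, hp₁e⟩ := hp.1.2
          exact ⟨hRC, p₁, hp₁, by rw [hp₁e, hpe]⟩
      _ ≤ i := hL.1 (f s)
  · intro t
    calc ((C.image pb).filter fun R' => ∃ p ∈ R', p.2 = t).card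
        = ((C.filter fun R => ∃ p ∈ pb R, p.2 = t).image pb).card := by
          rw [Finset.filter_image]
      _ ≤ (C.filter fun R => ∃ p ∈ pb R, p.2 = t).card := Finset.card_image_le
      _ ≤ (C.filter fun R => ∃ p ∈ R, p.2 = g t).card := by
          apply Finset.card_le_card
          intro R hR
          rw [mem_filter] at hR ⊢
          obtain ⟨hRC, p, hp, hpe⟩ := hR
          rw [hpb, Finset.mem_product, mem_filter, mem_filter] at hp
          obtain ⟨p₂, hp₂, hp₂e⟩ := hp.2.2
          exact ⟨hRC, p₂, hp₂, by rw [hp₂e, hpe]⟩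
      _ ≤ j := hL.2 (g t)

set_option maxHeartbeats 800000 in
/-- Any local cover of the staircase can be merged into one with exactly `z`
rectangles, preserving locality. -/
lemma merge_staircase {z i j : ℕ} (hz : 0 < z) {C : Finset (Finset (ℕ × ℕ))}
    (hC : IsCover (staircase z) C) (hL : IsLocalCover C i j) :
    ∃ C' : Finset (Finset (ℕ × ℕ)), IsCover (staircase z) C' ∧ IsLocalCover C' i j ∧
      C'.card = z := by
  classical
  set S : ℕ → Finset ℕ := fun g =>
    (Finset.Icc 1 z).filter fun s =>
      ∃ R ∈ C, R.sup (fun p => p.1) = g ∧ ∃ p ∈ R, p.1 = s with hS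
  set T : ℕ → Finset ℕ := fun g =>
    (Finset.Icc 1 z).filter fun t =>
      ∃ R ∈ C, R.sup (fun p => p.1) = g ∧ ∃ p ∈ R, p.2 = t with hT
  set M : ℕ → Finset (ℕ × ℕ) := fun g => S g ×ˢ T g with hM
  -- basic facts
  have hSle : ∀ g s, s ∈ S g → s ≤ g := by
    intro g s hs
    rw [hS, mem_filter] at hs
    obtain ⟨_, R, hR, hsup, p, hp, hpe⟩ := hs
    rw [← hsup, ← hpe]
    exact Finset.le_sup (f := fun p => p.1) hp
  have hTle : ∀ g t, t ∈ T g → g + t ≤ z + 1 := by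
    intro g t ht
    rw [hT, mem_filter] at ht
    obtain ⟨_, R, hR, hsup, p, hp, hpe⟩ := ht
    have hne : R.Nonempty := ⟨p, hp⟩
    obtain ⟨q, hq, hqe⟩ := R.exists_mem_eq_sup hne (fun p => p.1)
    obtain ⟨hRsub, S', T', hST⟩ := hC.1 R hR
    have hgt : (g, t) ∈ R := by
      rw [hST, Finset.mem_product]
      rw [hST, Finset.mem_product] at hq hp
      constructor
      · rw [← hsup, hqe]; exact hq.1
      · rw [← hpe]; exact hp.2
    have := mem_staircase.mp (hRsub hgt)
    simp only at this
    omega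
  have hMsub : ∀ g, M g ⊆ staircase z := by
    intro g q hq
    rw [hM, Finset.mem_product] at hq
    have h1 := hSle g q.1 hq.1
    have h2 := hTle g q.2 hq.2
    have hq1 : q.1 ∈ Finset.Icc 1 z := Finset.mem_of_mem_filter _ hq.1
    have hq2 : q.2 ∈ Finset.Icc 1 z := Finset.mem_of_mem_filter _ hq.2
    rw [Finset.mem_Icc] at hq1 hq2
    exact mem_staircase.mpr ⟨hq1.1, hq1.2, hq2.1, hq2.2, by omega⟩
  -- group of a rectangle covering a point
  have hgrp : ∀ q ∈ staircase z, ∀ R ∈ C, q ∈ R →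
      1 ≤ R.sup (fun p => p.1) ∧ R.sup (fun p => p.1) ≤ z ∧
        q.1 ∈ S (R.sup fun p => p.1) ∧ q.2 ∈ T (R.sup fun p => p.1) := by
    intro q hq R hR hqR
    have hqs := mem_staircase.mp hq
    have hne : R.Nonempty := ⟨q, hqR⟩
    obtain ⟨w, hw, hwe⟩ := R.exists_mem_eq_sup hne (fun p => p.1)
    have hwY := mem_staircase.mp ((hC.1 R hR).1 hw)
    have hg1 : 1 ≤ R.sup (fun p => p.1) :=
      le_trans hqs.1 (Finset.le_sup (f := fun p => p.1) hqR)
    have hg2 : R.sup (fun p => p.1) ≤ z := by rw [hwe]; exact hwY.2.1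
    refine ⟨hg1, hg2, ?_, ?_⟩
    · rw [hS, mem_filter, Finset.mem_Icc]
      exact ⟨⟨hqs.1, hqs.2.1⟩, R, hR, rfl, q, hqR, rfl⟩
    · rw [hT, mem_filter, Finset.mem_Icc]
      exact ⟨⟨hqs.2.2.1, hqs.2.2.2.1⟩, R, hR, rfl, q, hqR, rfl⟩
  -- each step (g, z+1-g) belongs to M g
  have hstepmem : ∀ g, 1 ≤ g → g ≤ z → (g, z + 1 - g) ∈ M g := by
    intro g hg1 hgz
    have hstep : ((g, z + 1 - g) : ℕ × ℕ) ∈ staircase z :=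
      mem_staircase.mpr ⟨hg1, hgz, by omega, by omega, by omega⟩
    have : (g, z + 1 - g) ∈ C.sup id := by rw [← hC.2]; exact hstep
    rw [Finset.mem_sup] at this
    obtain ⟨R, hR, hqR⟩ := this
    simp only [id_eq] at hqR
    have h4 := hgrp _ hstep R hR hqR
    -- the sup of R is exactly g
    have hsup : R.sup (fun p => p.1) = g := by
      have hge : g ≤ R.sup (fun p => p.1) := Finset.le_sup (f := fun p => p.1) hqR
      have hne : R.Nonempty := ⟨_, hqR⟩
      obtain ⟨w, hw, hwe⟩ := R.exists_mem_eq_sup hne (fun p => p.1)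
      obtain ⟨hRsub, S', T', hST⟩ := hC.1 R hR
      have hwg : (R.sup (fun p => p.1), z + 1 - g) ∈ R := by
        have hw1 : w.1 ∈ S' := by rw [hST, Finset.mem_product] at hw; exact hw.1
        have hq2 : (z + 1 - g) ∈ T' := by
          rw [hST, Finset.mem_product] at hqR; exact hqR.2
        rw [hwe, hST, Finset.mem_product]
        exact ⟨hw1, hq2⟩
      have := mem_staircase.mp (hRsub hwg)
      simp only at this
      omega
    rw [hM, Finset.mem_product]
    rw [hsup] at h4
    exact ⟨h4.2.2.1, h4.2.2.2⟩
  set C' := (Finset.Icc 1 z).image M with hC'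
  have hMinj : Set.InjOn M (Finset.Icc 1 z : Set ℕ) := by
    intro g hg g' hg' he
    simp only [Finset.coe_Icc, Set.mem_Icc] at hg hg'
    have h1 : (g, z + 1 - g) ∈ M g' := by rw [← he]; exact hstepmem g hg.1 hg.2
    have h2 : (g', z + 1 - g') ∈ M g := by rw [he]; exact hstepmem g' hg'.1 hg'.2
    rw [hM, Finset.mem_product] at h1 h2
    have := hSle g' g h1.1
    have := hSle g g' h2.1
    omega
  refine ⟨C', ⟨?_, ?_⟩, ⟨?_, ?_⟩, ?_⟩
  · intro R' hR'
    obtain ⟨g, hg, hge⟩ := Finset.mem_image.mp hR'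
    exact ⟨by rw [← hge]; exact hMsub g, _, _, hge.symm⟩
  · apply Finset.Subset.antisymm
    · intro q hq
      have hq' : q ∈ C.sup id := by rw [← hC.2]; exact hq
      rw [Finset.mem_sup] at hq'
      obtain ⟨R, hR, hqR⟩ := hq'
      have h4 := hgrp q hq R hR hqR
      rw [Finset.mem_sup]
      refine ⟨M (R.sup fun p => p.1), Finset.mem_image_of_mem M ?_, ?_⟩
      · rw [Finset.mem_Icc]; exact ⟨h4.1, h4.2.1⟩
      · show q ∈ M (R.sup fun p => p.1)
        have : ((q.1, q.2) : ℕ × ℕ) ∈ M (R.sup fun p => p.1) := by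
          rw [hM, Finset.mem_product]
          exact ⟨h4.2.2.1, h4.2.2.2⟩
        exact this
    · intro q hq
      rw [Finset.mem_sup] at hq
      obtain ⟨R', hR', hqR'⟩ := hq
      obtain ⟨g, hg, hge⟩ := Finset.mem_image.mp hR'
      exact hMsub g (by rw [hge]; exact hqR')
  · -- row locality
    intro s
    set G := (Finset.Icc 1 z).filter (fun g => ∃ p ∈ M g, p.1 = s) with hG
    have hsub1 : C'.filter (fun R' => ∃ p ∈ R', p.1 = s) ⊆ G.image M := by
      rw [hC', Finset.filter_image]
    have hwit : ∀ g : ℕ, ∃ R, g ∈ G → R ∈ C ∧ R.sup (fun p => p.1) = g ∧ ∃ p ∈ R, p.1 = s := by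
      intro g
      by_cases hg : g ∈ G
      · rw [hG, mem_filter] at hg
        obtain ⟨p, hp, hpe⟩ := hg.2
        rw [hM, Finset.mem_product] at hp
        have := hp.1
        rw [hS, mem_filter] at this
        obtain ⟨_, R, hR, hsup, p', hp', hp'e⟩ := this
        exact ⟨R, fun _ => ⟨hR, hsup, p', hp', by rw [hp'e, hpe]⟩⟩
      · exact ⟨∅, fun h => absurd h hg⟩
    choose w hw using hwit
    calc (C'.filter fun R' => ∃ p ∈ R', p.1 = s).card
        ≤ (G.image M).card := Finset.card_le_card hsub1
      _ ≤ G.card := Finset.card_image_le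
      _ ≤ (C.filter fun R => ∃ p ∈ R, p.1 = s).card := by
          apply Finset.card_le_card_of_injOn w
          · intro g hg
            obtain ⟨h1, h2, h3⟩ := hw g hg
            exact mem_filter.mpr ⟨h1, h3⟩
          · intro g hg g' hg' he
            have e1 := (hw g (Finset.mem_coe.mp hg)).2.1
            have e2 := (hw g' (Finset.mem_coe.mp hg')).2.1
            rw [← e1, ← e2, he]
      _ ≤ i := hL.1 s
  · -- column locality
    intro t
    set G := (Finset.Icc 1 z).filter (fun g => ∃ p ∈ M g, p.2 = t) with hG
    have hsub1 : C'.filter (fun R' => ∃ p ∈ R', p.2 = t) ⊆ G.image M := by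
      rw [hC', Finset.filter_image]
    have hwit : ∀ g : ℕ, ∃ R, g ∈ G → R ∈ C ∧ R.sup (fun p => p.1) = g ∧ ∃ p ∈ R, p.2 = t := by
      intro g
      by_cases hg : g ∈ G
      · rw [hG, mem_filter] at hg
        obtain ⟨p, hp, hpe⟩ := hg.2
        rw [hM, Finset.mem_product] at hp
        have := hp.2
        rw [hT, mem_filter] at this
        obtain ⟨_, R, hR, hsup, p', hp', hp'e⟩ := this
        exact ⟨R, fun _ => ⟨hR, hsup, p', hp', by rw [hp'e, hpe]⟩⟩
      · exact ⟨∅, fun h => absurd h hg⟩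
    choose w hw using hwit
    calc (C'.filter fun R' => ∃ p ∈ R', p.2 = t).card
        ≤ (G.image M).card := Finset.card_le_card hsub1
      _ ≤ G.card := Finset.card_image_le
      _ ≤ (C.filter fun R => ∃ p ∈ R, p.2 = t).card := by
          apply Finset.card_le_card_of_injOn w
          · intro g hg
            obtain ⟨h1, h2, h3⟩ := hw g hg
            exact mem_filter.mpr ⟨h1, h3⟩
          · intro g hg g' hg' he
            have e1 := (hw g (Finset.mem_coe.mp hg)).2.1
            have e2 := (hw g' (Finset.mem_coe.mp hg')).2.1
            rw [← e1, ← e2, he]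
      _ ≤ j := hL.2 t
  · rw [hC', Finset.card_image_of_injOn hMinj, Nat.card_Icc]
    omega

lemma rowCnt_bounds {r c z : ℕ} {Y : Finset (ℕ × ℕ)} (hY : IsYoungDiagram r c Y)
    (hsteps : (steps Y).card = z) {s t : ℕ} (h : (s, t) ∈ Y) :
    1 ≤ rowCnt Y s ∧ rowCnt Y s ≤ z := by
  constructor
  · obtain ⟨q, hq, hq1, _⟩ := exists_step_ge h
    exact Finset.card_pos.mpr ⟨q, mem_filter.mpr ⟨hq, hq1⟩⟩
  · rw [← hsteps]; exact Finset.card_le_card (filter_subset _ _)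

lemma colCnt_bounds {r c z : ℕ} {Y : Finset (ℕ × ℕ)} (hY : IsYoungDiagram r c Y)
    (hsteps : (steps Y).card = z) {s t : ℕ} (h : (s, t) ∈ Y) :
    1 ≤ colCnt Y t ∧ colCnt Y t ≤ z := by
  constructor
  · obtain ⟨q, hq, _, hq2⟩ := exists_step_ge h
    exact Finset.card_pos.mpr ⟨q, mem_filter.mpr ⟨hq, hq2⟩⟩
  · rw [← hsteps]; exact Finset.card_le_card (filter_subset _ _)

/-- **Lemma (reduction to the staircase).** Let `i, j, z` be positive integers
and let `Y` be any Young diagram with `z` steps. Then `Y` admits an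
`(i,j)`-local cover by generalized rectangles if and only if the staircase
`Y_z` admits an `(i,j)`-local cover consisting of exactly `z` generalized
rectangles. -/
theorem young_local_cover_iff_staircase_local_cover
    (i j z r c : ℕ) (hi : 0 < i) (hj : 0 < j) (hz : 0 < z) (hr : 0 < r) (hc : 0 < c)
    (Y : Finset (ℕ × ℕ)) (hY : IsYoungDiagram r c Y) (hsteps : (steps Y).card = z) :
    (∃ C : Finset (Finset (ℕ × ℕ)), IsCover Y C ∧ IsLocalCover C i j) ↔
      (∃ C : Finset (Finset (ℕ × ℕ)),
        IsCover (staircase z) C ∧ IsLocalCover C i j ∧ C.card = z) := by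
  classical
  constructor
  · rintro ⟨C, hC, hL⟩
    have hFex : ∀ s' : ℕ, ∃ u, 1 ≤ s' → s' ≤ z →
        (∃ p ∈ steps Y, p.1 = u) ∧ rowCnt Y u = z + 1 - s' := by
      intro s'
      by_cases h : 1 ≤ s' ∧ s' ≤ z
      · obtain ⟨u, hu⟩ := rowCnt_surj hY hsteps (k := z + 1 - s') (by omega) (by omega)
        exact ⟨u, fun _ _ => hu⟩
      · exact ⟨0, fun h1 h2 => absurd ⟨h1, h2⟩ h⟩
    have hGex : ∀ t' : ℕ, ∃ v, 1 ≤ t' → t' ≤ z →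
        (∃ p ∈ steps Y, p.2 = v) ∧ colCnt Y v = z + 1 - t' := by
      intro t'
      by_cases h : 1 ≤ t' ∧ t' ≤ z
      · obtain ⟨v, hv⟩ := colCnt_surj hY hsteps (k := z + 1 - t') (by omega) (by omega)
        exact ⟨v, fun _ _ => hv⟩
      · exact ⟨0, fun h1 h2 => absurd ⟨h1, h2⟩ h⟩
    choose F hF using hFex
    choose G hG using hGex
    have hfwd : ∀ p ∈ staircase z, (F p.1, G p.2) ∈ Y := by
      intro p hp
      have hps := mem_staircase.mp hp
      obtain ⟨⟨q1, hq1, hq1e⟩, hFc⟩ := hF p.1 hps.1 hps.2.1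
      obtain ⟨⟨q2, hq2, hq2e⟩, hGc⟩ := hG p.2 hps.2.2.1 hps.2.2.2.1
      have hu1 : 1 ≤ F p.1 := by
        have := (coords_pos hY ((filter_subset _ _) hq1)).1; omega
      have hv1 : 1 ≤ G p.2 := by
        have := (coords_pos hY ((filter_subset _ _) hq2)).2; omega
      exact (mem_iff_cnt hY hsteps hu1 hv1).mpr (by rw [hFc, hGc]; omega)
    have hback : ∀ s t : ℕ, (∃ t₀, (s, t₀) ∈ staircase z) → (∃ s₀, (s₀, t) ∈ staircase z) →
        (F s, G t) ∈ Y → (s, t) ∈ staircase z := by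
      intro s t ⟨t₀, ht₀⟩ ⟨s₀, hs₀⟩ hmem
      have h1 := mem_staircase.mp ht₀
      have h2 := mem_staircase.mp hs₀
      simp only at h1 h2
      obtain ⟨⟨q1, hq1, hq1e⟩, hFc⟩ := hF s h1.1 h1.2.1
      obtain ⟨⟨q2, hq2, hq2e⟩, hGc⟩ := hG t h2.2.2.1 h2.2.2.2.1
      have hu1 : 1 ≤ F s := by
        have := (coords_pos hY ((filter_subset _ _) hq1)).1; omega
      have hv1 : 1 ≤ G t := by
        have := (coords_pos hY ((filter_subset _ _) hq2)).2; omega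
      have := (mem_iff_cnt hY hsteps hu1 hv1).mp hmem
      rw [hFc, hGc] at this
      exact mem_staircase.mpr ⟨h1.1, h1.2.1, h2.2.2.1, h2.2.2.2.1, by omega⟩
    obtain ⟨C₂, hc2, hl2⟩ := transfer_cover (staircase z) Y F G hfwd hback hC hL
    exact merge_staircase hz hc2 hl2
  · rintro ⟨C, hC, hL, _⟩
    set f : ℕ → ℕ := fun s => z + 1 - rowCnt Y s with hf
    set g : ℕ → ℕ := fun t => z + 1 - colCnt Y t with hg
    have hfwd : ∀ p ∈ Y, (f p.1, g p.2) ∈ staircase z := by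
      intro p hp
      have hcp := coords_pos hY hp
      have ha := rowCnt_bounds hY hsteps (show (p.1, p.2) ∈ Y from hp)
      have hb := colCnt_bounds hY hsteps (show (p.1, p.2) ∈ Y from hp)
      have hk := (mem_iff_cnt hY hsteps hcp.1 hcp.2).mp (show (p.1, p.2) ∈ Y from hp)
      exact mem_staircase.mpr ⟨by simp only [hf]; omega, by simp only [hf]; omega,
        by simp only [hg]; omega, by simp only [hg]; omega, by simp only [hf, hg]; omega⟩
    have hback : ∀ s t : ℕ, (∃ t₀, (s, t₀) ∈ Y) → (∃ s₀, (s₀, t) ∈ Y) →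
        (f s, g t) ∈ staircase z → (s, t) ∈ Y := by
      intro s t ⟨t₀, ht₀⟩ ⟨s₀, hs₀⟩ hmem
      have hs1 : 1 ≤ s := (coords_pos hY ht₀).1
      have ht1 : 1 ≤ t := (coords_pos hY hs₀).2
      have ha := rowCnt_bounds hY hsteps ht₀
      have hb := colCnt_bounds hY hsteps hs₀
      have := mem_staircase.mp hmem
      simp only [hf, hg] at this
      exact (mem_iff_cnt hY hsteps hs1 ht1).mpr (by omega)
    obtain ⟨C', hc', hl'⟩ := transfer_cover Y (staircase z) f g hfwd hback hC hL
    exact ⟨C', hc', hl'⟩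
end

section
/- There is a constant c > 0 such that for every n ≥ 2 there exists a bipartite graph H on n vertices whose local difference-graph covering number satisfies cn_ℓ(𝔇, H) ≥ c · n / log n. (The proof gives, for every sufficiently large even n, a bipartite graph H on n vertices with cn_ℓ(𝔇, H) ≥ n / (16 log₂ n).) -/
open SimpleGraph

/-- A graph is complete bipartite if its vertex set splits into two disjoint
parts `A, B` and its edges are exactly all pairs between `A` and `B`. -/
def IsCompleteBipartite {W : Type*} (G : SimpleGraph W) : Prop :=
  ∃ A B : Set W, Disjoint A B ∧ A ∪ B = Set.univ ∧
    ∀ u v : W, G.Adj u v ↔ ((u ∈ A ∧ v ∈ B) ∨ (u ∈ B ∧ v ∈ A))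

/-- A difference graph: a bipartite graph (with parts `A, B`) in which the
neighbourhoods of the vertices of `A` are linearly ordered by inclusion
(equivalently, the vertices of `A` can be ordered `a₁, …, a_r` with
`N(aᵢ) ⊆ N(a_{i-1})`). -/
def IsDifferenceGraph {W : Type*} (G : SimpleGraph W) : Prop :=
  ∃ A B : Set W, Disjoint A B ∧ A ∪ B = Set.univ ∧
    (∀ u v : W, G.Adj u v → ((u ∈ A ∧ v ∈ B) ∨ (u ∈ B ∧ v ∈ A))) ∧
    ∀ a ∈ A, ∀ a' ∈ A,
      G.neighborSet a ⊆ G.neighborSet a' ∨ G.neighborSet a' ⊆ G.neighborSet a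

open scoped Classical in
/-- The local covering number of `H` with respect to the class of subgraphs
satisfying `P`: the least `k` such that there is a set `C` of subgraphs of `H`,
each in the class, whose union is `H`, and such that every vertex of `H` lies
in at most `k` members of `C`. -/
noncomputable def localCoverNumber {V : Type*} (H : SimpleGraph V)
    (P : H.Subgraph → Prop) : ℕ :=
  sInf {k | ∃ C : Finset H.Subgraph, (∀ G ∈ C, P G) ∧ C.sup id = ⊤ ∧
    ∀ v : V, (C.filter fun G => v ∈ G.verts).card ≤ k}

/-- The local complete-bipartite covering number `cn_ℓ(𝔅ℭ, H)`. -/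
noncomputable def cbCN {V : Type*} (H : SimpleGraph V) : ℕ :=
  localCoverNumber H fun G => IsCompleteBipartite G.coe

/-- The local difference-graph covering number `cn_ℓ(𝔇, H)`. -/
noncomputable def diffCN {V : Type*} (H : SimpleGraph V) : ℕ :=
  localCoverNumber H fun G => IsDifferenceGraph G.coe

/-- A (not necessarily complete) bipartite graph. -/
def IsBipartite {W : Type*} (G : SimpleGraph W) : Prop :=
  ∃ A B : Set W, Disjoint A B ∧ A ∪ B = Set.univ ∧
    ∀ u v : W, G.Adj u v → ((u ∈ A ∧ v ∈ B) ∨ (u ∈ B ∧ v ∈ A))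


open scoped Classical

lemma diff_threshold {n : ℕ} {H : SimpleGraph (Fin n)} (G : H.Subgraph)
    (hG : IsDifferenceGraph G.coe) :
    ∃ φ ψ : Fin n → ℕ, (∀ u, φ u ≤ n) ∧ (∀ u, ψ u ≤ n) ∧
      ∀ u v, G.Adj u v ↔ u ∈ G.verts ∧ v ∈ G.verts ∧
        (n + 1 ≤ φ u + ψ v ∨ n + 1 ≤ φ v + ψ u) := by
  obtain ⟨A, B, hdisj, huniv, hadj, hchain⟩ := hG
  set s : G.verts → ℕ := fun a => (G.coe.neighborSet a).ncard with hs
  have hsle : ∀ a, s a ≤ n := by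
    intro a
    have h1 : (G.coe.neighborSet a).ncard ≤ Nat.card G.verts := by
      rw [← Set.ncard_univ]
      exact Set.ncard_le_ncard (Set.subset_univ _) Set.finite_univ
    have h2 : Nat.card G.verts = G.verts.ncard := Nat.card_coe_set_eq _
    have h3 : G.verts.ncard ≤ n := by
      have := Set.ncard_le_ncard (Set.subset_univ G.verts) Set.finite_univ
      simpa [Set.ncard_univ] using this
    show (G.coe.neighborSet a).ncard ≤ n
    omega
  have hspos : ∀ a b, G.coe.Adj a b → 1 ≤ s a := by
    intro a b h
    have : (G.coe.neighborSet a).Nonempty := ⟨b, h⟩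
    have := (Set.ncard_pos (Set.toFinite _)).mpr this
    show 1 ≤ (G.coe.neighborSet a).ncard
    omega
  set E : G.verts → Set ℕ := fun b => {t | ∃ a ∈ A, G.coe.Adj a b ∧ t = n + 1 - s a} with hE
  have hEle : ∀ b, ∀ t ∈ E b, t ≤ n := by
    rintro b t ⟨a, ha, hadj', rfl⟩
    have := hspos a b hadj'
    omega
  have hEbdd : ∀ b, BddAbove (E b) := fun b => ⟨n, fun t ht => hEle b t ht⟩
  have hSuple : ∀ b, sSup (E b) ≤ n := by
    intro b
    rcases Set.eq_empty_or_nonempty (E b) with h | h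
    · simp [h]
    · exact csSup_le h (hEle b)
  refine ⟨fun u => if h : u ∈ G.verts then (if (⟨u, h⟩ : G.verts) ∈ A then s ⟨u, h⟩ else 0) else 0,
    fun u => if h : u ∈ G.verts then (if (⟨u, h⟩ : G.verts) ∈ B then sSup (E ⟨u, h⟩) else 0) else 0,
    ?_, ?_, ?_⟩
  · intro u
    dsimp only
    split
    · split
      · exact hsle _
      · omega
    · omega
  · intro u
    dsimp only
    split
    · split
      · exact hSuple _
      · omega
    · omega
  · -- helper: threshold in one direction implies adjacency
    have key : ∀ u v (hu : u ∈ G.verts) (hv : v ∈ G.verts),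
        n + 1 ≤ (if h : u ∈ G.verts then (if (⟨u, h⟩ : G.verts) ∈ A then s ⟨u, h⟩ else 0) else 0)
          + (if h : v ∈ G.verts then (if (⟨v, h⟩ : G.verts) ∈ B then sSup (E ⟨v, h⟩) else 0) else 0) →
        G.Adj u v := by
      intro u v hu hv hthr
      rw [dif_pos hu, dif_pos hv] at hthr
      by_cases hA : (⟨u, hu⟩ : G.verts) ∈ A
      swap
      · rw [if_neg hA] at hthr
        have := hSuple (⟨v, hv⟩ : G.verts)
        split at hthr <;> omega
      rw [if_pos hA] at hthr
      by_cases hB : (⟨v, hv⟩ : G.verts) ∈ B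
      swap
      · rw [if_neg hB] at hthr
        have := hsle (⟨u, hu⟩ : G.verts)
        omega
      rw [if_pos hB] at hthr
      have hne : (E ⟨v, hv⟩).Nonempty := by
        rcases Set.eq_empty_or_nonempty (E ⟨v, hv⟩) with h | h
        · rw [h] at hthr
          have := hsle (⟨u, hu⟩ : G.verts)
          simp at hthr
          omega
        · exact h
      obtain ⟨a₀, ha₀, hadj₀, heq⟩ := Nat.sSup_mem hne (hEbdd _)
      have h1 : s a₀ ≤ s ⟨u, hu⟩ := by
        have := hsle a₀
        have := hspos a₀ _ hadj₀
        omega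
      have hv' : (⟨v, hv⟩ : G.verts) ∈ G.coe.neighborSet a₀ := hadj₀
      have : (⟨v, hv⟩ : G.verts) ∈ G.coe.neighborSet ⟨u, hu⟩ := by
        rcases hchain _ hA _ ha₀ with hsub | hsub
        · have heqset : G.coe.neighborSet ⟨u, hu⟩ = G.coe.neighborSet a₀ :=
            Set.eq_of_subset_of_ncard_le hsub h1 (Set.toFinite _)
          rw [heqset]; exact hv'
        · exact hsub hv'
      have : G.coe.Adj ⟨u, hu⟩ ⟨v, hv⟩ := this
      simpa using this
    intro u v
    constructor
    · intro huv
      have hu := G.edge_vert huv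
      have hv := G.edge_vert huv.symm
      refine ⟨hu, hv, ?_⟩
      have hcoe : G.coe.Adj ⟨u, hu⟩ ⟨v, hv⟩ := by simpa using huv
      rcases hadj _ _ hcoe with ⟨hA, hB⟩ | ⟨hB, hA⟩
      · left
        dsimp only
        rw [dif_pos hu, dif_pos hv, if_pos hA, if_pos hB]
        have hmem : n + 1 - s ⟨u, hu⟩ ∈ E ⟨v, hv⟩ := ⟨_, hA, hcoe, rfl⟩
        have hle := le_csSup (hEbdd _) hmem
        have := hsle (⟨u, hu⟩ : G.verts)
        omega
      · right
        dsimp only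
        rw [dif_pos hu, dif_pos hv, if_pos hA, if_pos hB]
        have hmem : n + 1 - s ⟨v, hv⟩ ∈ E ⟨u, hu⟩ := ⟨_, hA, hcoe.symm, rfl⟩
        have hle := le_csSup (hEbdd _) hmem
        have := hsle (⟨v, hv⟩ : G.verts)
        omega
    · rintro ⟨hu, hv, hthr | hthr⟩
      · exact key u v hu hv hthr
      · exact (key v u hv hu hthr).symm

noncomputable def phiOf {n : ℕ} {H : SimpleGraph (Fin n)} (G : H.Subgraph) : Fin n → ℕ :=
  if h : IsDifferenceGraph G.coe then (diff_threshold G h).choose else fun _ => 0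

noncomputable def psiOf {n : ℕ} {H : SimpleGraph (Fin n)} (G : H.Subgraph) : Fin n → ℕ :=
  if h : IsDifferenceGraph G.coe then (diff_threshold G h).choose_spec.choose else fun _ => 0

lemma phiOf_spec {n : ℕ} {H : SimpleGraph (Fin n)} (G : H.Subgraph)
    (h : IsDifferenceGraph G.coe) :
    (∀ u, phiOf G u ≤ n) ∧ (∀ u, psiOf G u ≤ n) ∧
      ∀ u v, G.Adj u v ↔ u ∈ G.verts ∧ v ∈ G.verts ∧
        (n + 1 ≤ phiOf G u + psiOf G v ∨ n + 1 ≤ phiOf G v + psiOf G u) := by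
  rw [phiOf, psiOf, dif_pos h, dif_pos h]
  exact (diff_threshold G h).choose_spec.choose_spec

/-- Encoding of a cover `C` as a bounded data structure. -/
noncomputable def encC {n : ℕ} (k : ℕ) {H : SimpleGraph (Fin n)} (C : Finset H.Subgraph) :
    Fin n → Fin k → Option (Fin (k * n) × Fin (n + 2) × Fin (n + 2)) :=
  fun v j =>
    ((C.filter fun G => v ∈ G.verts).toList[(j : ℕ)]?).bind fun G =>
      if h : C.toList.idxOf G < k * n ∧ phiOf G v < n + 2 ∧ psiOf G v < n + 2 then
        some (⟨C.toList.idxOf G, h.1⟩, ⟨phiOf G v, h.2.1⟩, ⟨psiOf G v, h.2.2⟩)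
      else none

def decodes {n k T : ℕ} (e : Fin n → Fin k → Option (Fin T × Fin (n + 2) × Fin (n + 2)))
    (u v : Fin n) : Prop :=
  ∃ (j j' : Fin k) (t t' : Fin T × Fin (n + 2) × Fin (n + 2)),
    e u j = some t ∧ e v j' = some t' ∧ t.1 = t'.1 ∧
      (n + 1 ≤ (t.2.1 : ℕ) + (t'.2.2 : ℕ) ∨ n + 1 ≤ (t'.2.1 : ℕ) + (t.2.2 : ℕ))

lemma card_le_of_local {n k : ℕ} {H : SimpleGraph (Fin n)} (C : Finset H.Subgraph)
    (hne : ∀ G ∈ C, G.verts.Nonempty)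
    (hloc : ∀ v : Fin n, (C.filter fun G => v ∈ G.verts).card ≤ k) :
    C.card ≤ k * n := by
  have hsub : C ⊆ Finset.univ.biUnion fun v : Fin n => C.filter fun G => v ∈ G.verts := by
    intro G hG
    obtain ⟨v, hv⟩ := hne G hG
    exact Finset.mem_biUnion.mpr ⟨v, Finset.mem_univ v, Finset.mem_filter.mpr ⟨hG, hv⟩⟩
  calc C.card ≤ _ := Finset.card_le_card hsub
    _ ≤ ∑ v : Fin n, (C.filter fun G => v ∈ G.verts).card := Finset.card_biUnion_le
    _ ≤ ∑ _v : Fin n, k := Finset.sum_le_sum fun v _ => hloc v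
    _ = n * k := by simp [Finset.sum_const, mul_comm]
    _ = k * n := mul_comm _ _

lemma decodes_iff {n k : ℕ} {H : SimpleGraph (Fin n)} (C : Finset H.Subgraph)
    (hdiff : ∀ G ∈ C, IsDifferenceGraph G.coe) (hsup : C.sup id = ⊤)
    (hloc : ∀ v : Fin n, (C.filter fun G => v ∈ G.verts).card ≤ k)
    (hne : ∀ G ∈ C, G.verts.Nonempty) (u v : Fin n) :
    decodes (encC k C) u v ↔ H.Adj u v := by
  have hcard : C.card ≤ k * n := card_le_of_local C hne hloc
  constructor
  · rintro ⟨j, j', t, t', h1, h2, hi, hthr⟩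
    rw [encC] at h1 h2
    obtain ⟨G, hG1, hG2⟩ := Option.bind_eq_some_iff.mp h1
    obtain ⟨G', hG'1, hG'2⟩ := Option.bind_eq_some_iff.mp h2
    have hGm : G ∈ C.filter fun G => u ∈ G.verts :=
      Finset.mem_toList.mp (List.mem_iff_getElem?.mpr ⟨_, hG1⟩)
    have hG'm : G' ∈ C.filter fun G => v ∈ G.verts :=
      Finset.mem_toList.mp (List.mem_iff_getElem?.mpr ⟨_, hG'1⟩)
    rw [Finset.mem_filter] at hGm hG'm
    split at hG2; swap
    · exact absurd hG2 (by simp)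
    split at hG'2; swap
    · exact absurd hG'2 (by simp)
    obtain rfl : t = _ := (Option.some.inj hG2).symm
    obtain rfl : t' = _ := (Option.some.inj hG'2).symm
    have hidx : C.toList.idxOf G = C.toList.idxOf G' := by
      simpa [Fin.ext_iff] using hi
    have hG'G : G' = G := by
      have hlt : C.toList.idxOf G < C.toList.length :=
        List.idxOf_lt_length_iff.mpr (Finset.mem_toList.mpr hGm.1)
      have hlt' : C.toList.idxOf G' < C.toList.length :=
        List.idxOf_lt_length_iff.mpr (Finset.mem_toList.mpr hG'm.1)
      have e1 : C.toList[C.toList.idxOf G]? = some G := by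
        rw [List.getElem?_eq_getElem hlt, List.getElem_idxOf hlt]
      have e2 : C.toList[C.toList.idxOf G']? = some G' := by
        rw [List.getElem?_eq_getElem hlt', List.getElem_idxOf hlt']
      rw [hidx] at e1
      exact Option.some.inj (e2.symm.trans e1)
    subst hG'G
    have hiff := (phiOf_spec G' (hdiff G' hGm.1)).2.2 u v
    exact G'.adj_sub (hiff.mpr ⟨hGm.2, hG'm.2, by simpa using hthr⟩)
  · intro hadj
    have hex : ∃ G ∈ C, G.Adj u v := by
      have h : (sSup (C : Set H.Subgraph)).Adj u v := by
        rw [← Finset.sup_id_eq_sSup, hsup]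
        exact Subgraph.top_adj.mpr hadj
      simpa [Subgraph.sSup_adj] using h
    obtain ⟨G, hGc, hGadj⟩ := hex
    have hu : u ∈ G.verts := G.edge_vert hGadj
    have hv : v ∈ G.verts := G.edge_vert hGadj.symm
    obtain ⟨hφle, hψle, hiff⟩ := phiOf_spec G (hdiff G hGc)
    have hibnd : C.toList.idxOf G < k * n := by
      have := List.idxOf_lt_length_iff.mpr (Finset.mem_toList.mpr hGc)
      rw [Finset.length_toList] at this
      omega
    have mkentry : ∀ w : Fin n, w ∈ G.verts → ∃ j : Fin k,
        encC k C w j = some (⟨C.toList.idxOf G, hibnd⟩,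
          ⟨phiOf G w, by have := hφle w; omega⟩, ⟨psiOf G w, by have := hψle w; omega⟩) := by
      intro w hw
      have hGm : G ∈ C.filter fun G => w ∈ G.verts := Finset.mem_filter.mpr ⟨hGc, hw⟩
      set l := (C.filter fun G => w ∈ G.verts).toList with hl
      have hmem : G ∈ l := Finset.mem_toList.mpr hGm
      have hjlt : l.idxOf G < l.length := List.idxOf_lt_length_iff.mpr hmem
      have hjk : l.idxOf G < k := by
        have : l.length = (C.filter fun G => w ∈ G.verts).card := Finset.length_toList _
        have := hloc w
        omega
      refine ⟨⟨l.idxOf G, hjk⟩, ?_⟩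
      rw [encC]
      have hget : l[(l.idxOf G : ℕ)]? = some G := by
        rw [List.getElem?_eq_getElem hjlt, List.getElem_idxOf hjlt]
      rw [← hl, hget]
      simp only [Option.bind_some]
      exact dif_pos ⟨hibnd, by have := hφle w; omega, by have := hψle w; omega⟩
    obtain ⟨j, hj⟩ := mkentry u hu
    obtain ⟨j', hj'⟩ := mkentry v hv
    refine ⟨j, j', _, _, hj, hj', rfl, ?_⟩
    have := (hiff u v).mp hGadj
    simpa using this.2.2

def Dset (n : ℕ) : Finset (Fin n × Fin n) :=
  (Finset.univ.filter fun u : Fin n => (u : ℕ) < n / 2) ×ˢ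
    (Finset.univ.filter fun v : Fin n => n / 2 ≤ (v : ℕ))

def HF {n : ℕ} (F : Finset (Fin n × Fin n)) : SimpleGraph (Fin n) where
  Adj u v := ((u, v) ∈ F ∧ (u : ℕ) < n / 2 ∧ n / 2 ≤ (v : ℕ)) ∨
    ((v, u) ∈ F ∧ (v : ℕ) < n / 2 ∧ n / 2 ≤ (u : ℕ))
  symm := by constructor; intro u v h; tauto
  loopless := by constructor; intro u h; rcases h with ⟨_, h1, h2⟩ | ⟨_, h1, h2⟩ <;> omega

lemma HF_bipartite {n : ℕ} (F : Finset (Fin n × Fin n)) : _root_.IsBipartite (HF F) := by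
  refine ⟨{u | (u : ℕ) < n / 2}, {u | n / 2 ≤ (u : ℕ)}, ?_, ?_, ?_⟩
  · rw [Set.disjoint_left]; intro a ha hb; simp only [Set.mem_setOf_eq] at ha hb; omega
  · ext a; simp only [Set.mem_union, Set.mem_setOf_eq, Set.mem_univ, iff_true]; omega
  · intro u v h
    rcases h with ⟨_, h1, h2⟩ | ⟨_, h1, h2⟩
    · left; exact ⟨h1, h2⟩
    · right; exact ⟨h2, h1⟩

lemma HF_inj {n : ℕ} {F₁ F₂ : Finset (Fin n × Fin n)}
    (h₁ : F₁ ∈ (Dset n).powerset) (h₂ : F₂ ∈ (Dset n).powerset)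
    (h : HF F₁ = HF F₂) : F₁ = F₂ := by
  rw [Finset.mem_powerset] at h₁ h₂
  have key : ∀ (Fa Fb : Finset (Fin n × Fin n)), Fa ⊆ Dset n → HF Fa = HF Fb →
      ∀ p ∈ Fa, p ∈ Fb := by
    intro Fa Fb hFa hab p hp
    have hD := hFa hp
    rw [Dset, Finset.mem_product, Finset.mem_filter, Finset.mem_filter] at hD
    obtain ⟨⟨-, hD1⟩, -, hD2⟩ := hD
    have hadj : (HF Fa).Adj p.1 p.2 := Or.inl ⟨hp, hD1, hD2⟩
    rw [hab] at hadj
    rcases hadj with ⟨hm, -, -⟩ | ⟨-, hc1, hc2⟩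
    · exact hm
    · omega
  exact Finset.Subset.antisymm (fun p hp => key F₁ F₂ h₁ h p hp)
    (fun p hp => key F₂ F₁ h₂ h.symm p hp)

lemma filter_lt_card {n m : ℕ} (hm : m ≤ n) :
    (Finset.univ.filter fun u : Fin n => (u : ℕ) < m).card = m := by
  rw [show (Finset.univ.filter fun u : Fin n => (u : ℕ) < m)
      = Finset.univ.map (Fin.castLEEmb hm) from ?_]
  · rw [Finset.card_map, Finset.card_univ, Fintype.card_fin]
  · ext a
    simp only [Finset.mem_filter, Finset.mem_univ, true_and, Finset.mem_map]
    constructor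
    · rintro ha
      first
        | exact ⟨⟨(a : ℕ), ha⟩, rfl⟩
        | exact ⟨⟨(a : ℕ), ha⟩, Finset.mem_univ _, rfl⟩
    · rintro ⟨b, -, rfl⟩
      simpa using b.isLt

lemma Dset_card (n : ℕ) : (Dset n).card = (n / 2) * (n - n / 2) := by
  rw [Dset, Finset.card_product]
  have h1 := filter_lt_card (Nat.div_le_self n 2)
  have h2 := Finset.card_filter_add_card_filter_not
    (s := (Finset.univ : Finset (Fin n))) (p := fun u : Fin n => (u : ℕ) < n / 2)
  have h3 : (Finset.univ.filter fun v : Fin n => ¬ (v : ℕ) < n / 2)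
      = Finset.univ.filter fun v : Fin n => n / 2 ≤ (v : ℕ) := by
    apply Finset.filter_congr; intro v _; simp [not_lt]
  rw [h1, h3] at h2
  have hu : (Finset.univ : Finset (Fin n)).card = n := by simp
  have hB : (Finset.univ.filter fun v : Fin n => n / 2 ≤ (v : ℕ)).card = n - n / 2 := by omega
  rw [h1, hB]

lemma refine_cover {n k : ℕ} {H : SimpleGraph (Fin n)} (C : Finset H.Subgraph)
    (hdiff : ∀ G ∈ C, IsDifferenceGraph G.coe) (hsup : C.sup id = ⊤)
    (hloc : ∀ v : Fin n, (C.filter fun G => v ∈ G.verts).card ≤ k) :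
    ∃ C' : Finset H.Subgraph, (∀ G ∈ C', IsDifferenceGraph G.coe) ∧ C'.sup id = ⊤ ∧
      (∀ v : Fin n, (C'.filter fun G => v ∈ G.verts).card ≤ k) ∧
      ∀ G ∈ C', G.verts.Nonempty := by
  refine ⟨C.filter fun G => G.verts.Nonempty, ?_, ?_, ?_, ?_⟩
  · exact fun G hG => hdiff G (Finset.mem_filter.mp hG).1
  · apply le_antisymm le_top
    calc (⊤ : H.Subgraph) = C.sup id := hsup.symm
      _ ≤ (C.filter fun G => G.verts.Nonempty).sup id := by
        apply Finset.sup_le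
        intro G hG
        by_cases h : G.verts.Nonempty
        · exact Finset.le_sup (f := id) (Finset.mem_filter.mpr ⟨hG, h⟩)
        · have hv : G.verts = ∅ := Set.not_nonempty_iff_eq_empty.mp h
          have hbot : G = ⊥ := by
            apply SimpleGraph.Subgraph.ext
            · simpa using hv
            · funext x y
              apply propext
              constructor
              · intro hadj
                have := G.edge_vert hadj
                rw [hv] at this
                exact this.elim
              · intro hadj
                exact hadj.elim
          rw [show id G = G from rfl, hbot]
          exact bot_le
  · intro v
    apply le_trans _ (hloc v)
    apply Finset.card_le_card
    exact Finset.filter_subset_filter _ (Finset.filter_subset _ C)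
  · exact fun G hG => (Finset.mem_filter.mp hG).2

lemma main_count (n k : ℕ)
    (hcov : ∀ F ∈ (Dset n).powerset, ∃ C : Finset (HF F).Subgraph,
      (∀ G ∈ C, IsDifferenceGraph G.coe) ∧ C.sup id = ⊤ ∧
      ∀ v : Fin n, (C.filter fun G => v ∈ G.verts).card ≤ k) :
    2 ^ ((n / 2) * (n - n / 2)) ≤ ((k * n * ((n + 2) * (n + 2)) + 1) ^ k) ^ n := by
  have hcov' : ∀ F (hF : F ∈ (Dset n).powerset), ∃ C : Finset (HF F).Subgraph,
      (∀ G ∈ C, IsDifferenceGraph G.coe) ∧ C.sup id = ⊤ ∧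
      (∀ v : Fin n, (C.filter fun G => v ∈ G.verts).card ≤ k) ∧
      ∀ G ∈ C, G.verts.Nonempty := by
    intro F hF
    obtain ⟨C, h1, h2, h3⟩ := hcov F hF
    exact refine_cover C h1 h2 h3
  choose Cf h1 h2 h3 h4 using hcov'
  set Φ : {F // F ∈ (Dset n).powerset} →
      (Fin n → Fin k → Option (Fin (k * n) × Fin (n + 2) × Fin (n + 2))) :=
    fun F => encC k (Cf F.1 F.2) with hΦdef
  have hkey : ∀ (F : {F // F ∈ (Dset n).powerset}) (u v : Fin n),
      decodes (Φ F) u v ↔ (HF F.1).Adj u v := fun F u v =>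
    decodes_iff (Cf F.1 F.2) (h1 F.1 F.2) (h2 F.1 F.2) (h3 F.1 F.2) (h4 F.1 F.2) u v
  have hΦ : Function.Injective Φ := by
    intro F₁ F₂ h
    apply Subtype.ext
    apply HF_inj F₁.2 F₂.2
    apply SimpleGraph.ext
    funext u v
    apply propext
    rw [← hkey F₁ u v, ← hkey F₂ u v, h]
  have hcard := Fintype.card_le_of_injective Φ hΦ
  rw [Fintype.card_coe, Finset.card_powerset, Dset_card] at hcard
  calc 2 ^ ((n / 2) * (n - n / 2)) ≤ _ := hcard
    _ = ((k * n * ((n + 2) * (n + 2)) + 1) ^ k) ^ n := by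
      rw [Fintype.card_fun, Fintype.card_fun]
      simp [Fintype.card_option, Fintype.card_prod, mul_assoc]

lemma cover_exists {n : ℕ} (H : SimpleGraph (Fin n)) :
    ∃ C : Finset H.Subgraph, (∀ G ∈ C, IsDifferenceGraph G.coe) ∧ C.sup id = ⊤ := by
  classical
  set C1 : Finset H.Subgraph := Finset.univ.image (fun v => H.singletonSubgraph v) with hC1
  set C2 : Finset H.Subgraph :=
    Finset.univ.image (fun e : {p : Fin n × Fin n // H.Adj p.1 p.2} => H.subgraphOfAdj e.2) with hC2
  refine ⟨C1 ∪ C2, ?_, ?_⟩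
  · intro G hG
    rcases Finset.mem_union.mp hG with hG | hG
    · obtain ⟨v, -, rfl⟩ := Finset.mem_image.mp hG
      refine ⟨Set.univ, ∅, by simp, by simp, ?_, ?_⟩
      · intro a b hab
        have : (H.singletonSubgraph v).Adj ↑a ↑b := hab
        rw [SimpleGraph.singletonSubgraph_adj] at this
        exact this.elim
      · intro a _ a' _
        left
        intro x hx
        have : (H.singletonSubgraph v).Adj ↑a ↑x := hx
        rw [SimpleGraph.singletonSubgraph_adj] at this
        exact this.elim
    · obtain ⟨p, -, rfl⟩ := Finset.mem_image.mp hG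
      have hp : H.Adj p.1.1 p.1.2 := p.2
      have hne : p.1.1 ≠ p.1.2 := hp.ne
      refine ⟨{x | (x : Fin n) = p.1.1}, {x | (x : Fin n) = p.1.2}, ?_, ?_, ?_, ?_⟩
      · rw [Set.disjoint_left]
        intro a ha hb
        simp only [Set.mem_setOf_eq] at ha hb
        rw [← ha] at hne; exact hne hb
      · ext x
        simp only [Set.mem_union, Set.mem_setOf_eq, Set.mem_univ, iff_true]
        have := x.2
        simp only [SimpleGraph.subgraphOfAdj_verts, Set.mem_insert_iff,
          Set.mem_singleton_iff] at this
        rcases this with h | h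
        · left; exact h
        · right; exact h
      · intro a b hab
        have : (H.subgraphOfAdj hp).Adj ↑a ↑b := hab
        rw [SimpleGraph.subgraphOfAdj_adj] at this
        rw [Sym2.eq_iff] at this
        rcases this with ⟨h1, h2⟩ | ⟨h1, h2⟩
        · left; exact ⟨h1.symm, h2.symm⟩
        · right; exact ⟨h2.symm, h1.symm⟩
      · intro a ha a' ha'
        simp only [Set.mem_setOf_eq] at ha ha'
        have : a = a' := Subtype.ext (ha.trans ha'.symm)
        subst this
        left
        exact subset_rfl
  · apply le_antisymm le_top
    rw [Finset.sup_id_eq_sSup]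
    constructor
    · intro v _
      rw [SimpleGraph.Subgraph.verts_sSup]
      refine Set.mem_iUnion.mpr ⟨H.singletonSubgraph v, Set.mem_iUnion.mpr ⟨?_, ?_⟩⟩
      · exact Finset.mem_coe.mpr (Finset.mem_union_left _
          (Finset.mem_image.mpr ⟨v, Finset.mem_univ v, rfl⟩))
      · simp [SimpleGraph.singletonSubgraph]
    · intro v w hvw
      have hvw' : H.Adj v w := hvw
      rw [SimpleGraph.Subgraph.sSup_adj]
      refine ⟨H.subgraphOfAdj hvw', ?_, ?_⟩
      · exact Finset.mem_coe.mpr (Finset.mem_union_right _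
          (Finset.mem_image.mpr ⟨⟨(v, w), hvw'⟩, Finset.mem_univ _, rfl⟩))
      · rw [SimpleGraph.subgraphOfAdj_adj]

lemma diffCN_cover {n : ℕ} (H : SimpleGraph (Fin n)) :
    ∃ C : Finset H.Subgraph, (∀ G ∈ C, IsDifferenceGraph G.coe) ∧ C.sup id = ⊤ ∧
      ∀ v : Fin n, (C.filter fun G => v ∈ G.verts).card ≤ diffCN H := by
  have hset : {k | ∃ C : Finset H.Subgraph, (∀ G ∈ C, IsDifferenceGraph G.coe) ∧
      C.sup id = ⊤ ∧ ∀ v : Fin n, (C.filter fun G => v ∈ G.verts).card ≤ k}.Nonempty := by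
    obtain ⟨C, h1, h2⟩ := cover_exists H
    exact ⟨C.card, C, h1, h2, fun v => Finset.card_filter_le _ _⟩
  exact Nat.sInf_mem hset

lemma one_le_diffCN {n : ℕ} (hn : 0 < n) (H : SimpleGraph (Fin n)) : 1 ≤ diffCN H := by
  obtain ⟨C, h1, h2, h3⟩ := diffCN_cover H
  by_contra h
  push_neg at h
  have h0 : diffCN H = 0 := by omega
  set v : Fin n := ⟨0, hn⟩ with hv
  have hmem : v ∈ (C.sup id).verts := by
    rw [h2]
    simp [SimpleGraph.Subgraph.verts_top]
  rw [Finset.sup_id_eq_sSup, SimpleGraph.Subgraph.verts_sSup] at hmem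
  simp only [Set.mem_iUnion] at hmem
  obtain ⟨G, hG, hGv⟩ := hmem
  have hfil : G ∈ C.filter fun G => v ∈ G.verts := Finset.mem_filter.mpr ⟨hG, hGv⟩
  have := h3 v
  rw [h0, Nat.le_zero, Finset.card_eq_zero] at this
  rw [this] at hfil
  exact absurd hfil (Finset.notMem_empty _)


/-- **Theorem.** There is a constant `c > 0` such that for every `n ≥ 2` there
exists a bipartite graph `H` on `n` vertices with
`cn_ℓ(𝔇, H) ≥ c · n / log n`. -/
theorem exists_bipartite_large_local_difference_cover_number :
    ∃ c : ℝ, 0 < c ∧ ∀ n : ℕ, 2 ≤ n → ∃ H : SimpleGraph (Fin n),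
      _root_.IsBipartite H ∧ c * n / Real.log n ≤ (diffCN H : ℝ) := by
  have hlog2 : (0:ℝ) < Real.log 2 := Real.log_pos (by norm_num)
  refine ⟨Real.log 2 / 100, by positivity, ?_⟩
  intro n hn
  have hn2R : (2:ℝ) ≤ (n:ℝ) := by exact_mod_cast hn
  have hlogn : 0 < Real.log n := Real.log_pos (by linarith)
  have hloglog : Real.log 2 ≤ Real.log n := Real.log_le_log (by norm_num) (by linarith)
  set c : ℝ := Real.log 2 / 100 with hc
  set x : ℝ := c * n / Real.log n with hx
  have hx0 : 0 ≤ x := by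
    rw [hx, hc]; positivity
  have hxn : x ≤ (n:ℝ) := by
    rw [hx]
    rw [div_le_iff₀ hlogn]
    calc c * n = Real.log 2 / 100 * n := by rw [hc]
      _ ≤ Real.log n / 1 * n := by
        apply mul_le_mul_of_nonneg_right _ (by linarith)
        apply div_le_div₀ hlogn.le hloglog (by norm_num) (by norm_num)
      _ = n * Real.log n := by ring
  by_cases hx1 : x ≤ 1
  · refine ⟨HF ∅, HF_bipartite ∅, ?_⟩
    have h1 : (1:ℝ) ≤ (diffCN (HF (∅ : Finset (Fin n × Fin n))) : ℝ) := by
      exact_mod_cast one_le_diffCN (by omega) _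
    calc c * ↑n / Real.log ↑n = x := by rw [hx]
      _ ≤ 1 := hx1
      _ ≤ _ := h1
  · push_neg at hx1
    by_contra hcon
    push_neg at hcon
    set k := ⌊x⌋₊ with hk
    have hk1 : 1 ≤ k := Nat.le_floor (by exact_mod_cast hx1.le)
    have hkx : (k:ℝ) ≤ x := Nat.floor_le hx0
    have hkn : k ≤ n := by
      have : (k:ℝ) ≤ (n:ℝ) := hkx.trans hxn
      exact_mod_cast this
    have hcov : ∀ F ∈ (Dset n).powerset, ∃ C : Finset (HF F).Subgraph,
        (∀ G ∈ C, IsDifferenceGraph G.coe) ∧ C.sup id = ⊤ ∧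
        ∀ v : Fin n, (C.filter fun G => v ∈ G.verts).card ≤ k := by
      intro F _
      obtain ⟨C, h1, h2, h3⟩ := diffCN_cover (HF F)
      have hdx : ((diffCN (HF F) : ℕ) : ℝ) < x := by
        rw [hx]
        exact hcon (HF F) (HF_bipartite F)
      have hdk : diffCN (HF F) ≤ k := Nat.le_floor hdx.le
      exact ⟨C, h1, h2, fun v => (h3 v).trans hdk⟩
    have hcount := main_count n k hcov
    have h22 : n + 2 ≤ n ^ 2 := by nlinarith
    have hbase : k * n * ((n + 2) * (n + 2)) + 1 ≤ n ^ 7 := by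
      have h6 : 1 ≤ n ^ 6 := Nat.one_le_pow _ _ (by omega)
      calc k * n * ((n + 2) * (n + 2)) + 1 ≤ n * n * (n ^ 2 * n ^ 2) + 1 := by gcongr
        _ = n ^ 6 + 1 := by ring
        _ ≤ n ^ 6 + n ^ 6 := by omega
        _ = 2 * n ^ 6 := by ring
        _ ≤ n * n ^ 6 := by gcongr
        _ = n ^ 7 := by ring
    have hineq : 2 ^ ((n / 2) * (n - n / 2)) ≤ n ^ (7 * k * n) := by
      calc 2 ^ ((n / 2) * (n - n / 2)) ≤ ((k * n * ((n + 2) * (n + 2)) + 1) ^ k) ^ n := hcount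
        _ ≤ ((n ^ 7) ^ k) ^ n := by gcongr
        _ = n ^ (7 * k * n) := by rw [← pow_mul, ← pow_mul]; ring_nf
    have hR : ((2:ℝ)) ^ ((n / 2) * (n - n / 2)) ≤ (n:ℝ) ^ (7 * k * n) := by
      exact_mod_cast hineq
    have hlogineq := Real.log_le_log (by positivity) hR
    rw [Real.log_pow, Real.log_pow] at hlogineq
    push_cast at hlogineq
    have e1 : n ≤ 2 * (n / 2) + 1 := by omega
    have e2 : n ≤ 2 * (n - n / 2) := by omega
    have e1R : (n:ℝ) ≤ 2 * ((n / 2 : ℕ):ℝ) + 1 := by exact_mod_cast e1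
    have e2R : (n:ℝ) ≤ 2 * (((n - n / 2) : ℕ):ℝ) := by exact_mod_cast e2
    have hq0 : (0:ℝ) ≤ ((n / 2 : ℕ):ℝ) := by positivity
    have hr0 : (0:ℝ) ≤ (((n - n / 2) : ℕ):ℝ) := by positivity
    have ha : (n:ℝ) * (n:ℝ) ≤ 8 * (((n / 2 : ℕ):ℝ) * (((n - n / 2) : ℕ):ℝ)) := by
      nlinarith [e1R, e2R, hq0, hr0, hn2R]
    have hklog : (k:ℝ) * Real.log n ≤ c * n := by
      rw [← le_div_iff₀ hlogn]
      exact hkx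
    have hnn : (0:ℝ) < (n:ℝ) * (n:ℝ) := by positivity
    have h5 := mul_le_mul_of_nonneg_right ha hlog2.le
    have h7 := mul_le_mul_of_nonneg_left hklog (show (0:ℝ) ≤ 56 * (n:ℝ) by positivity)
    rw [hc] at h7
    nlinarith [hlogineq, h5, h7, hnn, hlog2, hlogn]
end

section
/- For all n ≥ 2, the local covering number of the complete graph K_n with respect to the class of complete bipartite graphs equals ⌈log₂ n⌉, i.e., cn_ℓ(𝔅ℭ, K_n) = ⌈log₂ n⌉. -/
open SimpleGraph

section AuxHansel
open Finset


lemma sup_adj_exists {V : Type*} {H : SimpleGraph V} (C : Finset H.Subgraph) {u v : V}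
    (h : (C.sup id).Adj u v) : ∃ G ∈ C, G.Adj u v := by
  classical
  induction C using Finset.cons_induction with
  | empty => simp at h
  | cons a s ha ih =>
    rw [Finset.sup_cons] at h
    rcases Subgraph.sup_adj.mp h with h | h
    · exact ⟨a, Finset.mem_cons_self a s, h⟩
    · obtain ⟨G, hG, hGadj⟩ := ih h
      exact ⟨G, Finset.mem_cons_of_mem hG, hGadj⟩

lemma card_ext_le {α : Type*} [Fintype α] [DecidableEq α] (S : Finset α) (f : α → Bool) :
    2 ^ (Fintype.card α - S.card) ≤
      (Finset.univ.filter fun c : α → Bool => ∀ a ∈ S, c a = f a).card := by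
  classical
  have key : (Finset.univ : Finset ((↥(Finset.univ \ S) : Type _) → Bool)).card ≤
      (Finset.univ.filter fun c : α → Bool => ∀ a ∈ S, c a = f a).card := by
    apply Finset.card_le_card_of_injOn
      (fun g a => if h : a ∈ S then f a else g ⟨a, by simp [h]⟩)
    · intro g _
      simp only [Finset.mem_coe, Finset.mem_filter, Finset.mem_univ, true_and]
      intro a ha
      simp [ha]
    · intro g _ g' _ hgg'
      funext ⟨a, ha⟩
      have := congrFun hgg' a
      rw [Finset.mem_sdiff] at ha
      simpa [dif_neg ha.2] using this
  calc 2 ^ (Fintype.card α - S.card) =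
      (Finset.univ : Finset ((↥(Finset.univ \ S) : Type _) → Bool)).card := by
        rw [Finset.card_univ, Fintype.card_fun]
        simp [Finset.card_sdiff_of_subset (Finset.subset_univ S)]
    _ ≤ _ := key

open scoped Classical in
lemma lower_aux (n k : ℕ) (hn : 2 ≤ n)
    (C : Finset (⊤ : SimpleGraph (Fin n)).Subgraph)
    (hP : ∀ G ∈ C, IsCompleteBipartite G.coe)
    (hsup : C.sup id = ⊤)
    (hloc : ∀ v : Fin n, (C.filter fun G => v ∈ G.verts).card ≤ k) :
    n ≤ 2 ^ k := by
  classical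
  set ι := {G // G ∈ C} with hι
  have hA : ∀ G : ι, ∃ A B : Set ↥(G.1.verts), Disjoint A B ∧ A ∪ B = Set.univ ∧
      ∀ u v, G.1.coe.Adj u v ↔ ((u ∈ A ∧ v ∈ B) ∨ (u ∈ B ∧ v ∈ A)) := fun G => hP G.1 G.2
  choose A B hdisj huniv hadj using hA
  set t := C.card with ht
  have htι : Fintype.card ι = t := Fintype.card_coe C
  -- survival
  set surv : (ι → Bool) → Fin n → Prop := fun c v =>
    ∀ (G : ι) (h : v ∈ G.1.verts), (c G = true ↔ (⟨v, h⟩ : ↥(G.1.verts)) ∈ A G) with hsurv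
  -- at most one survivor per assignment
  have ha : ∀ c : ι → Bool, (Finset.univ.filter fun v => surv c v).card ≤ 1 := by
    intro c
    rw [Finset.card_le_one]
    intro u hu v hv
    by_contra hne
    rw [Finset.mem_filter] at hu hv
    have hadjuv : (C.sup id).Adj u v := by
      rw [hsup]; exact hne
    obtain ⟨G, hG, hGuv⟩ := sup_adj_exists C hadjuv
    have hu' : u ∈ G.verts := hGuv.fst_mem
    have hv' : v ∈ G.verts := hGuv.snd_mem
    set Gι : ι := ⟨G, hG⟩ with hGι
    have hcoe : Gι.1.coe.Adj ⟨u, hu'⟩ ⟨v, hv'⟩ := hGuv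
    rw [hadj Gι] at hcoe
    have hu2 := hu.2 Gι hu'
    have hv2 := hv.2 Gι hv'
    rcases hcoe with ⟨huA, hvB⟩ | ⟨huB, hvA⟩
    · have h1 : c Gι = true := hu2.mpr huA
      have h2 : (⟨v, hv'⟩ : ↥(Gι.1.verts)) ∈ A Gι := hv2.mp h1
      exact Set.disjoint_left.mp (hdisj Gι) h2 hvB
    · have h1 : c Gι = true := hv2.mpr hvA
      have h2 : (⟨u, hu'⟩ : ↥(Gι.1.verts)) ∈ A Gι := hu2.mp h1
      exact Set.disjoint_left.mp (hdisj Gι) h2 huB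
  -- many assignments per vertex
  have hb : ∀ v : Fin n, 2 ^ (t - k) ≤ (Finset.univ.filter fun c : ι → Bool => surv c v).card := by
    intro v
    set Sv : Finset ι := Finset.univ.filter (fun G : ι => v ∈ G.1.verts) with hSv
    have hSvk : Sv.card ≤ k := by
      refine le_trans ?_ (hloc v)
      apply Finset.card_le_card_of_injOn (fun G => G.1)
      · intro G hG
        rw [Finset.mem_coe, Finset.mem_filter]
        rw [Finset.mem_coe, hSv, Finset.mem_filter] at hG
        exact ⟨G.2, hG.2⟩
      · intro a _ b _ hab
        exact Subtype.ext hab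
    set forced : ι → Bool := fun G =>
      if h : ∃ hh : v ∈ G.1.verts, (⟨v, hh⟩ : ↥(G.1.verts)) ∈ A G then true else false
      with hforced
    have hsubset : (Finset.univ.filter fun c : ι → Bool => ∀ a ∈ Sv, c a = forced a) ⊆
        (Finset.univ.filter fun c : ι → Bool => surv c v) := by
      intro c hc
      rw [Finset.mem_filter] at hc ⊢
      refine ⟨Finset.mem_univ _, ?_⟩
      intro G h
      have hGSv : G ∈ Sv := by rw [hSv, Finset.mem_filter]; exact ⟨Finset.mem_univ _, h⟩
      have hcf := hc.2 G hGSv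
      have hiff : (∃ hh : v ∈ G.1.verts, (⟨v, hh⟩ : ↥(G.1.verts)) ∈ A G) ↔
          (⟨v, h⟩ : ↥(G.1.verts)) ∈ A G := ⟨fun ⟨hh, hm⟩ => hm, fun hm => ⟨h, hm⟩⟩
      rw [hcf, hforced]
      simp only []
      split_ifs with h'
      · simp [hiff.mp h']
      · simp only [Bool.false_eq_true, false_iff]
        exact fun hm => h' (hiff.mpr hm)
    calc 2 ^ (t - k) ≤ 2 ^ (t - Sv.card) :=
          Nat.pow_le_pow_right (by norm_num) (Nat.sub_le_sub_left hSvk t)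
      _ ≤ _ := by
          have := card_ext_le Sv forced
          rw [htι] at this
          exact le_trans this (Finset.card_le_card hsubset)
  -- double counting
  have hdc : ∑ v : Fin n, (Finset.univ.filter fun c : ι → Bool => surv c v).card ≤ 2 ^ t := by
    have heq : ∑ v : Fin n, (Finset.univ.filter fun c : ι → Bool => surv c v).card
        = ∑ c : ι → Bool, (Finset.univ.filter fun v => surv c v).card := by
      simp only [Finset.card_filter]
      rw [Finset.sum_comm]
    rw [heq]
    calc ∑ c : ι → Bool, (Finset.univ.filter fun v => surv c v).card
        ≤ ∑ _c : ι → Bool, 1 := Finset.sum_le_sum fun c _ => ha c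
      _ = 2 ^ t := by simp [Fintype.card_fun, htι]
  have hmain : n * 2 ^ (t - k) ≤ 2 ^ t := by
    calc n * 2 ^ (t - k) = ∑ _v : Fin n, 2 ^ (t - k) := by simp [Finset.card_univ, mul_comm]
      _ ≤ ∑ v : Fin n, (Finset.univ.filter fun c : ι → Bool => surv c v).card :=
          Finset.sum_le_sum fun v _ => hb v
      _ ≤ 2 ^ t := hdc
  have h2t : n * 2 ^ t ≤ 2 ^ k * 2 ^ t := by
    calc n * 2 ^ t ≤ n * (2 ^ (t - k) * 2 ^ k) := by
          rw [← pow_add]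
          exact Nat.mul_le_mul_left n (Nat.pow_le_pow_right (by norm_num)
            (by omega))
      _ = n * 2 ^ (t - k) * 2 ^ k := by ring
      _ ≤ 2 ^ t * 2 ^ k := Nat.mul_le_mul_right _ hmain
      _ = 2 ^ k * 2 ^ t := mul_comm _ _
  exact Nat.le_of_mul_le_mul_right h2t (Nat.pow_pos (by norm_num : 0 < 2))


def biclique (n i : ℕ) : (⊤ : SimpleGraph (Fin n)).Subgraph where
  verts := Set.univ
  Adj u v := Nat.testBit u.val i ≠ Nat.testBit v.val i
  adj_sub := fun {u v} h => by
    simp only [top_adj]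
    rintro rfl
    exact h rfl
  edge_vert := fun _ => Set.mem_univ _
  symm := ⟨fun u v h => Ne.symm h⟩

lemma biclique_cb (n i : ℕ) : IsCompleteBipartite (biclique n i).coe := by
  refine ⟨{x | Nat.testBit (x : Fin n).val i = false},
    {x | Nat.testBit (x : Fin n).val i = true}, ?_, ?_, ?_⟩
  · rw [Set.disjoint_left]
    intro x hx hx'
    simp only [Set.mem_setOf_eq] at hx hx'
    rw [hx] at hx'
    exact Bool.false_ne_true hx'
  · ext x
    simp only [Set.mem_union, Set.mem_setOf_eq, Set.mem_univ, iff_true]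
    cases Nat.testBit (x : Fin n).val i
    · exact Or.inl rfl
    · exact Or.inr rfl
  · intro u v
    show (Nat.testBit (u : Fin n).val i ≠ Nat.testBit (v : Fin n).val i) ↔ _
    simp only [Set.mem_setOf_eq]
    cases hu : Nat.testBit (u : Fin n).val i <;> cases hv : Nat.testBit (v : Fin n).val i <;>
      simp

open scoped Classical in
lemma upper_aux (n : ℕ) (hn : 2 ≤ n) :
    ∃ C : Finset (⊤ : SimpleGraph (Fin n)).Subgraph,
      (∀ G ∈ C, IsCompleteBipartite G.coe) ∧ C.sup id = ⊤ ∧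
      ∀ v : Fin n, (C.filter fun G => v ∈ G.verts).card ≤ Nat.clog 2 n := by
  classical
  set k := Nat.clog 2 n with hk
  have hk1 : 1 ≤ k := Nat.clog_pos (by norm_num) hn
  have hnk : n ≤ 2 ^ k := Nat.le_pow_clog (by norm_num) n
  refine ⟨(Finset.range k).image (biclique n), ?_, ?_, ?_⟩
  · intro G hG
    obtain ⟨i, _, rfl⟩ := Finset.mem_image.mp hG
    exact biclique_cb n i
  · apply le_antisymm le_top
    have hmem0 : biclique n 0 ∈ (Finset.range k).image (biclique n) :=
      Finset.mem_image_of_mem _ (Finset.mem_range.mpr hk1)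
    refine ⟨?_, ?_⟩
    · intro x _
      exact (Finset.le_sup (f := id) hmem0).1 (Set.mem_univ x)
    · intro u v huv
      rw [Subgraph.top_adj, top_adj] at huv
      have : ∃ i < k, Nat.testBit u.val i ≠ Nat.testBit v.val i := by
        by_contra hcon
        push_neg at hcon
        apply huv
        apply Fin.ext
        apply Nat.eq_of_testBit_eq
        intro i
        by_cases hi : i < k
        · exact hcon i hi
        · push_neg at hi
          have h2 : 2 ^ k ≤ 2 ^ i := Nat.pow_le_pow_right (by norm_num) hi
          rw [Nat.testBit_lt_two_pow (lt_of_lt_of_le (lt_of_lt_of_le u.isLt hnk) h2),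
            Nat.testBit_lt_two_pow (lt_of_lt_of_le (lt_of_lt_of_le v.isLt hnk) h2)]
      obtain ⟨i, hik, hbit⟩ := this
      have hmem : biclique n i ∈ (Finset.range k).image (biclique n) :=
        Finset.mem_image_of_mem _ (Finset.mem_range.mpr hik)
      exact (Finset.le_sup (f := id) hmem).2 hbit
  · intro v
    calc (((Finset.range k).image (biclique n)).filter fun G => v ∈ G.verts).card
        ≤ ((Finset.range k).image (biclique n)).card := Finset.card_filter_le _ _
      _ ≤ (Finset.range k).card := Finset.card_image_le
      _ = k := Finset.card_range k

end AuxHansel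

/-- **Proposition (Hansel).** For all `n ≥ 2`, the local covering number of the
complete graph `K_n` with respect to complete bipartite graphs equals
`⌈log₂ n⌉` (which is `Nat.clog 2 n`). -/
theorem cbCN_completeGraph (n : ℕ) (hn : 2 ≤ n) :
    cbCN (⊤ : SimpleGraph (Fin n)) = Nat.clog 2 n := by
  classical
  have hmem : Nat.clog 2 n ∈ {k | ∃ C : Finset (⊤ : SimpleGraph (Fin n)).Subgraph,
      (∀ G ∈ C, IsCompleteBipartite G.coe) ∧ C.sup id = ⊤ ∧
      ∀ v : Fin n, (C.filter fun G => v ∈ G.verts).card ≤ k} := upper_aux n hn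
  rw [cbCN, localCoverNumber]
  apply le_antisymm
  · exact Nat.sInf_le hmem
  · obtain ⟨C, hP, hsup, hloc⟩ := Nat.sInf_mem (⟨_, hmem⟩ : Set.Nonempty _)
    exact (Nat.clog_le_iff_le_pow (by norm_num : 1 < 2)).mpr (lower_aux n _ hn C hP hsup hloc)
end
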